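/- arXiv:2509.24373 — 12 statements merged into one kernel-verified Lean document; each statement's English description precedes it below -/
import Mathlib

section
/- Under the OCSC recursion over an error-free channel, for every horizon T ≥ 1, every sequence of source symbols {X_t}, every sequence of predictive distributions {p̂_t}, and every target outage level D ∈ [0,1], the reconstructed sequence satisfies (1/T) ∑_{t=1}^T 𝟙{X̂_t ≠ X_t} ≤ D + (η(1−D) + λ_0)/(η T). (Theorem 1) -/
/-!
Write `o t ∈ {0, 1}` for the outage indicator. The update makes `o t - D = (λ t - λ (t + 1)) / η`,
so the outages up to `T` telescope to `T D + (λ 1 - λ (T + 1)) / η`. An outage forces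
`p̂ t (X t) < max 0 (λ t)`, hence `λ t > 0`, so the multiplier drops by at most `η (1 - D)`
from a positive value and never falls below `-η (1 - D)`. Reconstruction errors happen only
at outages.
-/

open Finset

open scoped Classical

section Multiplier

variable {η D : ℝ} {lam : ℕ → ℝ}

theorem sum_Icc_eq_of_update {o : ℕ → ℝ} (hη : η ≠ 0)
    (hupd : ∀ t, 1 ≤ t → lam (t + 1) = lam t - η * (o t - D)) (T : ℕ) :
    ∑ t ∈ Icc 1 T, o t = T * D + (lam 1 - lam (T + 1)) / η := by
  induction T with
  | zero => simp
  | succ T ih =>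
    rw [sum_Icc_succ_top (by omega), ih, hupd (T + 1) (by omega)]
    push_cast
    field_simp
    ring

theorem neg_mul_one_sub_le_of_update {q : ℕ → Prop} [DecidablePred q] (hη : 0 ≤ η) (hD : 0 ≤ D)
    (hupd : ∀ t, 1 ≤ t → lam (t + 1) = lam t - η * ((if q t then 1 else 0) - D))
    (hpos : ∀ t, q t → 0 < lam t) (hinit : -(η * (1 - D)) ≤ lam 1) :
    ∀ t, 1 ≤ t → -(η * (1 - D)) ≤ lam t := by
  intro t ht
  induction t, ht using Nat.le_induction with
  | base => exact hinit
  | succ n hn ih =>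
    rw [hupd n hn]
    by_cases hq : q n
    · rw [if_pos hq]
      linarith [hpos n hq]
    · rw [if_neg hq]
      linarith [mul_nonneg hη hD]

end Multiplier

theorem pos_of_lt_max_zero {a b : ℝ} (ha : 0 ≤ a) (h : a < max 0 b) : 0 < b :=
  ha.trans_lt ((lt_max_iff.mp h).resolve_left ha.not_gt)

theorem ite_one_zero_le_of_imp {P Q : Prop} [Decidable P] [Decidable Q] (h : P → Q) :
    (if P then (1 : ℝ) else 0) ≤ if Q then 1 else 0 := by
  by_cases hP : P
  · simp [hP, h hP]
  · simp only [hP, if_false]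
    split_ifs <;> norm_num

theorem ocsc_distortion_guarantee_noiseless_general
    {𝒳 : Type*}
    (X Xhat : ℕ → 𝒳) (p : ℕ → 𝒳 → ℝ)
    (hp0 : ∀ t x, 0 ≤ p t x)
    (D : ℝ) (hD : 0 ≤ D ∧ D ≤ 1)
    (η : ℝ) (hη : 0 < η)
    (lam₀ : ℝ) (hlam₀ : 0 < lam₀)
    (lam s : ℕ → ℝ) (hinit : lam 1 = lam₀)
    (hs : ∀ t, s t = max 0 (lam t))
    (hupd : ∀ t, 1 ≤ t →
      lam (t + 1) = lam t - η * ((if p t (X t) < s t then (1 : ℝ) else 0) - D))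
    (hrec : ∀ t, 1 ≤ t → s t ≤ p t (X t) → Xhat t = X t)
    (T : ℕ) (hT : 1 ≤ T) :
    (1 / (T : ℝ)) * ∑ t ∈ Finset.Icc 1 T, (if Xhat t ≠ X t then (1 : ℝ) else 0)
      ≤ D + (η * (1 - D) + lam₀) / (η * T) := by
  have hpos : ∀ t, p t (X t) < s t → 0 < lam t := fun t h =>
    pos_of_lt_max_zero (hp0 t (X t)) (hs t ▸ h)
  have hlow : -(η * (1 - D)) ≤ lam (T + 1) :=
    neg_mul_one_sub_le_of_update hη.le hD.1 hupd hpos (hinit ▸ by nlinarith) (T + 1) (by omega)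
  have herr : ∀ t ∈ Icc 1 T, (if Xhat t ≠ X t then (1 : ℝ) else 0)
      ≤ if p t (X t) < s t then 1 else 0 := fun t ht =>
    ite_one_zero_le_of_imp fun hne => not_le.mp fun hle => hne (hrec t (mem_Icc.mp ht).1 hle)
  have hT' : (0 : ℝ) < T := by exact_mod_cast hT
  rw [one_div, inv_mul_le_iff₀ hT']
  calc ∑ t ∈ Icc 1 T, (if Xhat t ≠ X t then (1 : ℝ) else 0)
      ≤ ∑ t ∈ Icc 1 T, (if p t (X t) < s t then (1 : ℝ) else 0) := sum_le_sum herr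
    _ = T * D + (lam₀ - lam (T + 1)) / η := hinit ▸ sum_Icc_eq_of_update hη.ne' hupd T
    _ ≤ T * D + (η * (1 - D) + lam₀) / η := by gcongr; linarith
    _ = T * (D + (η * (1 - D) + lam₀) / (η * T)) := by field_simp

/-- **Theorem 1 (OCSC distortion guarantee, error-free channel).**
Under the OCSC recursion over an error-free channel (threshold `s t = max 0 (lam t)`,
high-probability set `𝒳_t = {x | p t x ≥ s t}`, update
`lam (t+1) = lam t − η (𝟙{X t ∉ 𝒳_t} − D)`, reconstruction `Xhat t = X t` whenever
`X t ∈ 𝒳_t`), for every horizon `T ≥ 1`, every source sequence, every sequence of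
predictive distributions, and every target outage level `D ∈ [0,1]`:
`(1/T) ∑_{t=1}^T 𝟙{Xhat t ≠ X t} ≤ D + (η (1 − D) + lam₀) / (η T)`. -/
theorem ocsc_distortion_guarantee_noiseless
    {𝒳 : Type*} [Fintype 𝒳] [Nonempty 𝒳]
    (X Xhat : ℕ → 𝒳) (p : ℕ → 𝒳 → ℝ)
    (hp0 : ∀ t x, 0 ≤ p t x) (hp1 : ∀ t, ∑ x, p t x = 1)
    (D : ℝ) (hD : 0 ≤ D ∧ D ≤ 1)
    (η : ℝ) (hη : 0 < η)
    (lam₀ : ℝ) (hlam₀ : 0 < lam₀)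
    (lam s : ℕ → ℝ) (hinit : lam 1 = lam₀)
    (hs : ∀ t, s t = max 0 (lam t))
    (hupd : ∀ t, 1 ≤ t →
      lam (t + 1) = lam t - η * ((if p t (X t) < s t then (1 : ℝ) else 0) - D))
    (hrec : ∀ t, 1 ≤ t → s t ≤ p t (X t) → Xhat t = X t)
    (T : ℕ) (hT : 1 ≤ T) :
    (1 / (T : ℝ)) * ∑ t ∈ Finset.Icc 1 T, (if Xhat t ≠ X t then (1 : ℝ) else 0)
      ≤ D + (η * (1 - D) + lam₀) / (η * T) :=
  ocsc_distortion_guarantee_noiseless_general X Xhat p hp0 D hD η hη lam₀ hlam₀ lam s hinit hs hupd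
    hrec T hT
end

section
/- Under the OCSC recursion over an error-free channel, the parameter sequence is uniformly bounded below: λ_t ≥ −η(1−D) for all t ≥ 1, for every sequence of source symbols, every sequence of predictive distributions, and every target outage level D ∈ [0,1]. (Key step in the proof of Theorem 1) -/
/-!
A step can lower `λ` by at most `η (1 - D)`, and only when `λ ≥ 0`: once `λ < 0` the threshold
`max 0 λ` is `0`, so every symbol is admitted (probabilities are nonnegative), no outage occurs and
`λ` grows by `η D ≥ 0`. Hence `λ` never falls below `-η (1 - D)`.
-/

lemma ite_lt_max_zero_eq_zero {q l : ℝ} (hq : 0 ≤ q) (hl : l ≤ 0) :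
    (if q < max 0 l then (1 : ℝ) else 0) = 0 := by
  rw [max_eq_left hl, if_neg hq.not_gt]

lemma neg_mul_one_sub_le_sub_mul_sub {η D l c : ℝ} (hη : 0 ≤ η) (hD : 0 ≤ D) (hc : c ≤ 1)
    (hc_neg : l < 0 → c = 0) (hl : -(η * (1 - D)) ≤ l) :
    -(η * (1 - D)) ≤ l - η * (c - D) := by
  rcases lt_or_ge l 0 with hneg | hnonneg
  · rw [hc_neg hneg]
    nlinarith
  · nlinarith

theorem ocsc_lambda_lower_bound_general
    {𝒳 : Type*}
    (X : ℕ → 𝒳) (p : ℕ → 𝒳 → ℝ)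
    (hp0 : ∀ t x, 0 ≤ p t x)
    (D : ℝ) (hD : 0 ≤ D ∧ D ≤ 1)
    (η : ℝ) (hη : 0 < η)
    (lam₀ : ℝ) (hlam₀ : 0 < lam₀)
    (lam s : ℕ → ℝ) (hinit : lam 1 = lam₀)
    (hs : ∀ t, s t = max 0 (lam t))
    (hupd : ∀ t, 1 ≤ t →
      lam (t + 1) = lam t - η * ((if p t (X t) < s t then (1 : ℝ) else 0) - D)) :
    ∀ t, 1 ≤ t → -(η * (1 - D)) ≤ lam t := by
  intro t ht
  induction t, ht using Nat.le_induction with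
  | base =>
    have : 0 ≤ η * (1 - D) := mul_nonneg hη.le (sub_nonneg.2 hD.2)
    linarith
  | succ n hn ih =>
    rw [hupd n hn, hs n]
    exact neg_mul_one_sub_le_sub_mul_sub hη.le hD.1 (by split_ifs <;> norm_num)
      (fun hneg => ite_lt_max_zero_eq_zero (hp0 n (X n)) hneg.le) ih

/-- **Key step in the proof of Theorem 1 (OCSC parameter lower bound).**
Under the OCSC recursion over an error-free channel (threshold `s t = max 0 (lam t)`,
high-probability set `𝒳_t = {x | p t x ≥ s t}`, update
`lam (t+1) = lam t − η (𝟙{X t ∉ 𝒳_t} − D)`), the parameter sequence is uniformly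
bounded below: `lam t ≥ −η (1 − D)` for all `t ≥ 1`, for every sequence of source
symbols, every sequence of predictive distributions, and every `D ∈ [0,1]`. -/
theorem ocsc_lambda_lower_bound
    {𝒳 : Type*} [Fintype 𝒳] [Nonempty 𝒳]
    (X : ℕ → 𝒳) (p : ℕ → 𝒳 → ℝ)
    (hp0 : ∀ t x, 0 ≤ p t x) (hp1 : ∀ t, ∑ x, p t x = 1)
    (D : ℝ) (hD : 0 ≤ D ∧ D ≤ 1)
    (η : ℝ) (hη : 0 < η)
    (lam₀ : ℝ) (hlam₀ : 0 < lam₀)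
    (lam s : ℕ → ℝ) (hinit : lam 1 = lam₀)
    (hs : ∀ t, s t = max 0 (lam t))
    (hupd : ∀ t, 1 ≤ t →
      lam (t + 1) = lam t - η * ((if p t (X t) < s t then (1 : ℝ) else 0) - D)) :
    ∀ t, 1 ≤ t → -(η * (1 - D)) ≤ lam t :=
  ocsc_lambda_lower_bound_general X p hp0 D hD η hη lam₀ hlam₀ lam s hinit hs hupd
end

section
/- Under the OCRDC recursion over an error-free channel with predictors satisfying Assumption 1 and target distortion D ∈ (0, D_max], the parameter sequence is uniformly bounded above: λ_t ≤ L/D + η(D_max − D) for all t ≥ 1. (Lemma 1) -/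
/-!
Above the threshold `L / D` the slope is positive and at least `L / D`, so the loss of coding
`X_t` exactly (codelength `< L`, distortion `0`) beats every reconstruction of distortion `≥ D`:
the minimizer has distortion `< D` and the parameter decreases. Below the threshold one step
raises it by at most `η (D_max − D)`.
-/

theorem le_add_of_update_of_distortion_lt {lam δ : ℕ → ℝ} {c η D Dmax : ℝ} {m : ℕ}
    (hη : 0 ≤ η) (hδ : ∀ t, δ t ≤ Dmax) (hdrift : ∀ t, m ≤ t → c < lam t → δ t < D)
    (hupd : ∀ t, m ≤ t → lam (t + 1) = lam t + η * (δ t - D))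
    (hm : lam m ≤ c + η * (Dmax - D)) :
    ∀ t, m ≤ t → lam t ≤ c + η * (Dmax - D) := by
  intro t ht
  induction t, ht using Nat.le_induction with
  | base => exact hm
  | succ t ht ih =>
    rw [hupd t ht]
    rcases le_or_gt (lam t) c with hle | hgt
    · have : η * (δ t - D) ≤ η * (Dmax - D) := by gcongr; exact hδ t
      linarith
    · have : η * (δ t - D) ≤ 0 :=
        mul_nonpos_of_nonneg_of_nonpos hη (by linarith [hdrift t ht hgt])
      linarith

theorem distortion_lt_of_div_lt_of_isMin {α : Type*} {ℓ : α → ℝ} {d : α → α → ℝ} {x x' : α}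
    {L D lam : ℝ} (hD : 0 < D) (hℓ : ∀ y, 0 ≤ ℓ y) (hℓx : ℓ x < L) (hdx : d x x = 0)
    (hmin : ℓ x' + max 0 lam * d x x' ≤ ℓ x + max 0 lam * d x x) (hlam : L / D < lam) :
    d x x' < D := by
  have hlam_pos : 0 < lam := lt_trans (div_pos (by linarith [hℓ x]) hD) hlam
  rw [max_eq_right hlam_pos.le, hdx, mul_zero, add_zero] at hmin
  have hbelow : lam * d x x' < L := by linarith [hℓ x']
  have habove : L < lam * D := (div_lt_iff₀ hD).mp hlam
  exact lt_of_mul_lt_mul_left (hbelow.trans habove) hlam_pos.le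

theorem ocrdc_lambda_upper_bound_general
    {𝒳 : Type*}
    (Dmax : ℝ)
    (d : 𝒳 → 𝒳 → ℝ) (hd : ∀ x y, 0 ≤ d x y ∧ d x y ≤ Dmax) (hdd : ∀ x, d x x = 0)
    (X Xtil : ℕ → 𝒳) (p : ℕ → 𝒳 → ℝ)
    (hp : ∀ t x, 0 < p t x ∧ p t x ≤ 1)
    (L : ℝ) (hL : ∀ t x, -Real.log (p t x) < L)
    (D : ℝ) (hD : 0 < D ∧ D ≤ Dmax)
    (η : ℝ) (hη : 0 < η)
    (lam₀ : ℝ) (hlam₀ : 0 < lam₀ ∧ lam₀ ≤ L / D + η * (Dmax - D))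
    (lam s : ℕ → ℝ) (hinit : lam 1 = lam₀)
    (hs : ∀ t, s t = max 0 (lam t))
    (hmin : ∀ t, 1 ≤ t → ∀ x,
      -Real.log (p t (Xtil t)) + s t * d (X t) (Xtil t)
        ≤ -Real.log (p t x) + s t * d (X t) x)
    (hupd : ∀ t, 1 ≤ t → lam (t + 1) = lam t + η * (d (X t) (Xtil t) - D)) :
    ∀ t, 1 ≤ t → lam t ≤ L / D + η * (Dmax - D) := by
  have hcodelength : ∀ t x, 0 ≤ -Real.log (p t x) := fun t x =>
    neg_nonneg.mpr (Real.log_nonpos (hp t x).1.le (hp t x).2)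
  refine le_add_of_update_of_distortion_lt hη.le (fun t => (hd _ _).2) ?_ hupd
    (hinit ▸ hlam₀.2)
  intro t ht hlam
  have hmin_t := hmin t ht (X t)
  rw [hs t] at hmin_t
  exact distortion_lt_of_div_lt_of_isMin hD.1 (hcodelength t) (hL t (X t)) (hdd (X t))
    hmin_t hlam

/-- **Lemma 1 (OCRDC parameter upper bound, error-free channel).**
Under the OCRDC recursion (slope `s t = max 0 (lam t)`, `X̃ t` a minimizer of
`−log p̂_t(x̃) + s_t d(X_t, x̃)`, update `lam (t+1) = lam t + η (d(X_t, X̃_t) − D)`)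
with predictors satisfying Assumption 1 (`−log p̂_t(x) < L` for all `x`) and target
distortion `D ∈ (0, D_max]`, the parameter sequence satisfies
`lam t ≤ L/D + η (D_max − D)` for all `t ≥ 1`. -/
theorem ocrdc_lambda_upper_bound
    {𝒳 : Type*} [Fintype 𝒳] [Nonempty 𝒳]
    (Dmax : ℝ) (hDmax : 0 < Dmax)
    (d : 𝒳 → 𝒳 → ℝ) (hd : ∀ x y, 0 ≤ d x y ∧ d x y ≤ Dmax) (hdd : ∀ x, d x x = 0)
    (X Xtil : ℕ → 𝒳) (p : ℕ → 𝒳 → ℝ)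
    (hp : ∀ t x, 0 < p t x ∧ p t x ≤ 1) (hp1 : ∀ t, ∑ x, p t x = 1)
    (L : ℝ) (hL : ∀ t x, -Real.log (p t x) < L)
    (D : ℝ) (hD : 0 < D ∧ D ≤ Dmax)
    (η : ℝ) (hη : 0 < η)
    (lam₀ : ℝ) (hlam₀ : 0 < lam₀ ∧ lam₀ ≤ L / D + η * (Dmax - D))
    (lam s : ℕ → ℝ) (hinit : lam 1 = lam₀)
    (hs : ∀ t, s t = max 0 (lam t))
    (hmin : ∀ t, 1 ≤ t → ∀ x,
      -Real.log (p t (Xtil t)) + s t * d (X t) (Xtil t)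
        ≤ -Real.log (p t x) + s t * d (X t) x)
    (hupd : ∀ t, 1 ≤ t → lam (t + 1) = lam t + η * (d (X t) (Xtil t) - D)) :
    ∀ t, 1 ≤ t → lam t ≤ L / D + η * (Dmax - D) :=
  ocrdc_lambda_upper_bound_general Dmax d hd hdd X Xtil p hp L hL D hD η hη lam₀ hlam₀ lam s hinit
    hs hmin hupd
end

section
/- Under the OCRDC recursion over an error-free channel with predictors satisfying Assumption 1, for every horizon T ≥ 1, every sequence of source symbols, and every target distortion D ∈ (0, D_max], the reconstructed sequence X̂_t = X̃_t satisfies (1/T) ∑_{t=1}^T d(X_t, X̂_t) ≤ D + (L/D + η(D_max − D) − λ_0)/(η T). (Theorem 2) -/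
/-- **Theorem 2 (OCRDC distortion guarantee, error-free channel).**
Under the OCRDC recursion (slope `s t = max 0 (lam t)`, `X̃ t` a minimizer of
`−log p̂_t(x̃) + s_t d(X_t, x̃)`, update `lam (t+1) = lam t + η (d(X_t, X̃_t) − D)`,
reconstruction `X̂ t = X̃ t` over the error-free channel) with predictors satisfying
Assumption 1, for every horizon `T ≥ 1`, every source sequence, and every target
distortion `D ∈ (0, D_max]`:
`(1/T) ∑_{t=1}^T d(X_t, X̂_t) ≤ D + (L/D + η (D_max − D) − λ₀)/(η T)`. -/
theorem ocrdc_distortion_guarantee_noiseless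
    {𝒳 : Type*} [Fintype 𝒳] [Nonempty 𝒳]
    (Dmax : ℝ) (hDmax : 0 < Dmax)
    (d : 𝒳 → 𝒳 → ℝ) (hd : ∀ x y, 0 ≤ d x y ∧ d x y ≤ Dmax) (hdd : ∀ x, d x x = 0)
    (X Xtil Xhat : ℕ → 𝒳) (p : ℕ → 𝒳 → ℝ)
    (hp : ∀ t x, 0 < p t x ∧ p t x ≤ 1) (hp1 : ∀ t, ∑ x, p t x = 1)
    (L : ℝ) (hL : ∀ t x, -Real.log (p t x) < L)
    (D : ℝ) (hD : 0 < D ∧ D ≤ Dmax)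
    (η : ℝ) (hη : 0 < η)
    (lam₀ : ℝ) (hlam₀ : 0 < lam₀ ∧ lam₀ ≤ L / D + η * (Dmax - D))
    (lam s : ℕ → ℝ) (hinit : lam 1 = lam₀)
    (hs : ∀ t, s t = max 0 (lam t))
    (hmin : ∀ t, 1 ≤ t → ∀ x,
      -Real.log (p t (Xtil t)) + s t * d (X t) (Xtil t)
        ≤ -Real.log (p t x) + s t * d (X t) x)
    (hupd : ∀ t, 1 ≤ t → lam (t + 1) = lam t + η * (d (X t) (Xtil t) - D))
    (hrec : ∀ t, 1 ≤ t → Xhat t = Xtil t)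
    (T : ℕ) (hT : 1 ≤ T) :
    (1 / (T : ℝ)) * ∑ t ∈ Finset.Icc 1 T, d (X t) (Xhat t)
      ≤ D + (L / D + η * (Dmax - D) - lam₀) / (η * T) := by
  obtain ⟨hD0, hDm⟩ := hD
  set B := L / D + η * (Dmax - D) with hB
  have hlog0 : ∀ t x, 0 ≤ -Real.log (p t x) := by
    intro t x
    have := Real.log_nonpos (le_of_lt (hp t x).1) (hp t x).2
    linarith
  have hLpos : 0 < L := lt_of_le_of_lt (hlog0 0 Classical.ofNonempty) (hL 0 _)
  -- key invariant: lam t ≤ B for all t ≥ 1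
  have hinv : ∀ t, 1 ≤ t → lam t ≤ B := by
    intro t ht
    induction t with
    | zero => omega
    | succ n ih =>
      rcases Nat.eq_or_lt_of_le ht with h1 | h1
      · rw [← h1, hinit]; exact hlam₀.2
      · have hn : 1 ≤ n := by omega
        have ihn := ih hn
        have hupdn := hupd n hn
        by_cases hcase : lam n ≤ L / D
        · rw [hupdn]
          have hdle : d (X n) (Xtil n) ≤ Dmax := (hd _ _).2
          have h3 : η * (d (X n) (Xtil n) - D) ≤ η * (Dmax - D) :=
            mul_le_mul_of_nonneg_left (by linarith) hη.le
          rw [hB]; linarith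
        · push_neg at hcase
          have hspos : 0 < L / D := div_pos hLpos hD0
          have hsn : s n = lam n := by
            rw [hs]; exact max_eq_right (le_of_lt (lt_trans hspos hcase))
          have hmin' := hmin n hn (X n)
          rw [hdd] at hmin'
          have h2 : s n * d (X n) (Xtil n) < L := by
            have := hlog0 n (Xtil n)
            have := hL n (X n)
            linarith
          have hdlt : d (X n) (Xtil n) < D := by
            by_contra hcon
            push_neg at hcon
            have : L / D * D ≤ s n * d (X n) (Xtil n) := by
              apply mul_le_mul (by rw [hsn]; linarith) hcon (by linarith) (le_of_lt (by rw [hsn]; linarith))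
            rw [div_mul_cancel₀ _ (ne_of_gt hD0)] at this
            linarith
          rw [hupdn]
          nlinarith
  -- telescoping
  have htel : ∀ n, 1 ≤ n →
      lam (n + 1) = lam₀ + η * ∑ t ∈ Finset.Icc 1 n, (d (X t) (Xtil t) - D) := by
    intro n hn
    induction n with
    | zero => omega
    | succ m ih =>
      rcases Nat.eq_or_lt_of_le hn with h1 | h1
      · rw [← h1]
        simp [hupd 1 le_rfl, hinit]
      · have hm : 1 ≤ m := by omega
        rw [hupd (m+1) (by omega), ih hm,
          Finset.sum_Icc_succ_top (by omega : 1 ≤ m + 1)]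
        ring
  have hsum : ∑ t ∈ Finset.Icc 1 T, (d (X t) (Xtil t) - D)
      ≤ (B - lam₀) / η := by
    have h1 := htel T hT
    have h2 := hinv (T + 1) (by omega)
    rw [h1] at h2
    rw [div_eq_inv_mul, le_inv_mul_iff₀ hη]
    linarith
  have hTpos : (0:ℝ) < T := by exact_mod_cast hT
  have hsum2 : ∑ t ∈ Finset.Icc 1 T, d (X t) (Xhat t)
      ≤ T * D + (B - lam₀) / η := by
    have heq : ∑ t ∈ Finset.Icc 1 T, d (X t) (Xhat t)
        = ∑ t ∈ Finset.Icc 1 T, d (X t) (Xtil t) := by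
      apply Finset.sum_congr rfl
      intro t ht
      rw [hrec t (Finset.mem_Icc.mp ht).1]
    rw [heq]
    have : ∑ t ∈ Finset.Icc 1 T, (d (X t) (Xtil t) - D)
        = ∑ t ∈ Finset.Icc 1 T, d (X t) (Xtil t) - T * D := by
      rw [Finset.sum_sub_distrib]
      simp [Nat.card_Icc, mul_comm]
    linarith
  have : (1 / (T : ℝ)) * ∑ t ∈ Finset.Icc 1 T, d (X t) (Xhat t)
      ≤ (1 / (T : ℝ)) * (T * D + (B - lam₀) / η) := by
    apply mul_le_mul_of_nonneg_left hsum2 (by positivity)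
  calc (1 / (T : ℝ)) * ∑ t ∈ Finset.Icc 1 T, d (X t) (Xhat t)
      ≤ (1 / (T : ℝ)) * (T * D + (B - lam₀) / η) := this
    _ = D + (B - lam₀) / (η * T) := by
        field_simp
end

section
/- Under the CA-OCRDC recursion with predictors satisfying Assumption 1, for any erasure sequence, any sequence of source symbols, any target distortion D ∈ (0, D_max], any ε ∈ (0, D), and any adjustment sequence with δ^tgt_t ≤ D − ε for all t, the parameter sequence satisfies λ_t ≤ L/ε + η(D_max − ε) for all t ≥ 1. (Lemma 2, CA-OCRDC case) -/
/-! Above the threshold `L / ε` the slope `s_t ≥ λ_t` exceeds `L / ε`, and comparing the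
minimizer `X̃_t` with the lossless choice `X_t` (codelength `< L`, distortion `0`) gives
`s_t d(X_t, X̃_t) < L`, hence `d(X_t, X̃_t) < ε`; since `δ^tgt_t ≤ D - ε`, the update then does
not increase `λ`. Below the threshold a single step adds at most `η (D_max - ε)`. -/

theorem distortion_lt_of_lt_slope {α : Type*} (ℓ : α → ℝ) (d : α → α → ℝ) (x y : α)
    {s L ε : ℝ} (hε : 0 < ε) (hs : L / ε < s) (hdd : d x x = 0)
    (hℓ : ∀ z, 0 ≤ ℓ z) (hℓx : ℓ x < L) (hmin : ℓ y + s * d x y ≤ ℓ x + s * d x x) :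
    d x y < ε := by
  rw [hdd, mul_zero, add_zero] at hmin
  have hLs : L < s * ε := (div_lt_iff₀ hε).mp hs
  have hs_pos : 0 < s := lt_of_le_of_lt (div_nonneg (by linarith [hℓ x]) hε.le) hs
  refine lt_of_mul_lt_mul_left ?_ hs_pos.le
  linarith [hℓ y]

theorem le_add_of_step_le_of_not_increasing_above {u : ℕ → ℝ} {B M : ℝ} {n₀ : ℕ}
    (h₀ : u n₀ ≤ B + M) (hstep : ∀ t, n₀ ≤ t → u (t + 1) ≤ u t + M)
    (hdrift : ∀ t, n₀ ≤ t → B < u t → u (t + 1) ≤ u t) :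
    ∀ t, n₀ ≤ t → u t ≤ B + M := by
  intro t ht
  induction t, ht using Nat.le_induction with
  | base => exact h₀
  | succ t ht ih =>
    rcases le_or_gt (u t) B with hle | hgt
    · linarith [hstep t ht]
    · linarith [hdrift t ht hgt]

theorem ca_ocrdc_lambda_upper_bound_general
    {𝒳 : Type*}
    (Dmax : ℝ)
    (d : 𝒳 → 𝒳 → ℝ) (hd : ∀ x y, 0 ≤ d x y ∧ d x y ≤ Dmax) (hdd : ∀ x, d x x = 0)
    (X Xtil : ℕ → 𝒳) (p : ℕ → 𝒳 → ℝ)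
    (hp : ∀ t x, 0 < p t x ∧ p t x ≤ 1)
    (L : ℝ) (hL : ∀ t x, -Real.log (p t x) < L)
    (D ε : ℝ) (hε : 0 < ε ∧ ε < D)
    (δtgt : ℕ → ℝ) (hδtgt : ∀ t, 1 ≤ t → δtgt t ≤ D - ε)
    (η : ℝ) (hη : 0 < η)
    (lam₀ : ℝ) (hlam₀ : 0 < lam₀ ∧ lam₀ ≤ L / ε + η * (Dmax - ε))
    (lam s : ℕ → ℝ) (hinit : lam 1 = lam₀)
    (hs : ∀ t, s t = max 0 (lam t))
    (hmin : ∀ t, 1 ≤ t → ∀ x,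
      -Real.log (p t (Xtil t)) + s t * d (X t) (Xtil t)
        ≤ -Real.log (p t x) + s t * d (X t) x)
    (hupd : ∀ t, 1 ≤ t →
      lam (t + 1) = lam t + η * (d (X t) (Xtil t) - D + δtgt t)) :
    ∀ t, 1 ≤ t → lam t ≤ L / ε + η * (Dmax - ε) := by
  refine le_add_of_step_le_of_not_increasing_above (hinit ▸ hlam₀.2) (fun t ht ↦ ?_)
    (fun t ht hlarge ↦ ?_)
  · rw [hupd t ht]
    gcongr
    linarith [(hd (X t) (Xtil t)).2, hδtgt t ht]
  · have hslope : L / ε < s t := hs t ▸ lt_max_of_lt_right hlarge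
    have hsmall : d (X t) (Xtil t) < ε :=
      distortion_lt_of_lt_slope (fun x ↦ -Real.log (p t x)) d (X t) (Xtil t) hε.1 hslope
        (hdd (X t)) (fun x ↦ neg_nonneg.mpr (Real.log_nonpos (hp t x).1.le (hp t x).2))
        (hL t (X t)) (hmin t ht (X t))
    rw [hupd t ht]
    nlinarith [hδtgt t ht]

/-- **Lemma 2, CA-OCRDC case (parameter upper bound under erasures).**
Under the CA-OCRDC recursion (slope `s t = max 0 (lam t)`, `X̃ t` a minimizer of
`−log p̂_t(x̃) + s_t d(X_t, x̃)`, update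
`lam (t+1) = lam t + η (d(X_t, X̃_t) − D + δ^tgt_t)`) with predictors satisfying
Assumption 1, for any erasure sequence, any source symbols, any `D ∈ (0, D_max]`,
any `ε ∈ (0, D)`, and any adjustment sequence with `δ^tgt_t ≤ D − ε`, the parameter
sequence satisfies `lam t ≤ L/ε + η (D_max − ε)` for all `t ≥ 1`. -/
theorem ca_ocrdc_lambda_upper_bound
    {𝒳 : Type*} [Fintype 𝒳] [Nonempty 𝒳]
    (Dmax : ℝ) (hDmax : 0 < Dmax)
    (d : 𝒳 → 𝒳 → ℝ) (hd : ∀ x y, 0 ≤ d x y ∧ d x y ≤ Dmax) (hdd : ∀ x, d x x = 0)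
    (X Xtil : ℕ → 𝒳) (p : ℕ → 𝒳 → ℝ)
    (hp : ∀ t x, 0 < p t x ∧ p t x ≤ 1) (hp1 : ∀ t, ∑ x, p t x = 1)
    (L : ℝ) (hL : ∀ t x, -Real.log (p t x) < L)
    (D ε : ℝ) (hD : 0 < D ∧ D ≤ Dmax) (hε : 0 < ε ∧ ε < D)
    (δtgt : ℕ → ℝ) (hδtgt : ∀ t, 1 ≤ t → δtgt t ≤ D - ε)
    (η : ℝ) (hη : 0 < η)
    (lam₀ : ℝ) (hlam₀ : 0 < lam₀ ∧ lam₀ ≤ L / ε + η * (Dmax - ε))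
    (lam s : ℕ → ℝ) (hinit : lam 1 = lam₀)
    (hs : ∀ t, s t = max 0 (lam t))
    (hmin : ∀ t, 1 ≤ t → ∀ x,
      -Real.log (p t (Xtil t)) + s t * d (X t) (Xtil t)
        ≤ -Real.log (p t x) + s t * d (X t) x)
    (hupd : ∀ t, 1 ≤ t →
      lam (t + 1) = lam t + η * (d (X t) (Xtil t) - D + δtgt t)) :
    ∀ t, 1 ≤ t → lam t ≤ L / ε + η * (Dmax - ε) :=
  ca_ocrdc_lambda_upper_bound_general Dmax d hd hdd X Xtil p hp L hL D ε hε δtgt hδtgt η hη lam₀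
    hlam₀ lam s hinit hs hmin hupd
end

section
/- Under the CA-OCSC recursion with the doubly-adaptive adjustment policy, for every horizon T ≥ 1, every erasure sequence {E_t} ⊆ {0,1}, every sequence of source symbols, every sequence of predictive distributions, every D ∈ (0,1] and ε ∈ (0, D), the reconstructed sequence satisfies (1/T) ∑_{t=1}^T 𝟙{X̂_t ≠ X_t} ≤ D + K/(η T) + Q_T/T, where K = η(1 − ε) + λ_0 and Q_T is the residual distortion queue at time T. (Proposition 1, CA-OCSC case) -/
/-!
The Lagrange multiplier `λ_t` never drops below `-η (1 - ε)`: while `λ_t ≤ 0` the threshold is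
`0`, nothing is missed and `λ` cannot decrease, and while `λ_t > 0` one step lowers it by at most
`η (1 - ε)`. Telescoping the update therefore bounds the cumulative drift
`∑ (miss_t - D + δ^tgt_t)` by `(λ₀ + η (1 - ε)) / η`, and the distortion is at most
`∑ (miss_t + E_t) = drift + T D + Q_T`.
-/

open Finset

open scoped Classical

theorem neg_le_of_step_bounds {lam : ℕ → ℝ} {B : ℝ} (h1 : -B ≤ lam 1)
    (hnonpos : ∀ t, 1 ≤ t → lam t ≤ 0 → lam t ≤ lam (t + 1))
    (hpos : ∀ t, 1 ≤ t → 0 < lam t → lam t - B ≤ lam (t + 1)) :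
    ∀ t, 1 ≤ t → -B ≤ lam t := by
  intro t ht
  induction t, ht using Nat.le_induction with
  | base => exact h1
  | succ t ht ih =>
    rcases le_or_gt (lam t) 0 with hle | hgt
    · exact ih.trans (hnonpos t ht hle)
    · linarith [hpos t ht hgt]

theorem mul_sum_Icc_eq_sub_of_step {lam g : ℕ → ℝ} {η : ℝ}
    (h : ∀ t, 1 ≤ t → lam (t + 1) = lam t - η * g t) (T : ℕ) :
    η * ∑ t ∈ Icc 1 T, g t = lam 1 - lam (T + 1) := by
  induction T with
  | zero => simp
  | succ T ih =>
    rw [sum_Icc_succ_top (by omega), mul_add, ih, h (T + 1) (by omega)]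
    ring

theorem le_of_eq_zero_of_succ_eq_min {δ Q : ℕ → ℝ} {c : ℝ} (hc : 0 ≤ c) (h1 : δ 1 = 0)
    (h : ∀ t, 1 ≤ t → δ (t + 1) = min c (Q t)) : ∀ t, 1 ≤ t → δ t ≤ c
  | 1, _ => h1 ▸ hc
  | t + 2, _ => (h (t + 1) (by omega)).trans_le (min_le_left _ _)

theorem ite_le_mul_ite_add {e : ℝ} {P R : Prop} [Decidable P] [Decidable R]
    (he : e = 0 ∨ e = 1) (hR : e = 0 → ¬P → ¬R) :
    (if R then (1 : ℝ) else 0) ≤ (1 - e) * (if P then 1 else 0) + e := by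
  rcases he with rfl | rfl
  · by_cases hP : P
    · split_ifs <;> norm_num
    · simp [hP, hR rfl hP]
  · split_ifs <;> norm_num

theorem sum_Icc_add_eq_sum_sub_add (L E δ : ℕ → ℝ) (D : ℝ) (T : ℕ) :
    ∑ t ∈ Icc 1 T, (L t + E t)
      = ∑ t ∈ Icc 1 T, (L t - D + δ t) + T * D + ∑ t ∈ Icc 1 T, (E t - δ t) := by
  simp only [sum_add_distrib, sum_sub_distrib, sum_const, Nat.card_Icc, nsmul_eq_mul,
    Nat.add_sub_cancel]
  ring

theorem one_div_mul_le_add_div_add_div {a K η D Q T : ℝ} (hη : 0 < η) (hT : 0 < T)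
    (h : a ≤ K / η + T * D + Q) : 1 / T * a ≤ D + K / (η * T) + Q / T := by
  have hrhs : D + K / (η * T) + Q / T = (K / η + T * D + Q) / T := by
    field_simp
    ring
  rw [hrhs, one_div_mul_eq_div]
  gcongr

theorem ca_ocsc_lam_lower_bound {𝒳 : Type*} (X : ℕ → 𝒳) (p : ℕ → 𝒳 → ℝ)
    (hp0 : ∀ t x, 0 ≤ p t x) (E : ℕ → ℝ) (hE : ∀ t, E t = 0 ∨ E t = 1)
    {D ε η lam₀ : ℝ} (hε0 : 0 ≤ ε) (hε1 : ε ≤ 1) (hη : 0 ≤ η) (hlam₀ : 0 ≤ lam₀)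
    {lam s δtgt : ℕ → ℝ} (hinit : lam 1 = lam₀) (hs : ∀ t, s t = max 0 (lam t))
    (hupd : ∀ t, 1 ≤ t →
      lam (t + 1) = lam t
        - η * ((1 - E t) * (if p t (X t) < s t then (1 : ℝ) else 0) - D + δtgt t))
    (hδle : ∀ t, 1 ≤ t → δtgt t ≤ D - ε) :
    ∀ t, 1 ≤ t → -(η * (1 - ε)) ≤ lam t := by
  refine neg_le_of_step_bounds (by rw [hinit]; nlinarith) (fun t ht hle => ?_) fun t ht _ => ?_
  · have hhit : ¬p t (X t) < s t := by
      rw [hs, max_eq_left hle]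
      exact (hp0 t (X t)).not_gt
    rw [hupd t ht, if_neg hhit]
    nlinarith [hδle t ht]
  · have hmiss : (1 - E t) * (if p t (X t) < s t then (1 : ℝ) else 0) ≤ 1 := by
      rcases hE t with h | h <;> split_ifs <;> simp [h]
    rw [hupd t ht]
    nlinarith [hδle t ht]

theorem ca_ocsc_distortion_queue_bound_general
    {𝒳 : Type*}
    (X Xhat : ℕ → 𝒳) (p : ℕ → 𝒳 → ℝ)
    (hp0 : ∀ t x, 0 ≤ p t x)
    (E : ℕ → ℝ) (hE : ∀ t, E t = 0 ∨ E t = 1)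
    (D ε : ℝ) (hD : 0 < D ∧ D ≤ 1) (hε : 0 < ε ∧ ε < D)
    (η : ℝ) (hη : 0 < η)
    (lam₀ : ℝ) (hlam₀ : 0 < lam₀)
    (lam s δtgt Q : ℕ → ℝ) (hinit : lam 1 = lam₀)
    (hs : ∀ t, s t = max 0 (lam t))
    (hupd : ∀ t, 1 ≤ t →
      lam (t + 1) = lam t
        - η * ((1 - E t) * (if p t (X t) < s t then (1 : ℝ) else 0) - D + δtgt t))
    (hQ : ∀ t, Q t = ∑ i ∈ Finset.Icc 1 t, (E i - δtgt i))
    (hδ1 : δtgt 1 = 0)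
    (hδ : ∀ t, 1 ≤ t → δtgt (t + 1) = min (D - ε) (Q t))
    (hrec : ∀ t, 1 ≤ t → E t = 0 → s t ≤ p t (X t) → Xhat t = X t)
    (T : ℕ) (hT : 1 ≤ T) :
    (1 / (T : ℝ)) * ∑ t ∈ Finset.Icc 1 T, (if Xhat t ≠ X t then (1 : ℝ) else 0)
      ≤ D + (η * (1 - ε) + lam₀) / (η * T) + Q T / T := by
  have hδle := le_of_eq_zero_of_succ_eq_min (by linarith [hε.2]) hδ1 hδ
  have hlam := ca_ocsc_lam_lower_bound X p hp0 E hE hε.1.le (by linarith [hD.2]) hη.le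
    hlam₀.le hinit hs hupd hδle (T + 1) (by omega)
  have hdrift := mul_sum_Icc_eq_sub_of_step hupd T
  have hdistortion : ∑ t ∈ Icc 1 T, (if Xhat t ≠ X t then (1 : ℝ) else 0)
      ≤ ∑ t ∈ Icc 1 T, ((1 - E t) * (if p t (X t) < s t then (1 : ℝ) else 0) + E t) :=
    sum_le_sum fun t ht => ite_le_mul_ite_add (hE t) fun h0 hhit =>
      not_not_intro (hrec t (mem_Icc.mp ht).1 h0 (not_lt.mp hhit))
  apply one_div_mul_le_add_div_add_div hη (by exact_mod_cast hT)
  calc _ ≤ _ := hdistortion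
    _ = _ := sum_Icc_add_eq_sum_sub_add _ E δtgt D T
    _ ≤ _ := by
      rw [hQ T]
      gcongr
      rw [le_div_iff₀' hη, hdrift, hinit]
      linarith

/-- **Proposition 1, CA-OCSC case (distortion vs. residual queue).**
Under the CA-OCSC recursion with the doubly-adaptive adjustment policy
(`δ^tgt_1 = 0`, `δ^tgt_{t+1} = min{D − ε, Q_t}`, residual queue
`Q_t = ∑_{i=1}^t (E_i − δ^tgt_i)`, update
`lam (t+1) = lam t − η ((1 − E_t) 𝟙{X_t ∉ 𝒳_t} − D + δ^tgt_t)`, and reconstruction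
`X̂_t = X_t` whenever `E_t = 0` and `X_t ∈ 𝒳_t`), for every horizon `T ≥ 1`, every
erasure sequence `{E_t} ⊆ {0,1}`, every source sequence, every sequence of
predictive distributions, every `D ∈ (0,1]` and `ε ∈ (0, D)`:
`(1/T) ∑_{t=1}^T 𝟙{X̂_t ≠ X_t} ≤ D + K/(η T) + Q_T/T` with `K = η (1 − ε) + λ₀`. -/
theorem ca_ocsc_distortion_queue_bound
    {𝒳 : Type*} [Fintype 𝒳] [Nonempty 𝒳]
    (X Xhat : ℕ → 𝒳) (p : ℕ → 𝒳 → ℝ)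
    (hp0 : ∀ t x, 0 ≤ p t x) (hp1 : ∀ t, ∑ x, p t x = 1)
    (E : ℕ → ℝ) (hE : ∀ t, E t = 0 ∨ E t = 1)
    (D ε : ℝ) (hD : 0 < D ∧ D ≤ 1) (hε : 0 < ε ∧ ε < D)
    (η : ℝ) (hη : 0 < η)
    (lam₀ : ℝ) (hlam₀ : 0 < lam₀)
    (lam s δtgt Q : ℕ → ℝ) (hinit : lam 1 = lam₀)
    (hs : ∀ t, s t = max 0 (lam t))
    (hupd : ∀ t, 1 ≤ t →
      lam (t + 1) = lam t
        - η * ((1 - E t) * (if p t (X t) < s t then (1 : ℝ) else 0) - D + δtgt t))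
    (hQ0 : Q 0 = 0)
    (hQ : ∀ t, Q t = ∑ i ∈ Finset.Icc 1 t, (E i - δtgt i))
    (hδ1 : δtgt 1 = 0)
    (hδ : ∀ t, 1 ≤ t → δtgt (t + 1) = min (D - ε) (Q t))
    (hrec : ∀ t, 1 ≤ t → E t = 0 → s t ≤ p t (X t) → Xhat t = X t)
    (T : ℕ) (hT : 1 ≤ T) :
    (1 / (T : ℝ)) * ∑ t ∈ Finset.Icc 1 T, (if Xhat t ≠ X t then (1 : ℝ) else 0)
      ≤ D + (η * (1 - ε) + lam₀) / (η * T) + Q T / T :=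
  ca_ocsc_distortion_queue_bound_general X Xhat p hp0 E hE D ε hD hε η hη lam₀ hlam₀ lam s δtgt Q
    hinit hs hupd hQ hδ1 hδ hrec T hT
end

section
/- Under the CA-OCRDC recursion with the doubly-adaptive adjustment policy and predictors satisfying Assumption 1, for every horizon T ≥ 1, every erasure sequence, every sequence of source symbols, every D ∈ (0, D_max] and ε ∈ (0, D), the reconstructed sequence satisfies (1/T) ∑_{t=1}^T d(X_t, X̂_t) ≤ D + K/(η T) + Q_T/T, where K = L/ε + η(D_max − ε) − λ_0 and Q_T is the residual distortion queue at time T. (Proposition 1, CA-OCRDC case) -/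
/-- **Proposition 1, CA-OCRDC case (distortion vs. residual queue).**
Under the CA-OCRDC recursion with the doubly-adaptive adjustment policy
(`δ^tgt_1 = 0`, `δ^tgt_{t+1} = min{D − ε, Q_t}`, channel-distortion bound
`δ̃^ch_t = d(X_t, X̂_t) − d(X_t, X̃_t)`, residual queue
`Q_t = ∑_{i=1}^t (δ̃^ch_i − δ^tgt_i)`, update
`lam (t+1) = lam t + η (d(X_t, X̃_t) − D + δ^tgt_t)`, reconstruction `X̂_t = X̃_t`
when `E_t = 0` and arbitrary when `E_t = 1`) with predictors satisfying
Assumption 1, for every horizon `T ≥ 1`, every erasure sequence, every source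
sequence, every `D ∈ (0, D_max]` and `ε ∈ (0, D)`:
`(1/T) ∑_{t=1}^T d(X_t, X̂_t) ≤ D + K/(η T) + Q_T/T` with
`K = L/ε + η (D_max − ε) − λ₀`. -/
theorem ca_ocrdc_distortion_queue_bound
    {𝒳 : Type*} [Fintype 𝒳] [Nonempty 𝒳]
    (Dmax : ℝ) (hDmax : 0 < Dmax)
    (d : 𝒳 → 𝒳 → ℝ) (hd : ∀ x y, 0 ≤ d x y ∧ d x y ≤ Dmax) (hdd : ∀ x, d x x = 0)
    (X Xtil Xhat : ℕ → 𝒳) (p : ℕ → 𝒳 → ℝ)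
    (hp : ∀ t x, 0 < p t x ∧ p t x ≤ 1) (hp1 : ∀ t, ∑ x, p t x = 1)
    (L : ℝ) (hL : ∀ t x, -Real.log (p t x) < L)
    (E : ℕ → ℝ) (hE : ∀ t, E t = 0 ∨ E t = 1)
    (D ε : ℝ) (hD : 0 < D ∧ D ≤ Dmax) (hε : 0 < ε ∧ ε < D)
    (η : ℝ) (hη : 0 < η)
    (lam₀ : ℝ) (hlam₀ : 0 < lam₀ ∧ lam₀ ≤ L / ε + η * (Dmax - ε))
    (lam s δtgt Q : ℕ → ℝ) (hinit : lam 1 = lam₀)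
    (hs : ∀ t, s t = max 0 (lam t))
    (hmin : ∀ t, 1 ≤ t → ∀ x,
      -Real.log (p t (Xtil t)) + s t * d (X t) (Xtil t)
        ≤ -Real.log (p t x) + s t * d (X t) x)
    (hupd : ∀ t, 1 ≤ t →
      lam (t + 1) = lam t + η * (d (X t) (Xtil t) - D + δtgt t))
    (hrec : ∀ t, 1 ≤ t → E t = 0 → Xhat t = Xtil t)
    (hQ0 : Q 0 = 0)
    (hQ : ∀ t, Q t = ∑ i ∈ Finset.Icc 1 t,
      ((d (X i) (Xhat i) - d (X i) (Xtil i)) - δtgt i))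
    (hδ1 : δtgt 1 = 0)
    (hδ : ∀ t, 1 ≤ t → δtgt (t + 1) = min (D - ε) (Q t))
    (T : ℕ) (hT : 1 ≤ T) :
    (1 / (T : ℝ)) * ∑ t ∈ Finset.Icc 1 T, d (X t) (Xhat t)
      ≤ D + (L / ε + η * (Dmax - ε) - lam₀) / (η * T) + Q T / T := by

  have hT0 : (0:ℝ) < T := by exact_mod_cast hT
  have hε0 := hε.1
  have hL0 : 0 < L := by
    have h1 := hL 0 (Classical.arbitrary 𝒳)
    have h2 := hp 0 (Classical.arbitrary 𝒳)
    nlinarith [Real.log_nonpos h2.1.le h2.2]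
  set Λ := L / ε + η * (Dmax - ε) with hΛ
  -- target adjustment bound
  have hδle : ∀ t, 1 ≤ t → δtgt t ≤ D - ε := by
    intro t ht
    match t, ht with
    | 1, _ => rw [hδ1]; linarith [hε.2]
    | (n+2), _ =>
      rw [hδ (n+1) (by omega)]
      exact min_le_left _ _
  -- multiplier bound
  have hlamle : ∀ t, 1 ≤ t → lam t ≤ Λ := by
    intro t ht
    induction t, ht using Nat.le_induction with
    | base => rw [hinit]; exact hlam₀.2
    | succ n hn ih =>
      have hdn := hd (X n) (Xtil n)
      have hδn := hδle n hn
      rcases le_or_gt (lam n) (L/ε) with hc | hc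
      · have hstep : η * (d (X n) (Xtil n) - D + δtgt n) ≤ η * (Dmax - ε) :=
          mul_le_mul_of_nonneg_left (by linarith [hD.2]) hη.le
        rw [hupd n hn, hΛ]
        linarith
      · have hLε : 0 < L / ε := div_pos hL0 hε0
        have hsn : s n = lam n := by rw [hs]; exact max_eq_right (by linarith)
        have hplog := hp n (Xtil n)
        have hlogpos : 0 ≤ -Real.log (p n (Xtil n)) :=
          neg_nonneg.mpr (Real.log_nonpos hplog.1.le hplog.2)
        have hmm := hmin n hn (X n)
        rw [hdd (X n)] at hmm
        have hsd : s n * d (X n) (Xtil n) < L := by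
          have hLx := hL n (X n)
          nlinarith [hmm]
        have hspos : L / ε < s n := by rw [hsn]; exact hc
        have hsεL : L < s n * ε := (div_lt_iff₀ hε0).mp hspos
        have hdlt : d (X n) (Xtil n) < ε := by
          by_contra hcon
          push_neg at hcon
          have : s n * ε ≤ s n * d (X n) (Xtil n) :=
            mul_le_mul_of_nonneg_left hcon (by linarith)
          linarith
        have hstep : η * (d (X n) (Xtil n) - D + δtgt n) ≤ η * 0 :=
          mul_le_mul_of_nonneg_left (by linarith) hη.le
        rw [hupd n hn]
        rw [mul_zero] at hstep
        linarith
  -- telescoping the update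
  have hsum : ∀ n, lam (n+1) = lam 1 + η * ∑ t ∈ Finset.Icc 1 n,
      (d (X t) (Xtil t) - D + δtgt t) := by
    intro n
    induction n with
    | zero => simp
    | succ k ih =>
      rw [Finset.sum_Icc_succ_top (by omega : 1 ≤ k + 1), hupd (k+1) (by omega), ih]
      ring
  have hcard : (Finset.Icc 1 T).card = T := by simp
  have hid : ∑ t ∈ Finset.Icc 1 T, d (X t) (Xhat t)
      = Q T + ∑ t ∈ Finset.Icc 1 T, (d (X t) (Xtil t) - D + δtgt t) + T * D := by
    have hTD : (T:ℝ) * D = ∑ t ∈ Finset.Icc 1 T, D := by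
      rw [Finset.sum_const, hcard, nsmul_eq_mul]
    rw [hQ T, hTD, ← Finset.sum_add_distrib, ← Finset.sum_add_distrib]
    apply Finset.sum_congr rfl
    intro t _
    ring
  have h1 := hsum T
  have h3 := hlamle (T+1) (by omega)
  have hS : ∑ t ∈ Finset.Icc 1 T, (d (X t) (Xtil t) - D + δtgt t) ≤ (Λ - lam₀) / η := by
    rw [le_div_iff₀ hη]
    nlinarith [h1, h3, hinit]
  have key : ∑ t ∈ Finset.Icc 1 T, d (X t) (Xhat t)
      ≤ (T:ℝ) * D + (Λ - lam₀) / η + Q T := by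
    rw [hid]; linarith
  have heq : (1/(T:ℝ)) * ((T:ℝ) * D + (Λ - lam₀)/η + Q T)
      = D + (Λ - lam₀) / (η * T) + Q T / T := by
    field_simp
  calc (1 / (T : ℝ)) * ∑ t ∈ Finset.Icc 1 T, d (X t) (Xhat t)
      ≤ (1/(T:ℝ)) * ((T:ℝ) * D + (Λ - lam₀)/η + Q T) :=
        mul_le_mul_of_nonneg_left key (by positivity)
    _ = D + (Λ - lam₀) / (η * T) + Q T / T := heq
end

section
/- Let E_1, E_2, … ∈ {0,1} satisfy the deterministic envelope condition ∑_{t=k}^{k+τ} E_t < A·τ + ψ(τ) for all k ≥ 1 and τ ≥ 1, where A < (D − ε)/D_max and ψ : ℕ → [0, ∞) satisfies ψ(τ)/τ → 0 as τ → ∞. Let arrivals satisfy 0 ≤ a_t ≤ D_max·E_t, and let the queue be Q_0 = 0, Q_t = max{0, Q_{t−1} − (D − ε)} + a_t. Then τ_max = min{τ ∈ ℕ : ψ(τ)/τ ≤ (D − ε)/D_max − A} is finite, and the queue is uniformly bounded: sup_{t ≥ 0} Q_t < τ_max·(D_max − D + ε) + D − ε. (Queue-boundedness step in the proof of Theorem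 3) -/
/-!
Write `c = D - ε` and `n = τ_max`. The choice of `n` turns the envelope condition into
`∑_{u=k}^{k+n} a_u < n c`: a block of `n + 1` slots never brings more work than `n` slots of
service remove. Unrolling the recursion back to the start `s` of the current busy period gives
`Q_t = ∑_{u=s}^{t} a_u - (t - s) c`. Splitting a block of `n + 1` slots off such a window only
lowers it, so only windows of at most `n + 1` slots matter: those of `n` or `n + 1` slots are
controlled by the block bound, shorter ones by `a_u ≤ D_max`.
-/

open Finset Filter Topology

theorem Finset.sum_Icc_add_add_add_one {M : Type*} [AddCommMonoid M] (f : ℕ → M) (s n r : ℕ) :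
    ∑ u ∈ Icc s (s + (n + r + 1)), f u =
      ∑ u ∈ Icc s (s + n), f u + ∑ u ∈ Icc (s + n + 1) (s + n + 1 + r), f u := by
  simp only [← Ico_add_one_right_eq_Icc]
  rw [sum_Ico_consecutive f (m := s) (n := s + n + 1) (by omega) (by omega)]
  ring_nf

theorem exists_eq_busy_window_of_lindley {a Q : ℕ → ℝ} {c : ℝ} (hc : 0 ≤ c) (hQ0 : Q 0 = 0)
    (hQ : ∀ t, 1 ≤ t → Q t = max 0 (Q (t - 1) - c) + a t) {t : ℕ} (ht : 1 ≤ t) :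
    ∃ s τ, 1 ≤ s ∧ s + τ = t ∧ Q t = ∑ u ∈ Icc s (s + τ), a u - τ * c := by
  induction t, ht using Nat.le_induction with
  | base => exact ⟨1, 0, le_rfl, rfl, by simp [hQ 1 le_rfl, hQ0, hc]⟩
  | succ t ht ih =>
    have hQt : Q (t + 1) = max 0 (Q t - c) + a (t + 1) := hQ (t + 1) (by omega)
    rcases le_or_gt (Q t - c) 0 with hidle | hbusy
    · exact ⟨t + 1, 0, by omega, rfl, by simp [hQt, max_eq_left hidle]⟩
    · obtain ⟨s, τ, hs, rfl, hQs⟩ := ih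
      refine ⟨s, τ + 1, hs, by omega, ?_⟩
      rw [hQt, max_eq_right hbusy.le, hQs, ← add_assoc, sum_Icc_succ_top (by omega)]
      push_cast
      ring

theorem sum_Icc_sub_mul_lt {a : ℕ → ℝ} {c M : ℝ} {n : ℕ} (hc : 0 ≤ c) (hcM : c < M)
    (ha0 : ∀ t, 0 ≤ a t) (haM : ∀ t, a t ≤ M)
    (hblock : ∀ s, 1 ≤ s → ∑ u ∈ Icc s (s + n), a u < n * c) (τ : ℕ) {s : ℕ} (hs : 1 ≤ s) :
    ∑ u ∈ Icc s (s + τ), a u - τ * c < n * (M - c) + c := by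
  induction τ using Nat.strong_induction_on generalizing s with
  | _ τ ih =>
  rcases lt_or_ge n τ with hlong | hshort
  · obtain ⟨r, rfl⟩ := Nat.exists_eq_add_of_lt hlong
    have hrest := ih r (by omega) (s := s + n + 1) (by omega)
    rw [sum_Icc_add_add_add_one]
    push_cast
    linarith [hblock s hs]
  rcases lt_or_ge (τ + 1) n with hsmall | hnear
  · have hcard : ∑ u ∈ Icc s (s + τ), a u ≤ (τ + 1) * M := by
      simpa [Nat.card_Icc, show s + τ + 1 - s = τ + 1 by omega] using
        sum_le_card_nsmul (Icc s (s + τ)) a M fun t _ => haM t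
    have hτn : ((τ + 1 : ℕ) : ℝ) < n := by exact_mod_cast hsmall
    push_cast at hτn
    linarith [mul_pos (sub_pos.mpr hτn) (sub_pos.mpr hcM)]
  · have hsub : ∑ u ∈ Icc s (s + τ), a u ≤ ∑ u ∈ Icc s (s + n), a u :=
      sum_le_sum_of_subset_of_nonneg (Icc_subset_Icc_right (by omega)) fun t _ _ => ha0 t
    have hnτ : (n : ℝ) ≤ τ + 1 := by exact_mod_cast hnear
    linarith [hblock s hs, mul_nonneg (sub_nonneg.mpr hnτ) hc,
      mul_nonneg n.cast_nonneg (sub_nonneg.mpr hcM.le)]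

theorem nonempty_setOf_div_le_of_tendsto_zero {ψ : ℕ → ℝ}
    (hψ : Tendsto (fun τ : ℕ => ψ τ / τ) atTop (𝓝 0)) {g : ℝ} (hg : 0 < g) :
    {τ : ℕ | 1 ≤ τ ∧ ψ τ / τ ≤ g}.Nonempty := by
  obtain ⟨τ, hτ, hτ1⟩ := ((hψ.eventually (gt_mem_nhds hg)).and (eventually_ge_atTop 1)).exists
  exact ⟨τ, hτ1, hτ.le⟩

theorem sum_Icc_lt_of_envelope {E a : ℕ → ℝ} {A M c ψn : ℝ} {n : ℕ} (hM : 0 < M) (hn : 1 ≤ n)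
    (hψn : ψn / n ≤ c / M - A) (henv : ∀ k, 1 ≤ k → ∑ t ∈ Icc k (k + n), E t < A * n + ψn)
    (ha : ∀ t, a t ≤ M * E t) {k : ℕ} (hk : 1 ≤ k) :
    ∑ t ∈ Icc k (k + n), a t < n * c := by
  have hψ : ψn ≤ (c / M - A) * n := by
    rwa [div_le_iff₀ (by exact_mod_cast hn)] at hψn
  calc ∑ t ∈ Icc k (k + n), a t ≤ M * ∑ t ∈ Icc k (k + n), E t := by
        rw [mul_sum]; exact sum_le_sum fun t _ => ha t
    _ < M * (A * n + ψn) := mul_lt_mul_of_pos_left (henv k hk) hM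
    _ ≤ M * (A * n + (c / M - A) * n) := by gcongr
    _ = n * c := by field_simp; ring

theorem erasure_queue_uniformly_bounded_general
    (Dmax D ε : ℝ) (hDmax : 0 < Dmax) (hD : 0 < D ∧ D ≤ Dmax) (hε : 0 < ε ∧ ε < D)
    (A : ℝ) (hA : A < (D - ε) / Dmax)
    (ψ : ℕ → ℝ)
    (hψsub : Filter.Tendsto (fun τ : ℕ => ψ τ / τ) Filter.atTop (nhds 0))
    (E : ℕ → ℝ) (hE : ∀ t, E t = 0 ∨ E t = 1)
    (henv : ∀ k, 1 ≤ k → ∀ τ, 1 ≤ τ →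
      ∑ t ∈ Finset.Icc k (k + τ), E t < A * τ + ψ τ)
    (a : ℕ → ℝ) (ha : ∀ t, 0 ≤ a t ∧ a t ≤ Dmax * E t)
    (Q : ℕ → ℝ) (hQ0 : Q 0 = 0)
    (hQ : ∀ t, 1 ≤ t → Q t = max 0 (Q (t - 1) - (D - ε)) + a t) :
    {τ : ℕ | 1 ≤ τ ∧ ψ τ / τ ≤ (D - ε) / Dmax - A}.Nonempty ∧
    ∀ t, Q t <
      (sInf {τ : ℕ | 1 ≤ τ ∧ ψ τ / τ ≤ (D - ε) / Dmax - A} : ℕ) * (Dmax - D + ε)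
        + (D - ε) := by
  have hne := nonempty_setOf_div_le_of_tendsto_zero hψsub (sub_pos.mpr hA)
  refine ⟨hne, fun t => ?_⟩
  obtain ⟨hn, hψn⟩ := Nat.sInf_mem hne
  set n := sInf {τ : ℕ | 1 ≤ τ ∧ ψ τ / τ ≤ (D - ε) / Dmax - A}
  have haM : ∀ t, a t ≤ Dmax := fun t =>
    (ha t).2.trans <| mul_le_of_le_one_right hDmax.le <|
      (hE t).elim (fun h => h ▸ zero_le_one) le_of_eq
  have hblock : ∀ s, 1 ≤ s → ∑ u ∈ Icc s (s + n), a u < n * (D - ε) := fun s hs =>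
    sum_Icc_lt_of_envelope hDmax hn hψn (fun k hk => henv k hk n hn) (fun t => (ha t).2) hs
  rw [show Dmax - D + ε = Dmax - (D - ε) by ring]
  rcases Nat.eq_zero_or_pos t with rfl | ht
  · have : (0 : ℝ) ≤ n * (Dmax - (D - ε)) := mul_nonneg n.cast_nonneg (by linarith [hD.2, hε.1])
    rw [hQ0]
    linarith [hε.2]
  · obtain ⟨s, τ, hs, rfl, hQt⟩ := exists_eq_busy_window_of_lindley (by linarith) hQ0 hQ ht
    rw [hQt]
    exact sum_Icc_sub_mul_lt (by linarith) (by linarith) (fun t => (ha t).1) haM hblock τ hs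

/-- **Queue-boundedness step in the proof of Theorem 3.**
Let `E_t ∈ {0,1}` satisfy the deterministic envelope condition
`∑_{t=k}^{k+τ} E_t < A τ + ψ(τ)` for all `k ≥ 1` and `τ ≥ 1`, with
`A < (D − ε)/D_max` and sublinear `ψ ≥ 0`. Let arrivals satisfy
`0 ≤ a_t ≤ D_max E_t` and let the queue be `Q_0 = 0`,
`Q_t = max{0, Q_{t−1} − (D − ε)} + a_t`. Then
`τ_max = min{τ ∈ ℕ, τ ≥ 1 : ψ(τ)/τ ≤ (D − ε)/D_max − A}` is finite (the set is
nonempty) and `sup_{t ≥ 0} Q_t < τ_max (D_max − D + ε) + D − ε`. -/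
theorem erasure_queue_uniformly_bounded
    (Dmax D ε : ℝ) (hDmax : 0 < Dmax) (hD : 0 < D ∧ D ≤ Dmax) (hε : 0 < ε ∧ ε < D)
    (A : ℝ) (hA : A < (D - ε) / Dmax)
    (ψ : ℕ → ℝ) (hψ0 : ∀ τ, 0 ≤ ψ τ)
    (hψsub : Filter.Tendsto (fun τ : ℕ => ψ τ / τ) Filter.atTop (nhds 0))
    (E : ℕ → ℝ) (hE : ∀ t, E t = 0 ∨ E t = 1)
    (henv : ∀ k, 1 ≤ k → ∀ τ, 1 ≤ τ →
      ∑ t ∈ Finset.Icc k (k + τ), E t < A * τ + ψ τ)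
    (a : ℕ → ℝ) (ha : ∀ t, 0 ≤ a t ∧ a t ≤ Dmax * E t)
    (Q : ℕ → ℝ) (hQ0 : Q 0 = 0)
    (hQ : ∀ t, 1 ≤ t → Q t = max 0 (Q (t - 1) - (D - ε)) + a t) :
    {τ : ℕ | 1 ≤ τ ∧ ψ τ / τ ≤ (D - ε) / Dmax - A}.Nonempty ∧
    ∀ t, Q t <
      (sInf {τ : ℕ | 1 ≤ τ ∧ ψ τ / τ ≤ (D - ε) / Dmax - A} : ℕ) * (Dmax - D + ε)
        + (D - ε) :=
  erasure_queue_uniformly_bounded_general Dmax D ε hDmax hD hε A hA ψ hψsub E hE henv a ha Q hQ0 hQ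
end

section
/- Under the CA-OCRDC recursion with the doubly-adaptive adjustment policy, predictors satisfying Assumption 1, and a deterministic erasure sequence {E_t} satisfying the envelope condition with constant A < (D − ε)/D_max and sublinear ψ, for every horizon T ≥ 1, every sequence of source symbols, every D ∈ (0, D_max] and ε ∈ (0, D), the reconstructed sequence satisfies (1/T) ∑_{t=1}^T d(X_t, X̂_t) ≤ D + K/(T η) + (τ_max·(D_max − D + ε) + D − ε)/T, where K = L/ε + η(D_max − ε) − λ_0 and τ_max = min{τ ∈ ℕ : ψ(τ)/τ ≤ (D − ε)/D_max − A} is finite. (Theorem 3, CA-OCRDC case) -/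
/-!
The residual queue `Q` follows Lindley's recursion `Q (t+1) = (Q t - (D - ε))⁺ + δᶜʰ (t+1)`.
While `Q` stays above `D - ε` it drains by `D - ε` per step, whereas by the envelope condition
the channel adds less than `(D - ε) τ_max` over any `τ_max + 1` consecutive steps; so an
excursion of `Q` above `D - ε` lasts fewer than `τ_max` steps and
`Q T ≤ τ_max (D_max - D + ε) + D - ε`.
The multiplier stays below `L / ε + η (D_max - ε)`: once `λ_t > L / ε`, comparing the minimiser
with the candidate `X_t` forces `d(X_t, X̃_t) < ε`, so `λ` decreases.
Telescoping the update of `λ` bounds `∑ d(X_t, X̃_t) + ∑ δᵗᵍᵗ_t` by `T D + K / η`, and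
`∑ d(X_t, X̂_t)` exceeds that sum by exactly `Q T`.
-/

open Finset Filter Topology

namespace CAOCRDC

theorem nonempty_setOf_one_le_and_le_of_tendsto_zero {f : ℕ → ℝ}
    (hf : Tendsto f atTop (𝓝 0)) {c : ℝ} (hc : 0 < c) :
    {τ : ℕ | 1 ≤ τ ∧ f τ ≤ c}.Nonempty :=
  ((eventually_ge_atTop 1).and (hf.eventually_lt_const hc)).exists.imp
    fun _ h => ⟨h.1, h.2.le⟩

section Queue

variable {c δ Q : ℕ → ℝ} {r M : ℝ}

theorem target_le (hδ1 : δ 1 = 0) (hδ : ∀ t, 1 ≤ t → δ (t + 1) = min r (Q t)) (hr : 0 ≤ r) :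
    ∀ t, 1 ≤ t → δ t ≤ r
  | 1, _ => hδ1 ▸ hr
  | t + 2, _ => (hδ (t + 1) (by omega)).trans_le (min_le_left _ _)

theorem queue_succ_eq_max (hQ : ∀ t, Q t = ∑ i ∈ Icc 1 t, (c i - δ i)) (hδ1 : δ 1 = 0)
    (hδ : ∀ t, 1 ≤ t → δ (t + 1) = min r (Q t)) (hr : 0 ≤ r) (t : ℕ) :
    Q (t + 1) = max (Q t - r) 0 + c (t + 1) := by
  have hQ0 : Q 0 = 0 := by simp [hQ]
  have hδt : δ (t + 1) = min r (Q t) := by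
    rcases Nat.eq_zero_or_pos t with rfl | ht
    · rw [hδ1, hQ0, min_eq_right hr]
    · exact hδ t ht
  have hstep : Q (t + 1) = Q t + (c (t + 1) - δ (t + 1)) := by
    rw [hQ, hQ, sum_Icc_succ_top (by omega)]
  rw [hstep, hδt]
  rcases le_total r (Q t) with h | h
  · rw [min_eq_left h, max_eq_left (by linarith)]; ring
  · rw [min_eq_right h, max_eq_right (by linarith)]; ring

theorem queue_eq_sum_of_excursion (hQ : ∀ t, Q (t + 1) = max (Q t - r) 0 + c (t + 1))
    {s : ℕ} (hs : Q s ≤ r) :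
    ∀ n, (∀ j, 1 ≤ j → j ≤ n → r < Q (s + j)) →
      Q (s + 1 + n) = ∑ i ∈ Icc (s + 1) (s + 1 + n), c i - n * r
  | 0, _ => by simp [hQ, max_eq_right (sub_nonpos.mpr hs)]
  | n + 1, hexc => by
    have ih := queue_eq_sum_of_excursion hQ hs n fun j hj hjn => hexc j hj (by omega)
    have hgt : r < Q (s + 1 + n) := by
      simpa [add_assoc, add_comm 1 n] using hexc (n + 1) (by omega) le_rfl
    rw [← add_assoc, hQ, sum_Icc_succ_top (by omega), max_eq_left (by linarith), ih]
    push_cast; ring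

theorem queue_le_of_window (hQ0 : Q 0 = 0)
    (hQ : ∀ t, Q (t + 1) = max (Q t - r) 0 + c (t + 1))
    (hcM : ∀ t, c t ≤ M) (hr : 0 ≤ r) (hrM : r ≤ M) {τ : ℕ}
    (hwin : ∀ k, 1 ≤ k → ∑ i ∈ Icc k (k + τ), c i < r * τ) (T : ℕ) :
    Q T ≤ τ * (M - r) + r := by
  obtain ⟨t₀, ht₀T, hQt₀, hexc⟩ : ∃ t₀ ≤ T, Q t₀ ≤ r ∧ ∀ m, t₀ < m → m ≤ T → r < Q m :=
    ⟨Nat.findGreatest (Q · ≤ r) T, Nat.findGreatest_le T,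
      Nat.findGreatest_spec (P := (Q · ≤ r)) (Nat.zero_le T) (by simpa [hQ0]),
      fun m h₁ h₂ => not_le.mp (Nat.findGreatest_is_greatest h₁ h₂)⟩
  have hMr : (0 : ℝ) ≤ τ * (M - r) := mul_nonneg τ.cast_nonneg (sub_nonneg.mpr hrM)
  rcases ht₀T.eq_or_lt with hT | hT
  · rw [← hT]; linarith
  obtain ⟨n, rfl⟩ : ∃ n, T = t₀ + 1 + n := ⟨T - (t₀ + 1), by omega⟩
  -- an excursion of length `τ + 1` would drive `Q` below zero
  have hnτ : n < τ := by
    by_contra! hτn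
    have hQτ := queue_eq_sum_of_excursion hQ hQt₀ τ
      fun j hj hjn => hexc _ (by omega) (by omega)
    linarith [hwin (t₀ + 1) (by omega), hexc (t₀ + 1 + τ) (by omega) (by omega)]
  have hsum : ∑ i ∈ Icc (t₀ + 1) (t₀ + 1 + n), c i ≤ (n + 1) * M := by
    calc ∑ i ∈ Icc (t₀ + 1) (t₀ + 1 + n), c i ≤ ∑ _i ∈ Icc (t₀ + 1) (t₀ + 1 + n), M :=
          sum_le_sum fun i _ => hcM i
      _ = (n + 1) * M := by
        rw [sum_const, Nat.card_Icc, show t₀ + 1 + n + 1 - (t₀ + 1) = n + 1 by omega]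
        simp
  have hnτ' : (n : ℝ) + 1 ≤ τ := by exact_mod_cast hnτ
  rw [queue_eq_sum_of_excursion hQ hQt₀ n fun j hj hjn => hexc _ (by omega) (by omega)]
  nlinarith

end Queue

theorem sub_le_mul_of_eq_zero_or_eq_one {a b e M : ℝ} (he : e = 0 ∨ e = 1)
    (h0 : e = 0 → a = b)
    (ha : a ≤ M) (hb : 0 ≤ b) : a - b ≤ M * e := by
  rcases he with rfl | rfl
  · simp [h0 rfl]
  · linarith

theorem sum_Icc_lt_of_envelope {c E ψ : ℕ → ℝ} {M A r : ℝ} (hM : 0 < M)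
    (hc : ∀ t, 1 ≤ t → c t ≤ M * E t)
    (henv : ∀ k, 1 ≤ k → ∀ τ, 1 ≤ τ → ∑ t ∈ Icc k (k + τ), E t < A * τ + ψ τ)
    {τ : ℕ} (hτ : 1 ≤ τ) (hψτ : ψ τ / τ ≤ r / M - A) (k : ℕ) (hk : 1 ≤ k) :
    ∑ i ∈ Icc k (k + τ), c i < r * τ := by
  have hψ : ψ τ ≤ (r / M - A) * τ := (div_le_iff₀ (by exact_mod_cast hτ)).1 hψτ
  calc ∑ i ∈ Icc k (k + τ), c i ≤ ∑ i ∈ Icc k (k + τ), M * E i :=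
        sum_le_sum fun i hi => hc i (hk.trans (mem_Icc.1 hi).1)
    _ < M * (A * τ + ψ τ) := by
      rw [← mul_sum]; exact mul_lt_mul_of_pos_left (henv k hk τ hτ) hM
    _ ≤ M * (r / M * τ) := by gcongr; linarith
    _ = r * τ := by field_simp

theorem dist_lt_of_minimizes {α : Type*} {p dist : α → ℝ} {x y : α} {s L ε : ℝ}
    (hp : 0 ≤ p y ∧ p y ≤ 1) (hL : -Real.log (p x) < L) (hx : dist x = 0)
    (hmin : -Real.log (p y) + s * dist y ≤ -Real.log (p x) + s * dist x)
    (hs : 0 ≤ s) (hsL : L ≤ s * ε) : dist y < ε := by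
  have hlog : Real.log (p y) ≤ 0 := Real.log_nonpos hp.1 hp.2
  rw [hx, mul_zero] at hmin
  exact lt_of_mul_lt_mul_left (by linarith) hs

theorem multiplier_le {lam g δ : ℕ → ℝ} {Λ η Dmax D ε : ℝ} (hη : 0 < η)
    (hupd : ∀ t, 1 ≤ t → lam (t + 1) = lam t + η * (g t - D + δ t))
    (hg : ∀ t, g t ≤ Dmax) (hδ : ∀ t, 1 ≤ t → δ t ≤ D - ε)
    (hsmall : ∀ t, 1 ≤ t → Λ < lam t → g t < ε) (hlam₁ : lam 1 ≤ Λ + η * (Dmax - ε)) :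
    ∀ t, 1 ≤ t → lam t ≤ Λ + η * (Dmax - ε) := by
  intro t ht
  induction t, ht using Nat.le_induction with
  | base => exact hlam₁
  | succ t ht ih =>
    rw [hupd t ht]
    have := hδ t ht
    rcases le_or_gt (lam t) Λ with hlam | hlam
    · nlinarith [hg t]
    · nlinarith [hsmall t ht hlam]

theorem sum_eq_of_multiplier_update {lam a b δ Q : ℕ → ℝ} {η D : ℝ} (hη : η ≠ 0)
    (hupd : ∀ t, 1 ≤ t → lam (t + 1) = lam t + η * (a t - D + δ t))
    (hQ : ∀ t, Q t = ∑ i ∈ Icc 1 t, ((b i - a i) - δ i)) {T : ℕ} (hT : 1 ≤ T) :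
    ∑ t ∈ Icc 1 T, b t = T * D + (lam (T + 1) - lam 1) / η + Q T := by
  have htel : lam (T + 1) - lam 1 = η * ∑ t ∈ Icc 1 T, (a t - D + δ t) := by
    rw [← sum_Icc_sub hT, mul_sum]
    exact sum_congr rfl fun t ht => by rw [hupd t (mem_Icc.1 ht).1]; ring
  rw [htel, mul_div_cancel_left₀ _ hη, hQ]
  simp only [sum_add_distrib, sum_sub_distrib, sum_const, Nat.card_Icc, nsmul_eq_mul]
  push_cast; ring

end CAOCRDC

open CAOCRDC

theorem ca_ocrdc_deterministic_erasure_guarantee_general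
    {𝒳 : Type*}
    (Dmax : ℝ) (hDmax : 0 < Dmax)
    (d : 𝒳 → 𝒳 → ℝ) (hd : ∀ x y, 0 ≤ d x y ∧ d x y ≤ Dmax) (hdd : ∀ x, d x x = 0)
    (X Xtil Xhat : ℕ → 𝒳) (p : ℕ → 𝒳 → ℝ)
    (hp : ∀ t x, 0 < p t x ∧ p t x ≤ 1)
    (L : ℝ) (hL : ∀ t x, -Real.log (p t x) < L)
    (D ε : ℝ) (hD : 0 < D ∧ D ≤ Dmax) (hε : 0 < ε ∧ ε < D)
    (E : ℕ → ℝ) (hE : ∀ t, E t = 0 ∨ E t = 1)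
    (A : ℝ) (hA : A < (D - ε) / Dmax)
    (ψ : ℕ → ℝ)
    (hψsub : Filter.Tendsto (fun τ : ℕ => ψ τ / τ) Filter.atTop (nhds 0))
    (henv : ∀ k, 1 ≤ k → ∀ τ, 1 ≤ τ →
      ∑ t ∈ Finset.Icc k (k + τ), E t < A * τ + ψ τ)
    (η : ℝ) (hη : 0 < η)
    (lam₀ : ℝ) (hlam₀ : 0 < lam₀ ∧ lam₀ ≤ L / ε + η * (Dmax - ε))
    (lam s δtgt Q : ℕ → ℝ) (hinit : lam 1 = lam₀)
    (hs : ∀ t, s t = max 0 (lam t))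
    (hmin : ∀ t, 1 ≤ t → ∀ x,
      -Real.log (p t (Xtil t)) + s t * d (X t) (Xtil t)
        ≤ -Real.log (p t x) + s t * d (X t) x)
    (hupd : ∀ t, 1 ≤ t →
      lam (t + 1) = lam t + η * (d (X t) (Xtil t) - D + δtgt t))
    (hrec0 : ∀ t, 1 ≤ t → E t = 0 → Xhat t = Xtil t)
    (hQ : ∀ t, Q t = ∑ i ∈ Finset.Icc 1 t,
      ((d (X i) (Xhat i) - d (X i) (Xtil i)) - δtgt i))
    (hδ1 : δtgt 1 = 0)
    (hδ : ∀ t, 1 ≤ t → δtgt (t + 1) = min (D - ε) (Q t))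
    (T : ℕ) (hT : 1 ≤ T) :
    {τ : ℕ | 1 ≤ τ ∧ ψ τ / τ ≤ (D - ε) / Dmax - A}.Nonempty ∧
    (1 / (T : ℝ)) * ∑ t ∈ Finset.Icc 1 T, d (X t) (Xhat t)
      ≤ D + (L / ε + η * (Dmax - ε) - lam₀) / ((T : ℝ) * η)
        + ((sInf {τ : ℕ | 1 ≤ τ ∧ ψ τ / τ ≤ (D - ε) / Dmax - A} : ℕ)
            * (Dmax - D + ε) + D - ε) / T := by
  obtain ⟨-, hDle⟩ := hD
  obtain ⟨hε0, hεD⟩ := hε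
  have hS := nonempty_setOf_one_le_and_le_of_tendsto_zero hψsub (c := (D - ε) / Dmax - A)
    (by linarith)
  refine ⟨hS, ?_⟩
  obtain ⟨hτ, hψτ⟩ := Nat.sInf_mem hS
  have hexcess : ∀ t, 1 ≤ t → d (X t) (Xhat t) - d (X t) (Xtil t) ≤ Dmax * E t := fun t ht =>
    sub_le_mul_of_eq_zero_or_eq_one (hE t) (fun h => by rw [hrec0 t ht h]) (hd _ _).2 (hd _ _).1
  have hQT := queue_le_of_window (M := Dmax) (by simp [hQ])
    (queue_succ_eq_max hQ hδ1 hδ (by linarith))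
    (fun t => by linarith [(hd (X t) (Xhat t)).2, (hd (X t) (Xtil t)).1]) (by linarith)
    (by linarith) (sum_Icc_lt_of_envelope hDmax hexcess henv hτ hψτ) T
  have hsmall : ∀ t, 1 ≤ t → L / ε < lam t → d (X t) (Xtil t) < ε := fun t ht hlam =>
    dist_lt_of_minimizes ⟨(hp t _).1.le, (hp t _).2⟩ (hL t (X t)) (hdd (X t))
      (hmin t ht (X t))
      (hs t ▸ le_max_left _ _) ((div_le_iff₀ hε0).1 (hlam.le.trans (hs t ▸ le_max_right _ _)))
  have hlam := multiplier_le hη hupd (fun t => (hd _ _).2) (target_le hδ1 hδ (by linarith))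
    hsmall (hinit ▸ hlam₀.2) (T + 1) (by omega)
  have hT' : (0 : ℝ) < T := by exact_mod_cast hT
  calc (1 / (T : ℝ)) * ∑ t ∈ Icc 1 T, d (X t) (Xhat t)
      = D + (lam (T + 1) - lam₀) / (T * η) + Q T / T := by
        rw [sum_eq_of_multiplier_update hη.ne' hupd hQ hT, hinit]; field_simp
    _ ≤ _ := by gcongr; linarith

/-- **Theorem 3, CA-OCRDC case (deterministic erasure channel).**
Under the CA-OCRDC recursion with the doubly-adaptive adjustment policy, predictors
satisfying Assumption 1, and a deterministic erasure sequence `{E_t} ⊆ {0,1}`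
satisfying the envelope condition `∑_{t=k}^{k+τ} E_t < A τ + ψ(τ)` with
`A < (D − ε)/D_max` and sublinear `ψ`, for every horizon `T ≥ 1`, every source
sequence, every `D ∈ (0, D_max]` and `ε ∈ (0, D)`:
`(1/T) ∑_{t=1}^T d(X_t, X̂_t) ≤ D + K/(T η) + (τ_max (D_max − D + ε) + D − ε)/T`,
where `K = L/ε + η(D_max − ε) − λ₀` and
`τ_max = min{τ ≥ 1 : ψ(τ)/τ ≤ (D − ε)/D_max − A}` is finite. -/
theorem ca_ocrdc_deterministic_erasure_guarantee
    {𝒳 : Type*} [Fintype 𝒳] [Nonempty 𝒳]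
    (Dmax : ℝ) (hDmax : 0 < Dmax)
    (d : 𝒳 → 𝒳 → ℝ) (hd : ∀ x y, 0 ≤ d x y ∧ d x y ≤ Dmax) (hdd : ∀ x, d x x = 0)
    (X Xtil Xhat : ℕ → 𝒳) (p : ℕ → 𝒳 → ℝ)
    (hp : ∀ t x, 0 < p t x ∧ p t x ≤ 1) (hp1 : ∀ t, ∑ x, p t x = 1)
    (L : ℝ) (hL : ∀ t x, -Real.log (p t x) < L)
    (D ε : ℝ) (hD : 0 < D ∧ D ≤ Dmax) (hε : 0 < ε ∧ ε < D)
    (E : ℕ → ℝ) (hE : ∀ t, E t = 0 ∨ E t = 1)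
    (A : ℝ) (hA : A < (D - ε) / Dmax)
    (ψ : ℕ → ℝ) (hψ0 : ∀ τ, 0 ≤ ψ τ)
    (hψsub : Filter.Tendsto (fun τ : ℕ => ψ τ / τ) Filter.atTop (nhds 0))
    (henv : ∀ k, 1 ≤ k → ∀ τ, 1 ≤ τ →
      ∑ t ∈ Finset.Icc k (k + τ), E t < A * τ + ψ τ)
    (η : ℝ) (hη : 0 < η)
    (lam₀ : ℝ) (hlam₀ : 0 < lam₀ ∧ lam₀ ≤ L / ε + η * (Dmax - ε))
    (lam s δtgt Q : ℕ → ℝ) (hinit : lam 1 = lam₀)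
    (hs : ∀ t, s t = max 0 (lam t))
    (hmin : ∀ t, 1 ≤ t → ∀ x,
      -Real.log (p t (Xtil t)) + s t * d (X t) (Xtil t)
        ≤ -Real.log (p t x) + s t * d (X t) x)
    (hupd : ∀ t, 1 ≤ t →
      lam (t + 1) = lam t + η * (d (X t) (Xtil t) - D + δtgt t))
    (hrec0 : ∀ t, 1 ≤ t → E t = 0 → Xhat t = Xtil t)
    (hrec1 : ∀ t, 1 ≤ t → E t = 1 → d (X t) (Xtil t) ≤ d (X t) (Xhat t))
    (hQ0 : Q 0 = 0)
    (hQ : ∀ t, Q t = ∑ i ∈ Finset.Icc 1 t,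
      ((d (X i) (Xhat i) - d (X i) (Xtil i)) - δtgt i))
    (hδ1 : δtgt 1 = 0)
    (hδ : ∀ t, 1 ≤ t → δtgt (t + 1) = min (D - ε) (Q t))
    (T : ℕ) (hT : 1 ≤ T) :
    {τ : ℕ | 1 ≤ τ ∧ ψ τ / τ ≤ (D - ε) / Dmax - A}.Nonempty ∧
    (1 / (T : ℝ)) * ∑ t ∈ Finset.Icc 1 T, d (X t) (Xhat t)
      ≤ D + (L / ε + η * (Dmax - ε) - lam₀) / ((T : ℝ) * η)
        + ((sInf {τ : ℕ | 1 ≤ τ ∧ ψ τ / τ ≤ (D - ε) / Dmax - A} : ℕ)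
            * (Dmax - D + ε) + D - ε) / T :=
  ca_ocrdc_deterministic_erasure_guarantee_general Dmax hDmax d hd hdd X Xtil Xhat p hp L hL D ε hD
    hε E hE A hA ψ hψsub henv η hη lam₀ hlam₀ lam s δtgt Q hinit hs hmin hupd hrec0 hQ hδ1 hδ T hT
end

section
/- Under the CA-OCSC recursion with the doubly-adaptive adjustment policy and a deterministic erasure sequence {E_t} satisfying the envelope condition with constant A < D − ε and sublinear ψ, for every horizon T ≥ 1, every sequence of source symbols, every sequence of predictive distributions, every D ∈ (0,1] and ε ∈ (0, D), the reconstructed sequence satisfies (1/T) ∑_{t=1}^T 𝟙{X̂_t ≠ X_t} ≤ D + K/(T η) + (τ_max·(1 − D + ε) + D − ε)/T, where K = η(1 − ε) + λ_0 and τ_max = min{τ ∈ ℕ : ψ(τ)/τ ≤ (D − ε) − A} is finite. (Theorem 3, CA-OCSC case with D_max = 1) -/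
open scoped Classical

set_option maxHeartbeats 1000000

/-- **Theorem 3, CA-OCSC case (deterministic erasure channel, outage distortion,
`D_max = 1`).**
Under the CA-OCSC recursion with the doubly-adaptive adjustment policy and a
deterministic erasure sequence `{E_t} ⊆ {0,1}` satisfying the envelope condition
`∑_{t=k}^{k+τ} E_t < A τ + ψ(τ)` with `A < D − ε` and sublinear `ψ`, for every
horizon `T ≥ 1`, every source sequence, every sequence of predictive
distributions, every `D ∈ (0,1]` and `ε ∈ (0, D)`:
`(1/T) ∑_{t=1}^T 𝟙{X̂_t ≠ X_t} ≤ D + K/(T η) + (τ_max (1 − D + ε) + D − ε)/T`,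
where `K = η(1 − ε) + λ₀` and `τ_max = min{τ ≥ 1 : ψ(τ)/τ ≤ (D − ε) − A}` is
finite. -/
theorem ca_ocsc_deterministic_erasure_guarantee
    {𝒳 : Type*} [Fintype 𝒳] [Nonempty 𝒳]
    (X Xhat : ℕ → 𝒳) (p : ℕ → 𝒳 → ℝ)
    (hp0 : ∀ t x, 0 ≤ p t x) (hp1 : ∀ t, ∑ x, p t x = 1)
    (E : ℕ → ℝ) (hE : ∀ t, E t = 0 ∨ E t = 1)
    (D ε : ℝ) (hD : 0 < D ∧ D ≤ 1) (hε : 0 < ε ∧ ε < D)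
    (A : ℝ) (hA : A < D - ε)
    (ψ : ℕ → ℝ) (hψ0 : ∀ τ, 0 ≤ ψ τ)
    (hψsub : Filter.Tendsto (fun τ : ℕ => ψ τ / τ) Filter.atTop (nhds 0))
    (henv : ∀ k, 1 ≤ k → ∀ τ, 1 ≤ τ →
      ∑ t ∈ Finset.Icc k (k + τ), E t < A * τ + ψ τ)
    (η : ℝ) (hη : 0 < η)
    (lam₀ : ℝ) (hlam₀ : 0 < lam₀)
    (lam s δtgt Q : ℕ → ℝ) (hinit : lam 1 = lam₀)
    (hs : ∀ t, s t = max 0 (lam t))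
    (hupd : ∀ t, 1 ≤ t →
      lam (t + 1) = lam t
        - η * ((1 - E t) * (if p t (X t) < s t then (1 : ℝ) else 0) - D + δtgt t))
    (hrec : ∀ t, 1 ≤ t → E t = 0 → s t ≤ p t (X t) → Xhat t = X t)
    (hQ0 : Q 0 = 0)
    (hQ : ∀ t, Q t = ∑ i ∈ Finset.Icc 1 t, (E i - δtgt i))
    (hδ1 : δtgt 1 = 0)
    (hδ : ∀ t, 1 ≤ t → δtgt (t + 1) = min (D - ε) (Q t))
    (T : ℕ) (hT : 1 ≤ T) :
    {τ : ℕ | 1 ≤ τ ∧ ψ τ / τ ≤ (D - ε) - A}.Nonempty ∧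
    (1 / (T : ℝ)) * ∑ t ∈ Finset.Icc 1 T, (if Xhat t ≠ X t then (1 : ℝ) else 0)
      ≤ D + (η * (1 - ε) + lam₀) / ((T : ℝ) * η)
        + ((sInf {τ : ℕ | 1 ≤ τ ∧ ψ τ / τ ≤ (D - ε) - A} : ℕ)
            * (1 - D + ε) + D - ε) / T := by
  classical
  obtain ⟨hD0, hD1⟩ := hD
  obtain ⟨hε0, hεD⟩ := hε
  have hβ0 : (0:ℝ) < D - ε := by linarith
  have hβ1 : D - ε < 1 := by linarith
  -- the set is nonempty
  have hSne : {τ : ℕ | 1 ≤ τ ∧ ψ τ / τ ≤ (D - ε) - A}.Nonempty := by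
    have h1 : ∀ᶠ τ : ℕ in Filter.atTop, ψ τ / τ < (D - ε) - A :=
      hψsub.eventually_lt_const (by linarith)
    have h2 : ∀ᶠ τ : ℕ in Filter.atTop, 1 ≤ τ := Filter.eventually_ge_atTop 1
    obtain ⟨τ, hτ1, hτ2⟩ := (h2.and h1).exists
    exact ⟨τ, hτ1, le_of_lt hτ2⟩
  refine ⟨hSne, ?_⟩
  set τm := sInf {τ : ℕ | 1 ≤ τ ∧ ψ τ / τ ≤ (D - ε) - A} with hτmdef
  have hτmem := Nat.sInf_mem hSne
  have hτm1 : 1 ≤ τm := hτmem.1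
  have hτmR : (1:ℝ) ≤ (τm:ℝ) := by exact_mod_cast hτm1
  have hψτm : ψ τm ≤ (τm:ℝ) * ((D - ε) - A) := by
    have h2 := hτmem.2
    have hpos : (0:ℝ) < (τm:ℝ) := by linarith
    rw [div_le_iff₀ hpos] at h2
    linarith [h2]
  -- E facts
  have hE0 : ∀ t, 0 ≤ E t := by intro t; rcases hE t with h | h <;> rw [h] <;> norm_num
  have hE1 : ∀ t, E t ≤ 1 := by intro t; rcases hE t with h | h <;> rw [h] <;> norm_num
  -- δtgt ≤ D - ε
  have hδle : ∀ t, 1 ≤ t → δtgt t ≤ D - ε := by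
    intro t ht
    obtain ⟨u, rfl⟩ : ∃ u, t = u + 1 := ⟨t - 1, (Nat.succ_pred_eq_of_pos ht).symm⟩
    rcases Nat.eq_zero_or_pos u with rfl | hu
    · rw [hδ1]; linarith
    · rw [hδ u hu]; exact min_le_left _ _
  -- Q recursion
  have hQrec : ∀ t, Q (t + 1) = Q t + (E (t + 1) - δtgt (t + 1)) := by
    intro t
    rw [hQ (t + 1), hQ t, Finset.sum_Icc_succ_top (Nat.succ_le_succ (Nat.zero_le t))]
  -- Q nonneg
  have hQnn : ∀ t, 0 ≤ Q t := by
    intro t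
    induction t with
    | zero => rw [hQ0]
    | succ u ih =>
      rcases Nat.eq_zero_or_pos u with rfl | hu
      · rw [hQrec 0, hQ0, hδ1]; linarith [hE0 1]
      · have := hQrec u
        rw [hδ u hu] at this
        have hmin : min (D - ε) (Q u) ≤ Q u := min_le_right _ _
        rw [this]; linarith [hE0 (u + 1)]
  -- δtgt nonneg
  have hδnn : ∀ t, 1 ≤ t → 0 ≤ δtgt t := by
    intro t ht
    obtain ⟨u, rfl⟩ : ∃ u, t = u + 1 := ⟨t - 1, (Nat.succ_pred_eq_of_pos ht).symm⟩
    rcases Nat.eq_zero_or_pos u with rfl | hu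
    · rw [hδ1]
    · rw [hδ u hu]; exact le_min (le_of_lt hβ0) (hQnn u)
  -- KEY: queue bound
  have hM1 : (1:ℝ) ≤ (D - ε) + (τm:ℝ) * (1 - (D - ε)) := by nlinarith
  have hQbound : ∀ t, Q t ≤ (D - ε) + (τm:ℝ) * (1 - (D - ε)) := by
    intro t
    by_cases hQt : Q t ≤ 1
    · linarith
    push_neg at hQt
    set r := Nat.findGreatest (fun k => Q k ≤ 1) t with hrdef
    have hrle : r ≤ t := Nat.findGreatest_le t
    have hQr : Q r ≤ 1 := Nat.findGreatest_spec (P := fun k => Q k ≤ 1) (Nat.zero_le t) (show Q 0 ≤ 1 by rw [hQ0]; norm_num)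
    have hgt : ∀ j, r < j → j ≤ t → 1 < Q j := by
      intro j h1 h2
      exact lt_of_not_ge (Nat.findGreatest_is_greatest h1 h2)
    have hrt : r < t := by
      rcases lt_or_eq_of_le hrle with h | h
      · exact h
      · exfalso; rw [h] at hQr; linarith
    have key : ¬ Q (r + 1) ≤ 1 := not_le.2 (hgt (r + 1) (Nat.lt_succ_self r) hrt)
    have hr1 : 1 ≤ r := by
      by_contra h
      push_neg at h
      interval_cases r
      have : Q 1 = E 1 := by rw [hQrec 0, hQ0, hδ1]; ring
      exact key (by rw [this]; exact hE1 1)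
    have hQrβ : D - ε < Q r := by
      by_contra h
      push_neg at h
      have hmin : δtgt (r + 1) = Q r := by rw [hδ r hr1]; exact min_eq_right h
      have : Q (r + 1) = E (r + 1) := by rw [hQrec r, hmin]; ring
      exact key (by rw [this]; exact hE1 (r + 1))
    have hδβ : ∀ j, r ≤ j → j < t → δtgt (j + 1) = D - ε := by
      intro j hj hjt
      have hQjβ : D - ε ≤ Q j := by
        rcases lt_or_eq_of_le hj with h | h
        · linarith [hgt j h (le_of_lt hjt)]
        · rw [← h]; exact le_of_lt hQrβ
      rw [hδ j (le_trans hr1 hj)]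
      exact min_eq_left hQjβ
    have hQsum : ∀ u, r ≤ u → u ≤ t →
        Q u = Q r + ∑ i ∈ Finset.Ioc r u, (E i - (D - ε)) := by
      intro u hru hut
      have hsplit := Finset.sum_Ioc_consecutive (fun i => E i - δtgt i)
        (Nat.zero_le r) hru
      have hQu : Q u = ∑ i ∈ Finset.Ioc 0 u, (E i - δtgt i) := by
        rw [hQ u, ← Finset.Icc_add_one_left_eq_Ioc]; rfl
      have hQr' : Q r = ∑ i ∈ Finset.Ioc 0 r, (E i - δtgt i) := by
        rw [hQ r, ← Finset.Icc_add_one_left_eq_Ioc]; rfl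
      have hcongr : ∑ i ∈ Finset.Ioc r u, (E i - δtgt i)
          = ∑ i ∈ Finset.Ioc r u, (E i - (D - ε)) := by
        apply Finset.sum_congr rfl
        intro i hi
        rw [Finset.mem_Ioc] at hi
        obtain ⟨v, rfl⟩ : ∃ v, i = v + 1 :=
          ⟨i - 1, (Nat.succ_pred_eq_of_pos (by omega)).symm⟩
        rw [hδβ v (by omega) (by omega)]
      rw [hQu, hQr', ← hsplit, hcongr]
    rcases Nat.lt_or_ge (t - r) τm with hcase | hcase
    · -- short excursion: crude step bound
      have hsum := hQsum t hrle le_rfl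
      have hcard : (Finset.Ioc r t).card = t - r := Nat.card_Ioc r t
      have hbd : ∑ i ∈ Finset.Ioc r t, (E i - (D - ε))
          ≤ ((t - r : ℕ) : ℝ) * (1 - (D - ε)) := by
        calc ∑ i ∈ Finset.Ioc r t, (E i - (D - ε))
            ≤ ∑ _i ∈ Finset.Ioc r t, (1 - (D - ε)) :=
              Finset.sum_le_sum (fun i _ => by linarith [hE1 i])
          _ = ((t - r : ℕ) : ℝ) * (1 - (D - ε)) := by
              rw [Finset.sum_const, hcard, nsmul_eq_mul]
      have htr : ((t - r : ℕ) : ℝ) ≤ (τm:ℝ) - 1 := by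
        have : t - r + 1 ≤ τm := hcase
        have := (Nat.cast_le (α := ℝ)).mpr this
        push_cast at this
        linarith
      rw [hsum]
      nlinarith
    · -- long excursion: contradiction via envelope
      exfalso
      set u := r + τm with hudef
      have hut : u ≤ t := by omega
      have hsum := hQsum u (by omega) hut
      have hIoc : Finset.Ioc r u = Finset.Icc (r + 1) u := (Finset.Icc_add_one_left_eq_Ioc r u).symm
      have hEsub : ∑ i ∈ Finset.Icc (r + 1) u, E i
          ≤ ∑ i ∈ Finset.Icc (r + 1) (r + 1 + τm), E i := by
        apply Finset.sum_le_sum_of_subset_of_nonneg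
        · exact Finset.Icc_subset_Icc_right (by omega)
        · intro i _ _; exact hE0 i
      have henv' := henv (r + 1) (by omega) τm hτm1
      have hcardu : (Finset.Ioc r u).card = τm := by rw [Nat.card_Ioc]; omega
      have hsplit2 : ∑ i ∈ Finset.Ioc r u, (E i - (D - ε))
          = (∑ i ∈ Finset.Ioc r u, E i) - (τm:ℝ) * (D - ε) := by
        rw [Finset.sum_sub_distrib, Finset.sum_const, hcardu, nsmul_eq_mul]
      have hEbound : ∑ i ∈ Finset.Ioc r u, E i < (τm:ℝ) * (D - ε) := by
        calc ∑ i ∈ Finset.Ioc r u, E i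
            = ∑ i ∈ Finset.Icc (r + 1) u, E i := by rw [hIoc]
          _ ≤ ∑ i ∈ Finset.Icc (r + 1) (r + 1 + τm), E i := hEsub
          _ < A * τm + ψ τm := henv'
          _ ≤ A * τm + (τm:ℝ) * ((D - ε) - A) := by linarith
          _ = (τm:ℝ) * (D - ε) := by ring
      have hQu1 : Q u ≤ 1 := by rw [hsum, hsplit2]; linarith
      have : 1 < Q u := hgt u (by omega) hut
      linarith
  -- lambda lower bound
  have hlamlb : ∀ t, 1 ≤ t → -(η * (1 - ε)) ≤ lam t := by
    intro t
    induction t with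
    | zero => omega
    | succ u ih =>
      intro _
      rcases Nat.eq_zero_or_pos u with rfl | hu
      · rw [hinit]; nlinarith
      · have ih' := ih hu
        have hupd' := hupd u hu
        set g : ℝ := (1 - E u) * (if p u (X u) < s u then (1:ℝ) else 0) with hgdef
        have hg0 : 0 ≤ g := by
          apply mul_nonneg
          · linarith [hE1 u]
          · split <;> norm_num
        have hg1 : g ≤ 1 := by
          have h1 : (1 - E u) ≤ 1 := by linarith [hE0 u]
          have h2 : (if p u (X u) < s u then (1:ℝ) else 0) ≤ 1 := by split <;> norm_num
          have h2' : 0 ≤ (if p u (X u) < s u then (1:ℝ) else 0) := by split <;> norm_num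
          calc g ≤ 1 * 1 := mul_le_mul h1 h2 h2' zero_le_one
            _ = 1 := by ring
        rcases le_or_gt 0 (lam u) with hpos | hneg
        · have hd := hδle u hu
          rw [hupd']
          nlinarith
        · have hsz : s u = 0 := by rw [hs u]; exact max_eq_left (le_of_lt hneg)
          have hind : (if p u (X u) < s u then (1:ℝ) else 0) = 0 := by
            rw [if_neg]; rw [hsz]; exact not_lt.2 (hp0 u (X u))
          have hgz : g = 0 := by rw [hgdef, hind, mul_zero]
          have hd := hδle u hu
          rw [hupd', hgz]
          nlinarith
  -- telescoping
  have htel : ∀ n : ℕ, lam (n + 1) = lam 1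
      - η * ∑ t ∈ Finset.Icc 1 n,
        ((1 - E t) * (if p t (X t) < s t then (1:ℝ) else 0) - D + δtgt t) := by
    intro n
    induction n with
    | zero => simp
    | succ u ih =>
      rw [hupd (u + 1) (Nat.succ_le_succ (Nat.zero_le u)),
        Finset.sum_Icc_succ_top (Nat.succ_le_succ (Nat.zero_le u)), ih]
      ring
  -- pointwise indicator bound
  have hpw : ∀ t ∈ Finset.Icc 1 T, (if Xhat t ≠ X t then (1:ℝ) else 0)
      ≤ ((1 - E t) * (if p t (X t) < s t then (1:ℝ) else 0) - D + δtgt t) + D - δtgt t + E t := by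
    intro t ht
    rw [Finset.mem_Icc] at ht
    have ht1 : 1 ≤ t := ht.1
    have hL1 : (if Xhat t ≠ X t then (1:ℝ) else 0) ≤ 1 := by split <;> norm_num
    have hL0 : 0 ≤ (if Xhat t ≠ X t then (1:ℝ) else 0) := by split <;> norm_num
    rcases hE t with hEt | hEt
    · by_cases hlt : p t (X t) < s t
      · rw [hEt, if_pos hlt]; ring_nf; linarith
      · have hXX : Xhat t = X t := hrec t ht1 hEt (not_lt.1 hlt)
        rw [if_neg (by simp [hXX]), hEt, if_neg hlt]
        ring_nf; linarith
    · have hnn : 0 ≤ (1 - E t) * (if p t (X t) < s t then (1:ℝ) else 0) := by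
        apply mul_nonneg
        · linarith [hE1 t]
        · split <;> norm_num
      rw [hEt]; linarith
  -- assemble sum bound
  have hsumb : ∑ t ∈ Finset.Icc 1 T, (if Xhat t ≠ X t then (1:ℝ) else 0)
      ≤ (T:ℝ) * D + (η * (1 - ε) + lam₀) / η
        + ((D - ε) + (τm:ℝ) * (1 - (D - ε))) := by
    have h1 : ∑ t ∈ Finset.Icc 1 T, (if Xhat t ≠ X t then (1:ℝ) else 0)
        ≤ ∑ t ∈ Finset.Icc 1 T,
          (((1 - E t) * (if p t (X t) < s t then (1:ℝ) else 0) - D + δtgt t)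
            + D - δtgt t + E t) := Finset.sum_le_sum hpw
    have hsplit : ∑ t ∈ Finset.Icc 1 T,
          (((1 - E t) * (if p t (X t) < s t then (1:ℝ) else 0) - D + δtgt t)
            + D - δtgt t + E t)
        = (∑ t ∈ Finset.Icc 1 T,
            ((1 - E t) * (if p t (X t) < s t then (1:ℝ) else 0) - D + δtgt t))
          + (T:ℝ) * D + ∑ t ∈ Finset.Icc 1 T, (E t - δtgt t) := by
      have hc : (Finset.Icc 1 T).card = T := by rw [Nat.card_Icc]; omega
      calc ∑ t ∈ Finset.Icc 1 T,
            (((1 - E t) * (if p t (X t) < s t then (1:ℝ) else 0) - D + δtgt t)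
              + D - δtgt t + E t)
          = ∑ t ∈ Finset.Icc 1 T,
            ((((1 - E t) * (if p t (X t) < s t then (1:ℝ) else 0) - D + δtgt t)
              + (E t - δtgt t)) + D) := by
            apply Finset.sum_congr rfl; intro t _; ring
        _ = (∑ t ∈ Finset.Icc 1 T,
              (((1 - E t) * (if p t (X t) < s t then (1:ℝ) else 0) - D + δtgt t)
                + (E t - δtgt t))) + (T:ℝ) * D := by
            rw [Finset.sum_add_distrib, Finset.sum_const, hc, nsmul_eq_mul]
        _ = _ := by rw [Finset.sum_add_distrib]; ring
    have htel' : ∑ t ∈ Finset.Icc 1 T,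
          ((1 - E t) * (if p t (X t) < s t then (1:ℝ) else 0) - D + δtgt t)
        = (lam 1 - lam (T + 1)) / η := by
      have h := htel T
      rw [eq_div_iff hη.ne']
      linear_combination h
    have hlam' : lam 1 - lam (T + 1) ≤ lam₀ + η * (1 - ε) := by
      have := hlamlb (T + 1) (Nat.succ_le_succ (Nat.zero_le T))
      rw [hinit]; linarith
    have hQT : ∑ t ∈ Finset.Icc 1 T, (E t - δtgt t) = Q T := (hQ T).symm
    have hdiv : (lam 1 - lam (T + 1)) / η ≤ (η * (1 - ε) + lam₀) / η :=
      (div_le_div_iff_of_pos_right hη).mpr (by linarith)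
    rw [hsplit, htel', hQT] at h1
    have hQb := hQbound T
    linarith
  -- final division by T
  have hT0 : (0:ℝ) < (T:ℝ) := by exact_mod_cast hT
  have hmain := mul_le_mul_of_nonneg_left hsumb (le_of_lt (by positivity : (0:ℝ) < 1 / (T:ℝ)))
  have heq : (1 / (T:ℝ)) * ((T:ℝ) * D + (η * (1 - ε) + lam₀) / η
        + ((D - ε) + (τm:ℝ) * (1 - (D - ε))))
      = D + (η * (1 - ε) + lam₀) / ((T:ℝ) * η)
        + ((τm:ℝ) * (1 - D + ε) + D - ε) / (T:ℝ) := by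
    have hTne : (T:ℝ) ≠ 0 := ne_of_gt hT0
    have h2 : 1 / (T:ℝ) * ((T:ℝ) * D) = D := by
      rw [one_div_mul_eq_div, mul_comm, mul_div_assoc, div_self hTne, mul_one]
    rw [mul_add, mul_add, h2]
    ring
  rw [heq] at hmain
  exact hmain
end

section
/- Consider CA-OCRDC driven over an infinite horizon by a memoryless time-varying erasure channel: the erasure indicators E_1, E_2, … are independent with P(E_t = 1) = e_t, the probabilities satisfy the envelope condition with A < (D − ε)/D_max and nondecreasing sublinear ψ, and all algorithm quantities are random variables satisfying the CA-OCRDC recursions pointwise, with Assumption 1 holding surely. Then almost surely, limsup_{T → ∞} (1/T) ∑_{t=1}^T d(X_t, X̂_t) ≤ D. (Theorem 4, asymptotic almost-sure guarantee) -/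
set_option maxHeartbeats 1000000

open MeasureTheory ProbabilityTheory Filter


lemma aux_linbound (u : ℕ → ℝ)
    (h : Tendsto (fun k : ℕ => u k / k) atTop (nhds 0)) {δ : ℝ} (hδ : 0 < δ) :
    ∃ C : ℝ, 0 ≤ C ∧ ∀ k : ℕ, |u k| ≤ δ * k + C := by
  obtain ⟨N, hN⟩ := Metric.tendsto_atTop.mp h δ hδ
  refine ⟨∑ i ∈ Finset.range (N + 1), |u i|,
    Finset.sum_nonneg fun i _ => abs_nonneg _, ?_⟩
  intro k
  by_cases hk : k ≤ N
  · have h1 : |u k| ≤ ∑ i ∈ Finset.range (N + 1), |u i| :=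
      Finset.single_le_sum (fun i _ => abs_nonneg (u i)) (Finset.mem_range.mpr (by omega))
    have h2 : 0 ≤ δ * k := mul_nonneg hδ.le (Nat.cast_nonneg k)
    linarith
  · push_neg at hk
    have hk0 : (0:ℝ) < k := by exact_mod_cast Nat.pos_of_ne_zero (by omega)
    have h3 := hN k (le_of_lt hk)
    rw [Real.dist_eq, sub_zero, abs_div, Nat.abs_cast, div_lt_iff₀ hk0] at h3
    have h4 : 0 ≤ ∑ i ∈ Finset.range (N + 1), |u i| :=
      Finset.sum_nonneg fun i _ => abs_nonneg _
    linarith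


lemma aux_slln {Ω : Type*} [MeasurableSpace Ω] (μ : Measure Ω) [IsProbabilityMeasure μ]
    (Y : ℕ → Ω → ℝ) (hmeas : ∀ i, Measurable (Y i))
    (hbdd : ∀ i ω, |Y i ω| ≤ 1)
    (hmean : ∀ i, ∫ ω, Y i ω ∂μ = 0)
    (hpair : ∀ i j, 1 ≤ i → 1 ≤ j → i ≠ j → IndepFun (Y i) (Y j) μ) :
    ∀ᵐ ω ∂μ, Tendsto (fun T : ℕ => (∑ i ∈ Finset.Ioc 0 T, Y i ω) / T) atTop (nhds 0) := by
  have hmem : ∀ i, MemLp (Y i) 2 μ := fun i =>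
    MemLp.of_bound (hmeas i).aestronglyMeasurable 1
      (Filter.Eventually.of_forall fun ω => by rw [Real.norm_eq_abs]; exact hbdd i ω)
  have hvar : ∀ i, variance (Y i) μ ≤ 1 := by
    intro i
    rw [variance_eq_sub (hmem i), hmean i]
    have h2 : (∫ ω, (Y i ω) ^ 2 ∂μ) ≤ ∫ _ω, (1:ℝ) ∂μ := by
      apply integral_mono ((hmem i).integrable_sq) (integrable_const 1)
      intro ω
      show Y i ω ^ 2 ≤ 1
      rw [← sq_abs]
      nlinarith [abs_nonneg (Y i ω), hbdd i ω]
    simp only [integral_const, probReal_univ, ENNReal.toReal_one, smul_eq_mul, one_mul] at h2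
    have : μ[(Y i) ^ 2] = ∫ ω, (Y i ω) ^ 2 ∂μ := by rfl
    rw [this]
    nlinarith
  have hSmean : ∀ n : ℕ, ∫ ω, (∑ i ∈ Finset.Ioc 0 n, Y i ω) ∂μ = 0 := by
    intro n
    rw [integral_finset_sum _ (fun i _ => (hmem i).integrable one_le_two)]
    simp [hmean]
  have hSmem : ∀ n : ℕ, MemLp (fun ω => ∑ i ∈ Finset.Ioc 0 n, Y i ω) 2 μ := by
    intro n
    have : (fun ω => ∑ i ∈ Finset.Ioc 0 n, Y i ω) = ∑ i ∈ Finset.Ioc 0 n, Y i := by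
      ext ω; simp
    rw [this]
    exact memLp_finset_sum' _ (fun i _ => hmem i)
  have hSvar : ∀ n : ℕ, variance (fun ω => ∑ i ∈ Finset.Ioc 0 n, Y i ω) μ ≤ n := by
    intro n
    have heq : (fun ω => ∑ i ∈ Finset.Ioc 0 n, Y i ω) = ∑ i ∈ Finset.Ioc 0 n, Y i := by
      ext ω; simp
    rw [heq, IndepFun.variance_sum (fun i _ => hmem i) ?_]
    · calc ∑ i ∈ Finset.Ioc 0 n, variance (Y i) μ ≤ ∑ _i ∈ Finset.Ioc 0 n, (1:ℝ) :=
        Finset.sum_le_sum (fun i _ => hvar i)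
      _ = n := by simp
    · intro i hi j hj hij
      rw [Finset.mem_coe, Finset.mem_Ioc] at hi hj
      exact hpair i j hi.1 hj.1 hij
  have key : ∀ δ : ℝ, 0 < δ → ∀ᵐ ω ∂μ, ∀ᶠ n : ℕ in atTop,
      |∑ i ∈ Finset.Ioc 0 ((n+1)^2), Y i ω| < δ * ((n:ℝ)+1)^2 := by
    intro δ hδ
    set s : ℕ → Set Ω := fun n =>
      {ω | δ * ((n:ℝ)+1)^2 ≤ |∑ i ∈ Finset.Ioc 0 ((n+1)^2), Y i ω|} with hs
    have hsle : ∀ n, μ (s n) ≤ ENNReal.ofReal ((1/δ^2) * (1/((n:ℝ)+1)^2)) := by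
      intro n
      have hc : 0 < δ * ((n:ℝ)+1)^2 := by positivity
      have hch := meas_ge_le_variance_div_sq (μ := μ) (hSmem ((n+1)^2)) hc
      have hset : {ω | δ * ((n:ℝ)+1)^2 ≤
          |(∑ i ∈ Finset.Ioc 0 ((n+1)^2), Y i ω) -
            μ[fun ω => ∑ i ∈ Finset.Ioc 0 ((n+1)^2), Y i ω]|} = s n := by
        have hz : μ[fun ω => ∑ i ∈ Finset.Ioc 0 ((n+1)^2), Y i ω] = 0 := hSmean ((n+1)^2)
        rw [hz]
        simp [hs]
      rw [hset] at hch
      refine le_trans hch (ENNReal.ofReal_le_ofReal ?_)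
      have hv := hSvar ((n+1)^2)
      have hc2 : (0:ℝ) < (δ * ((n:ℝ)+1)^2)^2 := by positivity
      calc variance (fun ω => ∑ i ∈ Finset.Ioc 0 ((n+1)^2), Y i ω) μ / (δ * ((n:ℝ)+1)^2)^2
          ≤ (((n+1)^2 : ℕ) : ℝ) / (δ * ((n:ℝ)+1)^2)^2 := by
            exact div_le_div_of_nonneg_right hv hc2.le
      _ = (1/δ^2) * (1/((n:ℝ)+1)^2) := by
            push_cast
            field_simp
    have hsummable : Summable (fun n : ℕ => (1/δ^2) * (1/((n:ℝ)+1)^2)) := by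
      apply Summable.mul_left
      have h1 : Summable (fun n : ℕ => 1/((n:ℝ))^2) := by
        have := Real.summable_one_div_nat_pow.mpr (by norm_num : 1 < 2)
        simpa using this
      have h2 := (summable_nat_add_iff 1).mpr h1
      apply h2.congr
      intro n
      push_cast
      ring
    have hsum : (∑' n, μ (s n)) ≠ ⊤ := by
      apply ne_of_lt
      calc (∑' n, μ (s n)) ≤ ∑' n : ℕ, ENNReal.ofReal ((1/δ^2) * (1/((n:ℝ)+1)^2)) :=
        ENNReal.tsum_le_tsum hsle
      _ = ENNReal.ofReal (∑' n : ℕ, (1/δ^2) * (1/((n:ℝ)+1)^2)) :=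
        (ENNReal.ofReal_tsum_of_nonneg (fun n => by positivity) hsummable).symm
      _ < ⊤ := ENNReal.ofReal_lt_top
    filter_upwards [ae_eventually_notMem hsum] with ω hω
    filter_upwards [hω] with n hn
    simp only [hs, Set.mem_setOf_eq] at hn
    exact not_le.mp hn
  have hae : ∀ᵐ ω ∂μ, ∀ m : ℕ, ∀ᶠ n : ℕ in atTop,
      |∑ i ∈ Finset.Ioc 0 ((n+1)^2), Y i ω| < (1/((m:ℝ)+1)) * ((n:ℝ)+1)^2 := by
    rw [ae_all_iff]
    intro m
    exact key _ (by positivity)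
  filter_upwards [hae] with ω hω
  rw [Metric.tendsto_atTop]
  intro ε hε
  obtain ⟨m, hm⟩ := exists_nat_one_div_lt (half_pos hε)
  obtain ⟨N₀, hN₀⟩ := eventually_atTop.mp (hω m)
  set K := max (N₀ + 1) (⌈(4:ℝ)/ε⌉₊ + 1) with hK
  refine ⟨K * K, fun T hT => ?_⟩
  set n := Nat.sqrt T with hn
  have hKn : K ≤ n := by
    have h1 := Nat.sqrt_le_sqrt hT
    rwa [Nat.sqrt_eq K] at h1
  have hn0 : 1 ≤ n := le_trans (by omega) hKn
  have hnT : n ^ 2 ≤ T := Nat.sqrt_le' T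
  have hTn : T < (n+1) ^ 2 := Nat.lt_succ_sqrt' T
  have hT1 : 1 ≤ T := by
    have := Nat.pow_le_pow_left hn0 2
    simpa using le_trans this hnT
  have hsplit : (∑ i ∈ Finset.Ioc 0 (n^2), Y i ω) + ∑ i ∈ Finset.Ioc (n^2) T, Y i ω
      = ∑ i ∈ Finset.Ioc 0 T, Y i ω :=
    Finset.sum_Ioc_consecutive _ (Nat.zero_le _) hnT
  have htail : |∑ i ∈ Finset.Ioc (n^2) T, Y i ω| ≤ ((T - n^2 : ℕ) : ℝ) := by
    calc |∑ i ∈ Finset.Ioc (n^2) T, Y i ω| ≤ ∑ i ∈ Finset.Ioc (n^2) T, |Y i ω| :=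
      Finset.abs_sum_le_sum_abs _ _
    _ ≤ (Finset.Ioc (n^2) T).card • (1:ℝ) :=
      Finset.sum_le_card_nsmul _ _ _ (fun i _ => hbdd i ω)
    _ = ((T - n^2 : ℕ) : ℝ) := by rw [Nat.card_Ioc]; simp
  have hcard : (T - n^2 : ℕ) ≤ 2 * n := by
    have h2 : (n+1)^2 = n^2 + 2*n + 1 := by ring
    omega
  obtain ⟨k, hk⟩ : ∃ k, n = k + 1 := ⟨n - 1, by omega⟩
  have hhead : |∑ i ∈ Finset.Ioc 0 (n^2), Y i ω| < (1/((m:ℝ)+1)) * ((n:ℝ))^2 := by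
    have h5 := hN₀ k (by omega)
    rw [hk]
    push_cast
    convert h5 using 3 <;> push_cast <;> ring
  have hb : |∑ i ∈ Finset.Ioc 0 T, Y i ω| < (1/((m:ℝ)+1)) * ((n:ℝ))^2 + 2*(n:ℝ) := by
    rw [← hsplit]
    calc |(∑ i ∈ Finset.Ioc 0 (n^2), Y i ω) + ∑ i ∈ Finset.Ioc (n^2) T, Y i ω|
        ≤ |∑ i ∈ Finset.Ioc 0 (n^2), Y i ω| + |∑ i ∈ Finset.Ioc (n^2) T, Y i ω| := abs_add_le _ _
    _ < (1/((m:ℝ)+1)) * ((n:ℝ))^2 + 2*(n:ℝ) := by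
        have : ((T - n^2 : ℕ) : ℝ) ≤ 2*(n:ℝ) := by exact_mod_cast hcard
        linarith
  have hT0 : (0:ℝ) < T := by exact_mod_cast hT1
  rw [Real.dist_eq, sub_zero, abs_div, Nat.abs_cast, div_lt_iff₀ hT0]
  have h1 : ((n:ℝ))^2 ≤ (T:ℝ) := by exact_mod_cast hnT
  have h2 : (4:ℝ)/ε < (K:ℕ) := by
    have ha1 := Nat.le_ceil ((4:ℝ)/ε)
    have ha2 : (⌈(4:ℝ)/ε⌉₊ : ℝ) < K := by
      have : ⌈(4:ℝ)/ε⌉₊ < K := by omega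
      exact_mod_cast this
    linarith
  have h3 : (K:ℝ) ≤ (n:ℝ) := by exact_mod_cast hKn
  have hεn : 4 < ε * n := by
    have h4 : (4:ℝ)/ε < (n:ℝ) := lt_of_lt_of_le h2 h3
    rw [div_lt_iff₀ hε] at h4
    linarith
  have hnpos : (0:ℝ) < n := by exact_mod_cast hn0
  have hmn : (1/((m:ℝ)+1)) * (n:ℝ)^2 ≤ (ε/2) * (n:ℝ)^2 :=
    mul_le_mul_of_nonneg_right hm.le (by positivity)
  have hq1 : (ε/2) * (n:ℝ)^2 ≤ (ε/2) * (T:ℝ) :=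
    mul_le_mul_of_nonneg_left h1 (by positivity)
  have hq2 : 4 * (n:ℝ) < ε * (T:ℝ) := by
    have := mul_lt_mul_of_pos_right hεn hnpos
    nlinarith
  linarith

lemma aux_det
    (Dmax D ε η L lam₀ A : ℝ) (ψ : ℕ → ℝ) (e Eω dt dh δt Q lam : ℕ → ℝ)
    (hDmax : 0 < Dmax) (hεD : 0 < ε ∧ ε < D) (hDD : D ≤ Dmax) (hη : 0 < η)
    (hL : 0 < L) (hlam₀ : 0 < lam₀ ∧ lam₀ ≤ L/ε + η*(Dmax - ε))
    (hA : Dmax * A < D - ε)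
    (hψ0 : ∀ τ, 0 ≤ ψ τ) (hψmono : Monotone ψ)
    (hψsub : Tendsto (fun τ : ℕ => ψ τ / τ) atTop (nhds 0))
    (he0 : ∀ t, 0 ≤ e t)
    (henv : ∀ k, 1 ≤ k → ∀ τ, 1 ≤ τ → ∑ t ∈ Finset.Icc k (k + τ), e t < A * τ + ψ τ)
    (hS : Tendsto (fun k : ℕ => (∑ i ∈ Finset.Ioc 0 k, (Eω i - e i)) / k) atTop (nhds 0))
    (hdt : ∀ t, 0 ≤ dt t ∧ dt t ≤ Dmax)
    (ha : ∀ t, 1 ≤ t → 0 ≤ dh t - dt t ∧ dh t - dt t ≤ Dmax * Eω t)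
    (hlam1 : lam 1 = lam₀)
    (hupd : ∀ t, 1 ≤ t → lam (t+1) = lam t + η * (dt t - D + δt t))
    (hsmall : ∀ t, 1 ≤ t → L/ε < lam t → dt t < ε)
    (hQ0 : Q 0 = 0)
    (hQ : ∀ t, Q t = ∑ i ∈ Finset.Icc 1 t, (dh i - dt i - δt i))
    (hδ1 : δt 1 = 0)
    (hδ : ∀ t, 1 ≤ t → δt (t+1) = min (D - ε) (Q t)) :
    limsup (fun T : ℕ => (1 / (T:ℝ)) * ∑ t ∈ Finset.Icc 1 T, dh t) atTop ≤ D := by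
  have hc0 : 0 < D - ε := by linarith [hεD.2]
  set S : ℕ → ℝ := fun k => ∑ i ∈ Finset.Ioc 0 k, (Eω i - e i) with hSdef
  have hS' : Tendsto (fun k : ℕ => S k / k) atTop (nhds 0) := hS
  -- queue recursion and positivity
  have hQrec : ∀ t, Q (t+1) = Q t + (dh (t+1) - dt (t+1) - δt (t+1)) := by
    intro t
    rw [hQ (t+1), hQ t, Finset.sum_Icc_succ_top (by omega : 1 ≤ t+1)]
  have hQpos : ∀ t, 0 ≤ Q t := by
    intro t
    induction t with
    | zero => rw [hQ0]
    | succ t ih =>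
      have hδle : δt (t+1) ≤ Q t := by
        rcases Nat.eq_zero_or_pos t with h0 | h1
        · subst h0; rw [hδ1, hQ0]
        · rw [hδ t h1]; exact min_le_right _ _
      have ha' := (ha (t+1) (by omega)).1
      rw [hQrec t]; linarith
  have hδb : ∀ t, 1 ≤ t → 0 ≤ δt t ∧ δt t ≤ D - ε := by
    intro t ht
    obtain ⟨u, rfl⟩ : ∃ u, t = u + 1 := ⟨t - 1, by omega⟩
    rcases Nat.eq_zero_or_pos u with h0 | h1
    · subst h0; rw [hδ1]; exact ⟨le_rfl, hc0.le⟩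
    · rw [hδ u h1]; exact ⟨le_min hc0.le (hQpos u), min_le_left _ _⟩
  -- dual variable bound
  set M := L/ε + η * (Dmax - ε) with hM
  have hlamle : ∀ t, 1 ≤ t → lam t ≤ M := by
    intro t ht
    induction t, ht using Nat.le_induction with
    | base => rw [hlam1]; exact hlam₀.2
    | succ t ht ih =>
      rw [hupd t ht]
      have hδt := hδb t ht
      have hdt' := hdt t
      by_cases hcase : lam t ≤ L/ε
      · have h1 : dt t - D + δt t ≤ Dmax - ε := by linarith [hdt'.2, hδt.2]
        have h2 := mul_le_mul_of_nonneg_left h1 hη.le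
        rw [hM]; linarith
      · push_neg at hcase
        have hdtε := hsmall t ht hcase
        have h1 : dt t - D + δt t ≤ 0 := by linarith [hδt.2]
        have h2 := mul_le_mul_of_nonneg_left h1 hη.le
        simp only [mul_zero] at h2
        linarith
  -- telescoping
  have htel : ∀ T : ℕ, lam (T+1) = lam₀ + η * ∑ t ∈ Finset.Icc 1 T, (dt t - D + δt t) := by
    intro T
    induction T with
    | zero => simp [hlam1]
    | succ T ih =>
      rw [hupd (T+1) (by omega), ih, Finset.sum_Icc_succ_top (by omega : 1 ≤ T+1)]
      ring
  -- distortion sum bound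
  have hsum : ∀ T : ℕ, 1 ≤ T → ∑ t ∈ Finset.Icc 1 T, dh t ≤ T * D + M/η + Q T := by
    intro T hT
    have h1 : η * ∑ t ∈ Finset.Icc 1 T, (dt t - D + δt t) ≤ M := by
      have h0 := hlamle (T+1) (by omega)
      rw [htel T] at h0
      linarith [hlam₀.1]
    have h2 : ∑ t ∈ Finset.Icc 1 T, (dt t - D + δt t) ≤ M / η := by
      rw [le_div_iff₀ hη]; linarith
    have hconst : ∑ _t ∈ Finset.Icc 1 T, (D:ℝ) = T * D := by
      rw [Finset.sum_const, Nat.card_Icc]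
      simp [nsmul_eq_mul]
    have h3 : ∑ t ∈ Finset.Icc 1 T, (dt t + δt t) = (∑ t ∈ Finset.Icc 1 T, (dt t - D + δt t)) + ∑ _t ∈ Finset.Icc 1 T, (D:ℝ) := by
      rw [← Finset.sum_add_distrib]
      apply Finset.sum_congr rfl
      intros; ring
    have h4 : ∑ t ∈ Finset.Icc 1 T, dh t = Q T + ∑ t ∈ Finset.Icc 1 T, (dt t + δt t) := by
      rw [hQ T, ← Finset.sum_add_distrib]
      apply Finset.sum_congr rfl
      intros; ring
    rw [h4, h3, hconst]
    linarith
  -- Lindley bound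
  have hLind : ∀ T, 1 ≤ T → ∃ j, 1 ≤ j ∧ j ≤ T ∧
      Q T ≤ (∑ i ∈ Finset.Icc j T, (dh i - dt i)) - ((T:ℝ) - (j:ℝ)) * (D - ε) := by
    intro T hT
    induction T, hT using Nat.le_induction with
    | base =>
      refine ⟨1, le_rfl, le_rfl, ?_⟩
      rw [hQ 1]
      simp [hδ1]
    | succ T hT ih =>
      obtain ⟨j, hj1, hjT, hQle⟩ := ih
      have hrec := hQrec T
      rw [hδ T hT] at hrec
      by_cases hcase : Q T ≤ D - ε
      · refine ⟨T+1, by omega, le_rfl, ?_⟩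
        rw [min_eq_right hcase] at hrec
        rw [Finset.Icc_self, Finset.sum_singleton]
        push_cast
        rw [hrec]
        ring_nf
        linarith
      · push_neg at hcase
        refine ⟨j, hj1, by omega, ?_⟩
        rw [min_eq_left hcase.le] at hrec
        rw [Finset.sum_Icc_succ_top (by omega : j ≤ T+1)]
        push_cast
        rw [hrec]
        have hjr : (j:ℝ) ≤ (T:ℝ) := by exact_mod_cast hjT
        nlinarith [hQle]
  -- envelope over a window
  have henvw : ∀ j T : ℕ, 1 ≤ j → j ≤ T →
      ∑ i ∈ Finset.Icc j T, e i ≤ A * ((T:ℝ) - (j:ℝ)) + |A| + ψ T := by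
    intro j T hj hjT
    set τ := max 1 (T - j) with hτ
    have hτ1 : 1 ≤ τ := le_max_left _ _
    have h1 : ∑ i ∈ Finset.Icc j T, e i ≤ ∑ i ∈ Finset.Icc j (j+τ), e i :=
      Finset.sum_le_sum_of_subset_of_nonneg
        (Finset.Icc_subset_Icc le_rfl (by omega)) (fun i _ _ => he0 i)
    have h2 := henv j hj τ hτ1
    have h3 : ψ τ ≤ ψ T := hψmono (by omega)
    have h4 : A * (τ:ℝ) ≤ A * ((T:ℝ) - j) + |A| := by
      rcases Nat.lt_or_ge j T with hlt | hge
      · have hτeq : τ = T - j := by omega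
        have hcast : ((τ:ℕ):ℝ) = (T:ℝ) - (j:ℝ) := by
          rw [hτeq, Nat.cast_sub hjT]
        rw [hcast]
        linarith [abs_nonneg A]
      · have hjeq : j = T := le_antisymm hjT hge
        have hτeq : τ = 1 := by omega
        rw [hτeq, hjeq]
        simp
        linarith [le_abs_self A]
    linarith
  -- queue upper bound
  have hQb : ∀ T, 1 ≤ T → ∃ j, 1 ≤ j ∧ j ≤ T ∧
      Q T ≤ Dmax * (|A| + ψ T) + Dmax * (|S T| + |S (j-1)|) := by
    intro T hT
    obtain ⟨j, hj1, hjT, hQle⟩ := hLind T hT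
    refine ⟨j, hj1, hjT, ?_⟩
    have h1 : ∑ i ∈ Finset.Icc j T, (dh i - dt i) ≤ Dmax * ∑ i ∈ Finset.Icc j T, Eω i := by
      rw [Finset.mul_sum]
      apply Finset.sum_le_sum
      intro i hi
      exact (ha i (by have := (Finset.mem_Icc.mp hi).1; omega)).2
    have hIoc : Finset.Icc j T = Finset.Ioc (j-1) T := by
      ext x
      simp only [Finset.mem_Icc, Finset.mem_Ioc]
      omega
    have h2 : ∑ i ∈ Finset.Icc j T, Eω i = (∑ i ∈ Finset.Icc j T, e i) + (S T - S (j-1)) := by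
      have hcons : S (j-1) + (∑ i ∈ Finset.Ioc (j-1) T, (Eω i - e i)) = S T :=
        Finset.sum_Ioc_consecutive _ (Nat.zero_le _) (by omega)
      have hd2 : ∑ i ∈ Finset.Icc j T, (Eω i - e i) = S T - S (j-1) := by
        rw [hIoc]; linarith
      have hd3 : ∑ i ∈ Finset.Icc j T, Eω i
          = (∑ i ∈ Finset.Icc j T, (Eω i - e i)) + ∑ i ∈ Finset.Icc j T, e i := by
        rw [← Finset.sum_add_distrib]
        apply Finset.sum_congr rfl
        intros; ring
      rw [hd3, hd2]; ring
    have h3 := henvw j T hj1 hjT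
    have hjr : (j:ℝ) ≤ (T:ℝ) := by exact_mod_cast hjT
    have k1 : ∑ i ∈ Finset.Icc j T, Eω i ≤ A * ((T:ℝ) - j) + |A| + ψ T + (S T - S (j-1)) := by
      rw [h2]; linarith
    have k2 := mul_le_mul_of_nonneg_left k1 hDmax.le
    have k3 : (Dmax * A - (D - ε)) * ((T:ℝ) - j) ≤ 0 :=
      mul_nonpos_of_nonpos_of_nonneg (by linarith) (by linarith)
    have k4 : S T - S (j-1) ≤ |S T| + |S (j-1)| := by
      have k4a := le_abs_self (S T)
      have k4b := neg_abs_le (S (j-1))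
      linarith
    have k5 := mul_le_mul_of_nonneg_left k4 hDmax.le
    nlinarith [hQle, h1, k2, k3, k5]
  -- queue is sublinear
  have hQtend : Tendsto (fun T : ℕ => Q T / T) atTop (nhds 0) := by
    rw [Metric.tendsto_atTop]
    intro ε' hε'
    have hδpos : 0 < ε' / (4 * Dmax) := by positivity
    obtain ⟨C, hC0, hC⟩ := aux_linbound S hS' hδpos
    obtain ⟨N₁, hN₁⟩ := Metric.tendsto_atTop.mp
      (tendsto_const_div_atTop_nhds_zero_nat (Dmax * (|A| + 2*C))) (ε'/4) (by positivity)
    have h2t : Tendsto (fun T : ℕ => Dmax * (ψ T / T)) atTop (nhds 0) := by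
      simpa using hψsub.const_mul Dmax
    obtain ⟨N₂, hN₂⟩ := Metric.tendsto_atTop.mp h2t (ε'/4) (by positivity)
    refine ⟨max (max N₁ N₂) 1, fun T hT => ?_⟩
    have hT1 : 1 ≤ T := le_trans (le_max_right _ _) hT
    obtain ⟨j, hj1, hjT, hQle⟩ := hQb T hT1
    have hTpos : (0:ℝ) < T := by exact_mod_cast hT1
    have hST : |S T| ≤ (ε'/(4*Dmax)) * T + C := hC T
    have hSj : |S (j-1)| ≤ (ε'/(4*Dmax)) * T + C := by
      have := hC (j-1)
      have hjr : ((j-1:ℕ):ℝ) ≤ (T:ℝ) := by exact_mod_cast (by omega : j - 1 ≤ T)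
      nlinarith [hδpos.le]
    have k6 : |S T| + |S (j-1)| ≤ 2*((ε'/(4*Dmax)) * T + C) := by linarith
    have k7 := mul_le_mul_of_nonneg_left k6 hDmax.le
    have hq : Dmax * (ε'/(4*Dmax)) = ε'/4 := by
      rw [← mul_div_assoc, mul_comm 4 Dmax, mul_div_mul_left _ _ (ne_of_gt hDmax)]
    have k8 : Dmax * (2*((ε'/(4*Dmax)) * T + C)) = 2*(Dmax*(ε'/(4*Dmax)))*(T:ℝ) + Dmax*(2*C) := by
      ring
    rw [hq] at k8
    have e1 := hN₁ T (by omega)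
    rw [Real.dist_eq, sub_zero] at e1
    have e1' : Dmax * (|A| + 2*C) / T < ε'/4 := lt_of_le_of_lt (le_abs_self _) e1
    rw [div_lt_iff₀ hTpos] at e1'
    have e2 := hN₂ T (by omega)
    rw [Real.dist_eq, sub_zero] at e2
    have e2' : Dmax * (ψ T / T) < ε'/4 := lt_of_le_of_lt (le_abs_self _) e2
    have e2'' : Dmax * ψ T < (ε'/4) * T := by
      have : Dmax * (ψ T / T) = (Dmax * ψ T) / T := by ring
      rw [this, div_lt_iff₀ hTpos] at e2'
      linarith
    rw [Real.dist_eq, sub_zero, abs_of_nonneg (div_nonneg (hQpos T) hTpos.le), div_lt_iff₀ hTpos]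
    nlinarith [hQle, k7, k8]
  -- final limsup computation
  have hg : Tendsto (fun T : ℕ => D + ((M/η)/T + Q T / T)) atTop (nhds D) := by
    have h0 : Tendsto (fun T : ℕ => (M/η)/T + Q T / T) atTop (nhds 0) := by
      simpa using (tendsto_const_div_atTop_nhds_zero_nat (M/η)).add hQtend
    simpa using h0.const_add D
  have hfin : ∀ᶠ T : ℕ in atTop,
      (1/(T:ℝ)) * ∑ t ∈ Finset.Icc 1 T, dh t ≤ D + ((M/η)/T + Q T / T) := by
    filter_upwards [eventually_ge_atTop 1] with T hT1
    have hTpos : (0:ℝ) < T := by exact_mod_cast hT1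
    have h1 := hsum T hT1
    have h2 := mul_le_mul_of_nonneg_left h1 (by positivity : (0:ℝ) ≤ 1/(T:ℝ))
    calc (1/(T:ℝ)) * ∑ t ∈ Finset.Icc 1 T, dh t
        ≤ (1/(T:ℝ)) * ((T:ℝ) * D + M/η + Q T) := h2
    _ = D + ((M/η)/T + Q T / T) := by field_simp; ring
  have hcob : atTop.IsCoboundedUnder (· ≤ ·)
      (fun T : ℕ => (1/(T:ℝ)) * ∑ t ∈ Finset.Icc 1 T, dh t) := by
    apply isCoboundedUnder_le_of_eventually_le atTop (x := 0)
    apply Eventually.of_forall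
    intro T
    apply mul_nonneg (by positivity)
    apply Finset.sum_nonneg
    intro t ht
    have h1 := (ha t (Finset.mem_Icc.mp ht).1).1
    have h2 := (hdt t).1
    linarith
  calc limsup (fun T : ℕ => (1 / (T:ℝ)) * ∑ t ∈ Finset.Icc 1 T, dh t) atTop
      ≤ limsup (fun T : ℕ => D + ((M/η)/T + Q T / T)) atTop :=
        limsup_le_limsup hfin hcob hg.isBoundedUnder_le
  _ = D := hg.limsup_eq


/-- **Theorem 4, asymptotic almost-sure guarantee (CA-OCRDC over a memoryless
time-varying erasure channel, infinite horizon).**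
The erasure indicators `E_1, E_2, …` are independent with `P(E_t = 1) = e_t`, the
erasure probabilities satisfy the envelope condition
`∑_{t=k}^{k+τ} e_t < A τ + ψ(τ)` for all `k ≥ 1`, `τ ≥ 1`, with
`A < (D − ε)/D_max` and nondecreasing sublinear `ψ`, and all algorithm quantities
are random variables satisfying the CA-OCRDC recursions pointwise, with
Assumption 1 holding surely. Then almost surely
`limsup_{T → ∞} (1/T) ∑_{t=1}^T d(X_t, X̂_t) ≤ D`. -/
theorem ca_ocrdc_memoryless_channel_asymptotic
    {Ω : Type*} [MeasurableSpace Ω] (μ : Measure Ω) [IsProbabilityMeasure μ]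
    {𝒳 : Type*} [Fintype 𝒳] [Nonempty 𝒳]
    (Dmax : ℝ) (hDmax : 0 < Dmax)
    (d : 𝒳 → 𝒳 → ℝ) (hd : ∀ x y, 0 ≤ d x y ∧ d x y ≤ Dmax) (hdd : ∀ x, d x x = 0)
    (D ε : ℝ) (hD : 0 < D ∧ D ≤ Dmax) (hε : 0 < ε ∧ ε < D)
    (η : ℝ) (hη : 0 < η)
    (L : ℝ)
    (lam₀ : ℝ) (hlam₀ : 0 < lam₀ ∧ lam₀ ≤ L / ε + η * (Dmax - ε))
    -- the memoryless time-varying erasure channel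
    (E : ℕ → Ω → ℝ)
    (hEmeas : ∀ t, Measurable (E t))
    (hEval : ∀ t ω, E t ω = 0 ∨ E t ω = 1)
    (e : ℕ → ℝ) (he : ∀ t, 0 ≤ e t ∧ e t ≤ 1)
    (hP : ∀ t, μ {ω | E t ω = 1} = ENNReal.ofReal (e t))
    (hindep : iIndepFun
      (fun t : {t : ℕ // 1 ≤ t} => E t) μ)
    (A : ℝ) (hA : A < (D - ε) / Dmax)
    (ψ : ℕ → ℝ) (hψ0 : ∀ τ, 0 ≤ ψ τ) (hψmono : Monotone ψ)
    (hψsub : Tendsto (fun τ : ℕ => ψ τ / τ) atTop (nhds 0))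
    (henv : ∀ k, 1 ≤ k → ∀ τ, 1 ≤ τ →
      ∑ t ∈ Finset.Icc k (k + τ), e t < A * τ + ψ τ)
    -- the CA-OCRDC algorithm, with all quantities random and the recursions
    -- holding pointwise
    (X Xtil Xhat : ℕ → Ω → 𝒳) (p : ℕ → Ω → 𝒳 → ℝ)
    (hp : ∀ t ω x, 0 < p t ω x ∧ p t ω x ≤ 1) (hp1 : ∀ t ω, ∑ x, p t ω x = 1)
    (hL : ∀ t ω x, -Real.log (p t ω x) < L)
    (lam s δtgt Q : ℕ → Ω → ℝ)
    (hinit : ∀ ω, lam 1 ω = lam₀)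
    (hs : ∀ t ω, s t ω = max 0 (lam t ω))
    (hmin : ∀ t, 1 ≤ t → ∀ ω x,
      -Real.log (p t ω (Xtil t ω)) + s t ω * d (X t ω) (Xtil t ω)
        ≤ -Real.log (p t ω x) + s t ω * d (X t ω) x)
    (hupd : ∀ t, 1 ≤ t → ∀ ω,
      lam (t + 1) ω = lam t ω + η * (d (X t ω) (Xtil t ω) - D + δtgt t ω))
    (hrec0 : ∀ t, 1 ≤ t → ∀ ω, E t ω = 0 → Xhat t ω = Xtil t ω)
    (hrec1 : ∀ t, 1 ≤ t → ∀ ω, E t ω = 1 →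
      d (X t ω) (Xtil t ω) ≤ d (X t ω) (Xhat t ω))
    (hQ0 : ∀ ω, Q 0 ω = 0)
    (hQ : ∀ t ω, Q t ω = ∑ i ∈ Finset.Icc 1 t,
      ((d (X i ω) (Xhat i ω) - d (X i ω) (Xtil i ω)) - δtgt i ω))
    (hδ1 : ∀ ω, δtgt 1 ω = 0)
    (hδ : ∀ t, 1 ≤ t → ∀ ω, δtgt (t + 1) ω = min (D - ε) (Q t ω))
    -- measurability of the relevant random quantities
    (hdmeashat : ∀ t, Measurable (fun ω => d (X t ω) (Xhat t ω)))
    (hdmeastil : ∀ t, Measurable (fun ω => d (X t ω) (Xtil t ω))) :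
    ∀ᵐ ω ∂μ, Filter.limsup
      (fun T : ℕ => (1 / (T : ℝ)) * ∑ t ∈ Finset.Icc 1 T, d (X t ω) (Xhat t ω))
      Filter.atTop ≤ D := by
  have hΩ : Nonempty Ω := by
    rcases isEmpty_or_nonempty Ω with h | h
    · exfalso
      have h1 : μ Set.univ = 1 := measure_univ
      rw [Set.univ_eq_empty_iff.mpr h, measure_empty] at h1
      simp at h1
    · exact h
  obtain ⟨ω₀⟩ := hΩ
  have x₀ : 𝒳 := Classical.arbitrary 𝒳
  have hL0 : 0 < L := by
    have h1 := hL 1 ω₀ x₀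
    have h2 := hp 1 ω₀ x₀
    have h3 := Real.log_nonpos h2.1.le h2.2
    linarith
  -- the strong law for the erasure indicators
  have hslln := aux_slln μ (fun i ω => E i ω - e i)
    (fun i => (hEmeas i).sub measurable_const)
    (fun i ω => by
      show |E i ω - e i| ≤ 1
      rcases hEval i ω with h | h <;> rw [h] <;> rw [abs_le] <;>
        constructor <;> linarith [(he i).1, (he i).2])
    (fun i => by
      have hint : Integrable (E i) μ := by
        apply (integrable_const (1:ℝ)).mono' (hEmeas i).aestronglyMeasurable
        apply Eventually.of_forall
        intro ω
        rcases hEval i ω with h | h <;> rw [h] <;> simp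
      have hEind : ∀ ω, E i ω =
          Set.indicator {ω' | E i ω' = 1} (fun _ => (1:ℝ)) ω := by
        intro ω
        by_cases hω : E i ω = 1
        · rw [Set.indicator_apply, if_pos (by exact hω : ω ∈ {ω' | E i ω' = 1})]
          exact hω
        · rw [Set.indicator_apply, if_neg (by exact hω : ω ∉ {ω' | E i ω' = 1})]
          rcases hEval i ω with h | h
          · exact h
          · exact absurd h hω
      have hEint : ∫ ω, E i ω ∂μ = e i := by
        rw [integral_congr_ae (Eventually.of_forall hEind)]
        have hms : MeasurableSet {ω' | E i ω' = 1} :=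
          (hEmeas i) (measurableSet_singleton 1)
        rw [integral_indicator_const _ hms, measureReal_def, hP i, smul_eq_mul, mul_one,
          ENNReal.toReal_ofReal (he i).1]
      rw [integral_sub hint (integrable_const _), hEint, integral_const]
      simp)
    (fun i j hi hj hij => by
      have h0 := hindep.indepFun (i := (⟨i, hi⟩ : {t : ℕ // 1 ≤ t}))
        (j := (⟨j, hj⟩ : {t : ℕ // 1 ≤ t}))
        (fun h => hij (congrArg Subtype.val h))
      have hm1 : Measurable (fun x : ℝ => x - e i) := measurable_id.sub measurable_const
      have hm2 : Measurable (fun x : ℝ => x - e j) := measurable_id.sub measurable_const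
      exact h0.comp hm1 hm2)
  filter_upwards [hslln] with ω hSω
  refine aux_det Dmax D ε η L lam₀ A ψ e (fun t => E t ω)
    (fun t => d (X t ω) (Xtil t ω)) (fun t => d (X t ω) (Xhat t ω))
    (fun t => δtgt t ω) (fun t => Q t ω) (fun t => lam t ω)
    hDmax hε hD.2 hη hL0 hlam₀ ?_ hψ0 hψmono hψsub (fun t => (he t).1) henv
    hSω (fun t => hd _ _) ?_ (hinit ω) (fun t ht => hupd t ht ω) ?_
    (hQ0 ω) (fun t => hQ t ω) (hδ1 ω) (fun t ht => hδ t ht ω)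
  · -- Dmax * A < D - ε
    have := (lt_div_iff₀ hDmax).mp hA
    linarith
  · -- channel distortion bound
    intro t ht
    show 0 ≤ d (X t ω) (Xhat t ω) - d (X t ω) (Xtil t ω) ∧
      d (X t ω) (Xhat t ω) - d (X t ω) (Xtil t ω) ≤ Dmax * E t ω
    rcases hEval t ω with h0 | h1
    · rw [hrec0 t ht ω h0, h0]
      simp
    · constructor
      · linarith [hrec1 t ht ω h1]
      · rw [h1, mul_one]
        linarith [(hd (X t ω) (Xhat t ω)).2, (hd (X t ω) (Xtil t ω)).1]
  · -- small distortion when dual variable is large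
    intro t ht hlt
    have hspos : 0 < s t ω := by
      rw [hs]
      have := lt_trans (div_pos hL0 hε.1) hlt
      rw [max_eq_right this.le]
      exact this
    have hs' : s t ω = lam t ω := by
      rw [hs]
      exact max_eq_right (le_of_lt (lt_trans (div_pos hL0 hε.1) hlt))
    have hmin' := hmin t ht ω (X t ω)
    rw [hdd (X t ω), mul_zero, add_zero] at hmin'
    have hlog1 : 0 ≤ -Real.log (p t ω (Xtil t ω)) := by
      have h2 := hp t ω (Xtil t ω)
      linarith [Real.log_nonpos h2.1.le h2.2]
    have hlog2 : -Real.log (p t ω (X t ω)) < L := hL t ω _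
    have hsd : s t ω * d (X t ω) (Xtil t ω) < L := by linarith
    have hsε : L < s t ω * ε := by
      rw [hs']
      rw [div_lt_iff₀ hε.1] at hlt
      linarith
    have := lt_trans hsd hsε
    exact lt_of_mul_lt_mul_left this hspos.le
end

section
/- Consider CA-OCRDC driven over an infinite horizon by a Gilbert–Elliott erasure channel with spectral gap γ = 1 − |1 − a − b| < 1 and steady-state erasure probability ē = π(B)e_B + π(G)e_G satisfying ē < (D − ε)/D_max, where conditionally on the Markov chain trajectory {Z_t} the erasure indicators E_t are independent with P(E_t = 1 | Z_t) = e_B·𝟙{Z_t = B} + e_G·𝟙{Z_t = G}, and all algorithm quantities are random variables satisfying the CA-OCRDC recursions pointwise, with Assumption 1 holding surely. Then almost surely, limsup_{T → ∞} (1/T) ∑_{t=1}^T d(X_t, X̂_t) ≤ D. (Theorem 5, asymptotic almost-sure guarantee) -/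
open MeasureTheory Filter
open Topology


set_option maxHeartbeats 1000000 in
lemma lln_aux' {Ω : Type*} [MeasurableSpace Ω] (μ : Measure Ω) [IsProbabilityMeasure μ]
    (M : ℕ → Ω → ℝ) (C : ℝ) (hC : 1 ≤ C)
    (hmeas : ∀ T, Measurable (M T))
    (h0 : ∀ ω, M 0 ω = 0)
    (hstep : ∀ T ω, |M (T+1) ω - M T ω| ≤ C)
    (hvar : ∀ T : ℕ, ∫ ω, (M T ω)^2 ∂μ ≤ C * T) :
    ∀ᵐ ω ∂μ, Tendsto (fun T : ℕ => M T ω / T) atTop (𝓝 0) := by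
  have hC0 : (0:ℝ) < C := lt_of_lt_of_le one_pos hC
  -- telescoping bound
  have htel : ∀ (S T : ℕ), S ≤ T → ∀ ω, |M T ω - M S ω| ≤ C * ((T:ℝ) - (S:ℝ)) := by
    intro S T hST ω
    induction T, hST using Nat.le_induction with
    | base => simp
    | succ T hST ih =>
      calc |M (T+1) ω - M S ω| ≤ |M (T+1) ω - M T ω| + |M T ω - M S ω| := abs_sub_le _ _ _
        _ ≤ C + C * ((T:ℝ) - S) := add_le_add (hstep T ω) ih
        _ = C * (((T+1:ℕ):ℝ) - S) := by push_cast; ring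
  have hMb : ∀ (T : ℕ) ω, |M T ω| ≤ C * T := by
    intro T ω
    have := htel 0 T (Nat.zero_le _) ω
    simpa [h0 ω] using this
  -- integrability of the squares
  have hint : ∀ T : ℕ, Integrable (fun ω => (M T ω)^2) μ := by
    intro T
    refine Integrable.mono' (integrable_const ((C*T)^2))
      ((hmeas T).pow_const 2).aestronglyMeasurable (ae_of_all _ fun ω => ?_)
    have h1 := hMb T ω
    have h2 : (0:ℝ) ≤ C * T := by positivity
    rw [Real.norm_eq_abs, abs_of_nonneg (sq_nonneg _)]
    nlinarith [abs_nonneg (M T ω), sq_abs (M T ω)]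
  -- Chebyshev along squares, for each m
  have hae : ∀ m : ℕ, ∀ᵐ ω ∂μ, ∀ᶠ n in atTop,
      |M ((n+1)^2) ω| < (1/((m:ℝ)+1)) * (((n:ℕ):ℝ)+1)^2 := by
    intro m
    set δ : ℝ := 1/((m:ℝ)+1) with hδdef
    have hδ0 : 0 < δ := by positivity
    set Bs : ℕ → Set Ω := fun n =>
      {ω | δ * (((n:ℕ):ℝ)+1)^2 ≤ |M ((n+1)^2) ω|} with hBs
    have hcheb : ∀ n : ℕ, μ (Bs n)
        ≤ ENNReal.ofReal ((C/δ^2) * (1/(((n:ℕ):ℝ)+1)^2)) := by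
      intro n
      set T : ℕ := (n+1)^2 with hT
      have hTcast : ((T:ℕ):ℝ) = (((n:ℕ):ℝ)+1)^2 := by rw [hT]; push_cast; ring
      set e : ℝ := (δ * (((n:ℕ):ℝ)+1)^2)^2 with he
      have he0 : 0 < e := by positivity
      have key := mul_meas_ge_le_integral_of_nonneg
        (μ := μ) (f := fun ω => (M T ω)^2)
        (ae_of_all _ fun ω => sq_nonneg _) (hint T) e
      have hsub : Bs n ⊆ {ω | e ≤ (M T ω)^2} := by
        intro ω hω
        have h1 : δ * (((n:ℕ):ℝ)+1)^2 ≤ |M T ω| := hω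
        have h2 : (0:ℝ) ≤ δ * (((n:ℕ):ℝ)+1)^2 := by positivity
        have := pow_le_pow_left₀ h2 h1 2
        simpa [he, sq_abs] using this
      have hμfin : (μ {ω | e ≤ (M T ω)^2}) ≠ ⊤ := measure_ne_top _ _
      have hle1 : μ (Bs n) ≤ μ {ω | e ≤ (M T ω)^2} := measure_mono hsub
      have hle2 : (μ {ω | e ≤ (M T ω)^2}).toReal ≤ (C * T) / e := by
        rw [le_div_iff₀ he0]
        calc (μ {ω | e ≤ (M T ω)^2}).toReal * e
            = e * (μ {ω | e ≤ (M T ω)^2}).toReal := by ring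
          _ ≤ ∫ ω, (M T ω)^2 ∂μ := key
          _ ≤ C * T := hvar T
      have heq : (C * T) / e = (C/δ^2) * (1/(((n:ℕ):ℝ)+1)^2) := by
        rw [he, hTcast]
        have : (((n:ℕ):ℝ)+1) ≠ 0 := by positivity
        field_simp
      calc μ (Bs n) ≤ μ {ω | e ≤ (M T ω)^2} := hle1
        _ = ENNReal.ofReal ((μ {ω | e ≤ (M T ω)^2}).toReal) :=
            (ENNReal.ofReal_toReal hμfin).symm
        _ ≤ ENNReal.ofReal ((C * T) / e) := ENNReal.ofReal_le_ofReal hle2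
        _ = _ := by rw [heq]
    -- summability
    have hsummable : Summable (fun n : ℕ => (C/δ^2) * (1/(((n:ℕ):ℝ)+1)^2)) := by
      have h1 : Summable (fun n : ℕ => 1/((n:ℝ))^2) :=
        Real.summable_one_div_nat_pow.mpr one_lt_two
      have h2 : Summable (fun n : ℕ => 1/(((n:ℕ):ℝ)+1)^2) := by
        have := (summable_nat_add_iff (f := fun n : ℕ => 1/((n:ℝ))^2) 1).mpr h1
        refine this.congr fun n => ?_
        push_cast; ring
      exact h2.mul_left _
    have hnonneg : ∀ n : ℕ, (0:ℝ) ≤ (C/δ^2) * (1/(((n:ℕ):ℝ)+1)^2) := by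
      intro n; positivity
    have htsum : (∑' n, μ (Bs n)) ≠ ⊤ := by
      have h1 : (∑' n, μ (Bs n))
          ≤ ∑' n, ENNReal.ofReal ((C/δ^2) * (1/(((n:ℕ):ℝ)+1)^2)) :=
        ENNReal.tsum_le_tsum hcheb
      have h2 := (ENNReal.ofReal_tsum_of_nonneg hnonneg hsummable).symm
      exact ne_top_of_le_ne_top (by rw [h2]; exact ENNReal.ofReal_ne_top)
        h1
    have hBC := measure_limsup_atTop_eq_zero htsum
    have hae' := measure_eq_zero_iff_ae_notMem.mp hBC
    filter_upwards [hae'] with ω hω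
    rw [mem_limsup_iff_frequently_mem, Filter.not_frequently] at hω
    filter_upwards [hω] with n hn
    rw [hBs] at hn
    simpa using not_le.mp hn
  have hall : ∀ᵐ ω ∂μ, ∀ m : ℕ, ∀ᶠ n in atTop,
      |M ((n+1)^2) ω| < (1/((m:ℝ)+1)) * (((n:ℕ):ℝ)+1)^2 := ae_all_iff.mpr hae
  filter_upwards [hall] with ω hω
  rw [Metric.tendsto_atTop]
  intro ε' hε'
  obtain ⟨m, hm⟩ := exists_nat_one_div_lt (show (0:ℝ) < ε'/3 by linarith)
  obtain ⟨N₁, hN₁⟩ := exists_nat_gt (9*C/ε')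
  obtain ⟨N₀, hN₀⟩ := (hω m).exists_forall_of_atTop
  refine ⟨(N₀ + N₁ + 2)^2, fun T hT => ?_⟩
  set n := Nat.sqrt T with hn
  have hn2 : n^2 ≤ T := by
    rw [pow_two]; exact Nat.sqrt_le T
  have hlt : T < (n+1)^2 := Nat.lt_succ_sqrt' T
  have hnge : N₀ + N₁ + 2 ≤ n := by
    have := Nat.sqrt_le_sqrt hT
    rwa [Nat.sqrt_eq'] at this
  have hn1 : 1 ≤ n := by omega
  -- subsequence bound at n
  have hMn : |M (n^2) ω| < (1/((m:ℝ)+1)) * ((n:ℝ))^2 := by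
    have h1 := hN₀ (n-1) (by omega)
    have h2 : (n-1) + 1 = n := by omega
    rw [h2] at h1
    have h3 : ((n-1:ℕ):ℝ) + 1 = (n:ℝ) := by
      have : ((n-1+1:ℕ):ℝ) = (n:ℝ) := by exact_mod_cast congrArg Nat.cast h2
      push_cast at this ⊢; linarith
    rwa [h3] at h1
  -- real-valued quantities
  have hTpos : (0:ℝ) < (T:ℝ) := by
    have : 0 < T := by
      have h2 := Nat.pow_le_pow_left hn1 2
      simp only [one_pow] at h2
      omega
    exact_mod_cast this
  have hnR : (1:ℝ) ≤ (n:ℝ) := by exact_mod_cast hn1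
  have hn2R : ((n:ℝ))^2 ≤ (T:ℝ) := by exact_mod_cast hn2
  have hltR : (T:ℝ) ≤ (n:ℝ)^2 + 2*(n:ℝ) := by
    have : T ≤ n^2 + 2*n := by nlinarith [hlt]
    calc (T:ℝ) ≤ ((n^2 + 2*n : ℕ):ℝ) := by exact_mod_cast this
      _ = (n:ℝ)^2 + 2*(n:ℝ) := by push_cast; ring
  have htel' : |M T ω - M (n^2) ω| ≤ C * ((T:ℝ) - ((n^2:ℕ):ℝ)) := htel _ _ hn2 ω
  have hcast : ((n^2:ℕ):ℝ) = (n:ℝ)^2 := by push_cast; ring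
  -- m bound
  have hmR : 1/((m:ℝ)+1) < ε'/3 := hm
  have hmpos : (0:ℝ) < 1/((m:ℝ)+1) := by positivity
  -- N₁ bound : 9C < ε' * N₁ ≤ ε' * n
  have hN₁R : 9*C < ε' * (n:ℝ) := by
    have h1 : 9*C/ε' < (N₁:ℝ) := hN₁
    have h2 : (N₁:ℝ) ≤ (n:ℝ) := by exact_mod_cast (by omega : N₁ ≤ n)
    have := (div_lt_iff₀ hε').mp h1
    nlinarith
  -- assemble
  have hA : |M T ω| < (2*ε'/3) * (T:ℝ) := by
    have t1 : |M T ω| ≤ |M (n^2) ω| + C * ((T:ℝ) - (n:ℝ)^2) := by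
      have := abs_sub_le (M T ω) (M (n^2) ω) 0
      rw [hcast] at htel'
      simp only [sub_zero] at this
      linarith [abs_nonneg (M (n^2) ω)]
    have t2 : |M (n^2) ω| < (ε'/3) * (T:ℝ) := by
      have : (1/((m:ℝ)+1)) * (n:ℝ)^2 ≤ (ε'/3) * (T:ℝ) := by nlinarith
      linarith
    have t3 : C * ((T:ℝ) - (n:ℝ)^2) ≤ C * (2*(n:ℝ)) := by nlinarith
    have t4 : C * (2*(n:ℝ)) < (ε'/3) * (T:ℝ) := by nlinarith
    linarith
  rw [Real.dist_eq, sub_zero, abs_div, abs_of_nonneg (le_of_lt hTpos),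
    div_lt_iff₀ hTpos]
  nlinarith


lemma partition_integral' {Ω ι : Type*} [MeasurableSpace Ω] [Fintype ι]
    (μ : Measure Ω) [IsFiniteMeasure μ] (cells : ι → Set Ω)
    (hm : ∀ i, MeasurableSet (cells i)) (c : ι → ℝ) (f : Ω → ℝ)
    (hf : ∀ ω, f ω = ∑ i, (cells i).indicator (fun _ => c i) ω) :
    Integrable f μ ∧ ∫ ω, f ω ∂μ = ∑ i, c i * (μ (cells i)).toReal := by
  have hfe : f = fun ω => ∑ i, (cells i).indicator (fun _ => c i) ω := funext hf
  have hint : ∀ i ∈ Finset.univ (α := ι),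
      Integrable ((cells i).indicator (fun _ => c i)) μ :=
    fun i _ => (integrable_const (c i)).indicator (hm i)
  constructor
  · rw [hfe]; exact integrable_finset_sum _ hint
  · rw [hfe, integral_finset_sum _ hint]
    refine Finset.sum_congr rfl fun i _ => ?_
    rw [integral_indicator_const _ (hm i), smul_eq_mul, mul_comm]; rfl

lemma cyl_measurable {Ω : Type*} [MeasurableSpace Ω] (Z : ℕ → Ω → Bool)
    (hZ : ∀ t, Measurable (Z t)) (n : ℕ) (path : ℕ → Bool) :
    MeasurableSet {ω | ∀ i ∈ Finset.Icc 1 n, Z i ω = path i} := by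
  have h : {ω | ∀ i ∈ Finset.Icc 1 n, Z i ω = path i}
      = ⋂ i ∈ Finset.Icc 1 n, {ω | Z i ω = path i} := by ext ω; simp
  rw [h]
  refine Finset.measurableSet_biInter _ fun i _ => ?_
  exact (hZ i) (measurableSet_singleton (path i))

set_option maxHeartbeats 1000000 in
lemma orthE {Ω : Type*} [MeasurableSpace Ω] (μ : Measure Ω) [IsProbabilityMeasure μ]
    (Z : ℕ → Ω → Bool) (hZmeas : ∀ t, Measurable (Z t))
    (E : ℕ → Ω → ℝ) (hEmeas : ∀ t, Measurable (E t))
    (hEval : ∀ t ω, E t ω = 0 ∨ E t ω = 1)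
    (eB eG : ℝ) (heB : 0 ≤ eB ∧ eB ≤ 1) (heG : 0 ≤ eG ∧ eG ≤ 1)
    (hcond : ∀ n, 1 ≤ n → ∀ path : ℕ → Bool,
      ∀ S : Finset ℕ, S ⊆ Finset.Icc 1 n → ∀ v : ℕ → Bool,
      μ ({ω | ∀ t ∈ S, E t ω = (if v t then (1 : ℝ) else 0)}
          ∩ {ω | ∀ i ∈ Finset.Icc 1 n, Z i ω = path i})
        = ENNReal.ofReal (∏ t ∈ S,
            (if v t then (if path t then eB else eG)
              else 1 - (if path t then eB else eG)))
            * μ {ω | ∀ i ∈ Finset.Icc 1 n, Z i ω = path i})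
    (s t : ℕ) (hs : 1 ≤ s) (ht : 1 ≤ t) (hst : s ≠ t) :
    ∫ ω, (E s ω - (if Z s ω then eB else eG)) * (E t ω - (if Z t ω then eB else eG)) ∂μ
      = 0 := by
  classical
  set n := max s t with hn
  have hn1 : 1 ≤ n := le_trans hs (le_max_left _ _)
  have hsmem : s ∈ Finset.Icc 1 n := Finset.mem_Icc.mpr ⟨hs, le_max_left _ _⟩
  have htmem : t ∈ Finset.Icc 1 n := Finset.mem_Icc.mpr ⟨ht, le_max_right _ _⟩
  set Sub := {i // i ∈ Finset.Icc 1 n} with hSub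
  set ext : (Sub → Bool) → ℕ → Bool :=
    fun q i => if h : i ∈ Finset.Icc 1 n then q ⟨i, h⟩ else false with hext
  set vfun : Bool → Bool → ℕ → Bool :=
    fun vs vt i => if i = s then vs else if i = t then vt else false with hvfun
  set cells : ((Sub → Bool) × Bool × Bool) → Set Ω := fun qv =>
    {ω | ∀ t' ∈ ({s, t} : Finset ℕ), E t' ω = (if vfun qv.2.1 qv.2.2 t' then (1:ℝ) else 0)}
      ∩ {ω | ∀ i ∈ Finset.Icc 1 n, Z i ω = ext qv.1 i} with hcells
  set c : ((Sub → Bool) × Bool × Bool) → ℝ := fun qv =>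
    ((if qv.2.1 then (1:ℝ) else 0) - (if qv.1 ⟨s, hsmem⟩ then eB else eG))
      * ((if qv.2.2 then (1:ℝ) else 0) - (if qv.1 ⟨t, htmem⟩ then eB else eG)) with hc
  have hm : ∀ qv, MeasurableSet (cells qv) := by
    intro qv
    refine MeasurableSet.inter ?_ (cyl_measurable Z hZmeas n _)
    have h : {ω | ∀ t' ∈ ({s, t} : Finset ℕ),
        E t' ω = (if vfun qv.2.1 qv.2.2 t' then (1:ℝ) else 0)}
        = ⋂ t' ∈ ({s, t} : Finset ℕ),
            {ω | E t' ω = (if vfun qv.2.1 qv.2.2 t' then (1:ℝ) else 0)} := by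
      ext ω; simp
    rw [h]
    refine Finset.measurableSet_biInter _ fun i _ => ?_
    exact (hEmeas i) (measurableSet_singleton _)
  -- the canonical cell of ω
  set canon : Ω → ((Sub → Bool) × Bool × Bool) := fun ω =>
    (fun k => Z k.1 ω, (if E s ω = 1 then true else false),
      (if E t ω = 1 then true else false)) with hcanon
  have hvs : ∀ vs vt : Bool, vfun vs vt s = vs := by
    intro vs vt; simp [hvfun]
  have hvt : ∀ vs vt : Bool, vfun vs vt t = vt := by
    intro vs vt; simp [hvfun, Ne.symm hst]
  have hmem : ∀ qv ω, ω ∈ cells qv ↔ qv = canon ω := by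
    intro ⟨q, vs, vt⟩ ω
    constructor
    · rintro ⟨hE, hZ⟩
      have hEs := hE s (by simp)
      have hEt := hE t (by simp)
      rw [hvs] at hEs
      rw [hvt] at hEt
      have hq : q = fun k : Sub => Z k.1 ω := by
        funext k
        have := hZ k.1 k.2
        rw [hext] at this
        simp only [dif_pos k.2] at this
        rw [this]
      refine Prod.ext ?_ (Prod.ext ?_ ?_)
      · exact hq
      · cases vs with
        | true => simp only [if_pos] at hEs; simp [hcanon, hEs]
        | false =>
          simp only [Bool.false_eq_true, if_neg] at hEs
          simp [hcanon, hEs]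
      · cases vt with
        | true => simp only [if_pos] at hEt; simp [hcanon, hEt]
        | false =>
          simp only [Bool.false_eq_true, if_neg] at hEt
          simp [hcanon, hEt]
    · intro h
      rw [h]
      constructor
      · intro t' ht'
        rcases Finset.mem_insert.mp ht' with rfl | ht'
        · rw [hvs]
          rcases hEval t' ω with h | h <;> simp [hcanon, h]
        · rcases Finset.mem_singleton.mp ht' with rfl
          rw [hvt]
          rcases hEval t' ω with h | h <;> simp [hcanon, h]
      · intro i hi
        exact (dif_pos hi :
          (if h : i ∈ Finset.Icc 1 n then (canon ω).1 ⟨i, h⟩ else false)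
            = (canon ω).1 ⟨i, hi⟩).symm
  have hf : ∀ ω, (E s ω - (if Z s ω then eB else eG)) * (E t ω - (if Z t ω then eB else eG))
      = ∑ i, (cells i).indicator (fun _ => c i) ω := by
    intro ω
    rw [Finset.sum_eq_single_of_mem (canon ω) (Finset.mem_univ _)
      (fun j _ hj => Set.indicator_of_notMem (fun hmemj => hj ((hmem j ω).mp hmemj)) _)]
    rw [Set.indicator_of_mem ((hmem _ ω).mpr rfl)]
    have h1 : (if (if E s ω = 1 then true else false) then (1:ℝ) else 0) = E s ω := by
      rcases hEval s ω with h | h <;> simp [h]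
    have h2 : (if (if E t ω = 1 then true else false) then (1:ℝ) else 0) = E t ω := by
      rcases hEval t ω with h | h <;> simp [h]
    simp only [hc, hcanon, h1, h2]
  obtain ⟨hI, hIeq⟩ := partition_integral' μ cells hm c _ hf
  rw [hIeq]
  rw [Fintype.sum_prod_type]
  refine Finset.sum_eq_zero fun q _ => ?_
  -- evaluate the measures via hcond
  have hsub : ({s, t} : Finset ℕ) ⊆ Finset.Icc 1 n := by
    intro x hx
    rcases Finset.mem_insert.mp hx with rfl | hx
    · exact hsmem
    · rcases Finset.mem_singleton.mp hx with rfl; exact htmem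
  set es : ℝ := if q ⟨s, hsmem⟩ then eB else eG with hes
  set et : ℝ := if q ⟨t, htmem⟩ then eB else eG with het
  have hes01 : 0 ≤ es ∧ es ≤ 1 := by
    rw [hes]; cases (q ⟨s, hsmem⟩) <;> simp [heB, heG]
  have het01 : 0 ≤ et ∧ et ≤ 1 := by
    rw [het]; cases (q ⟨t, htmem⟩) <;> simp [heB, heG]
  set r : ℝ := (μ {ω | ∀ i ∈ Finset.Icc 1 n, Z i ω = ext q i}).toReal with hr
  have hterm : ∀ vs vt : Bool, c (q, vs, vt) * (μ (cells (q, vs, vt))).toReal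
      = (((if vs then (1:ℝ) else 0) - es) * (if vs then es else 1 - es))
        * ((((if vt then (1:ℝ) else 0) - et) * (if vt then et else 1 - et))) * r := by
    intro vs vt
    have hkey := hcond n hn1 (ext q) {s, t} hsub (vfun vs vt)
    have hprod : (∏ t' ∈ ({s, t} : Finset ℕ),
        (if vfun vs vt t' then (if ext q t' then eB else eG)
          else 1 - (if ext q t' then eB else eG)))
        = (if vs then es else 1 - es) * (if vt then et else 1 - et) := by
      rw [Finset.prod_pair hst, hvs, hvt]
      have hexs : ext q s = q ⟨s, hsmem⟩ := dif_pos hsmem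
      have hext' : ext q t = q ⟨t, htmem⟩ := dif_pos htmem
      rw [hexs, hext', ← hes, ← het]
    have hnn : 0 ≤ (if vs then es else 1 - es) * (if vt then et else 1 - et) := by
      have h1 : 0 ≤ (if vs then es else 1 - es) := by
        cases vs <;> simp <;> [linarith [hes01.2]; exact hes01.1]
      have h2 : 0 ≤ (if vt then et else 1 - et) := by
        cases vt <;> simp <;> [linarith [het01.2]; exact het01.1]
      exact mul_nonneg h1 h2
    have hμ : (μ (cells (q, vs, vt))).toReal
        = (if vs then es else 1 - es) * (if vt then et else 1 - et) * r := by
      rw [hcells]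
      simp only []
      rw [hkey, hprod, ENNReal.toReal_mul, ENNReal.toReal_ofReal hnn, hr]
    rw [hμ, hc]
    ring
  rw [Fintype.sum_prod_type]
  rw [Fintype.sum_bool, Fintype.sum_bool, Fintype.sum_bool]
  rw [hterm, hterm, hterm, hterm]
  norm_num
  ring

set_option maxHeartbeats 1000000 in
lemma orthZ {Ω : Type*} [MeasurableSpace Ω] (μ : Measure Ω) [IsProbabilityMeasure μ]
    (Z : ℕ → Ω → Bool) (hZmeas : ∀ t, Measurable (Z t))
    (a b : ℝ) (ha : 0 < a ∧ a < 1) (hb : 0 < b ∧ b < 1)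
    (trans : Bool → Bool → ℝ)
    (htransBG : trans true false = a) (htransBB : trans true true = 1 - a)
    (htransGB : trans false true = b) (htransGG : trans false false = 1 - b)
    (hMarkov : ∀ t, 1 ≤ t → ∀ path : ℕ → Bool, ∀ z : Bool,
      μ ({ω | Z (t + 1) ω = z}
          ∩ {ω | ∀ i ∈ Finset.Icc 1 t, Z i ω = path i})
        = ENNReal.ofReal (trans (path t) z)
            * μ {ω | ∀ i ∈ Finset.Icc 1 t, Z i ω = path i})
    (s t' : ℕ) (hs : 2 ≤ s) (hst : s ≤ t') :
    ∫ ω, ((if Z s ω then (1:ℝ) else 0) - b - (1-a-b) * (if Z (s-1) ω then (1:ℝ) else 0))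
        * ((if Z (t'+1) ω then (1:ℝ) else 0) - b - (1-a-b) * (if Z t' ω then (1:ℝ) else 0))
        ∂μ = 0 := by
  classical
  have ht'1 : 1 ≤ t' := le_trans (by omega) hst
  have hsmem : s ∈ Finset.Icc 1 t' := Finset.mem_Icc.mpr ⟨by omega, hst⟩
  have hs1mem : s - 1 ∈ Finset.Icc 1 t' := Finset.mem_Icc.mpr ⟨by omega, by omega⟩
  have ht'mem : t' ∈ Finset.Icc 1 t' := Finset.mem_Icc.mpr ⟨ht'1, le_refl _⟩
  set Sub := {i // i ∈ Finset.Icc 1 t'} with hSub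
  set ext : (Sub → Bool) → ℕ → Bool :=
    fun q i => if h : i ∈ Finset.Icc 1 t' then q ⟨i, h⟩ else false with hext
  set cells : ((Sub → Bool) × Bool) → Set Ω := fun qz =>
    {ω | Z (t' + 1) ω = qz.2} ∩ {ω | ∀ i ∈ Finset.Icc 1 t', Z i ω = ext qz.1 i} with hcells
  set c : ((Sub → Bool) × Bool) → ℝ := fun qz =>
    ((if qz.1 ⟨s, hsmem⟩ then (1:ℝ) else 0) - b
        - (1-a-b) * (if qz.1 ⟨s-1, hs1mem⟩ then (1:ℝ) else 0))
      * ((if qz.2 then (1:ℝ) else 0) - b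
        - (1-a-b) * (if qz.1 ⟨t', ht'mem⟩ then (1:ℝ) else 0)) with hc
  have hm : ∀ qz, MeasurableSet (cells qz) := by
    intro qz
    exact ((hZmeas (t'+1)) (measurableSet_singleton qz.2)).inter
      (cyl_measurable Z hZmeas t' _)
  set canon : Ω → ((Sub → Bool) × Bool) := fun ω =>
    (fun k => Z k.1 ω, Z (t'+1) ω) with hcanon
  have hmem : ∀ qz ω, ω ∈ cells qz ↔ qz = canon ω := by
    intro ⟨q, z⟩ ω
    constructor
    · rintro ⟨hZe, hZc⟩
      have hq : q = fun k : Sub => Z k.1 ω := by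
        funext k
        have h2 := hZc k.1 k.2
        rw [hext] at h2
        simp only [dif_pos k.2] at h2
        rw [h2]
      refine Prod.ext hq ?_
      exact hZe.symm
    · intro h
      rw [h]
      refine ⟨rfl, ?_⟩
      intro i hi
      exact (dif_pos hi :
        (if h : i ∈ Finset.Icc 1 t' then (canon ω).1 ⟨i, h⟩ else false)
          = (canon ω).1 ⟨i, hi⟩).symm
  have hf : ∀ ω, ((if Z s ω then (1:ℝ) else 0) - b
        - (1-a-b) * (if Z (s-1) ω then (1:ℝ) else 0))
      * ((if Z (t'+1) ω then (1:ℝ) else 0) - b - (1-a-b) * (if Z t' ω then (1:ℝ) else 0))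
      = ∑ i, (cells i).indicator (fun _ => c i) ω := by
    intro ω
    rw [Finset.sum_eq_single_of_mem (canon ω) (Finset.mem_univ _)
      (fun j _ hj => Set.indicator_of_notMem (fun hmemj => hj ((hmem j ω).mp hmemj)) _)]
    rw [Set.indicator_of_mem ((hmem _ ω).mpr rfl)]
  obtain ⟨hI, hIeq⟩ := partition_integral' μ cells hm c _ hf
  rw [hIeq, Fintype.sum_prod_type]
  refine Finset.sum_eq_zero fun q _ => ?_
  have hμ : ∀ z : Bool, (μ (cells (q, z))).toReal
      = trans (q ⟨t', ht'mem⟩) z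
          * (μ {ω | ∀ i ∈ Finset.Icc 1 t', Z i ω = ext q i}).toReal := by
    intro z
    have hkey := hMarkov t' ht'1 (ext q) z
    have hnn : 0 ≤ trans (ext q t') z := by
      cases h1 : ext q t' <;> cases z <;>
        simp [htransBG, htransBB, htransGB, htransGG] <;> linarith [ha.1, ha.2, hb.1, hb.2]
    have hextt' : ext q t' = q ⟨t', ht'mem⟩ := dif_pos ht'mem
    rw [hcells]
    simp only []
    rw [hkey, ENNReal.toReal_mul, ENNReal.toReal_ofReal hnn, hextt']
  have hval : ∀ z : Bool, c (q, z) =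
      ((if q ⟨s, hsmem⟩ then (1:ℝ) else 0) - b
          - (1-a-b) * (if q ⟨s-1, hs1mem⟩ then (1:ℝ) else 0))
        * ((if z then (1:ℝ) else 0) - b
          - (1-a-b) * (if q ⟨t', ht'mem⟩ then (1:ℝ) else 0)) := fun z => rfl
  rw [Fintype.sum_bool, hval, hval, hμ, hμ]
  obtain hq | hq := Bool.eq_false_or_eq_true (q ⟨t', ht'mem⟩) <;>
    rw [hq] <;>
    simp only [eq_self_iff_true, Bool.false_eq_true, if_true, if_false,
      htransBG, htransBB, htransGB, htransGG] <;>
    ring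

set_option maxHeartbeats 2000000

/-- **Theorem 5, asymptotic almost-sure guarantee (CA-OCRDC over a
Gilbert–Elliott erasure channel).**
The channel state `{Z_t}` is a time-homogeneous Markov chain on `{B, G}` (encoded
as `Bool`, `true = B`, `false = G`) with `P(B → G) = a`, `P(G → B) = b`,
`a, b ∈ (0,1)`, `a + b ≠ 1`, spectral gap `γ = 1 − |1 − a − b| < 1`, stationary
distribution `π(B) = b/(a+b)`, `π(G) = a/(a+b)`, and steady-state erasure
probability `ē = π(B) e_B + π(G) e_G < (D − ε)/D_max`. Conditionally on the
trajectory `{Z_t}` the erasure indicators `E_t` are independent with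
`P(E_t = 1 ∣ Z_t) = e_B 𝟙{Z_t = B} + e_G 𝟙{Z_t = G}`, and all algorithm
quantities are random variables satisfying the CA-OCRDC recursions pointwise,
with Assumption 1 holding surely. Then almost surely
`limsup_{T → ∞} (1/T) ∑_{t=1}^T d(X_t, X̂_t) ≤ D`. -/
theorem ca_ocrdc_gilbert_elliott_asymptotic
    {Ω : Type*} [MeasurableSpace Ω] (μ : Measure Ω) [IsProbabilityMeasure μ]
    {𝒳 : Type*} [Fintype 𝒳] [Nonempty 𝒳]
    (Dmax : ℝ) (hDmax : 0 < Dmax)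
    (d : 𝒳 → 𝒳 → ℝ) (hd : ∀ x y, 0 ≤ d x y ∧ d x y ≤ Dmax) (hdd : ∀ x, d x x = 0)
    (D ε : ℝ) (hD : 0 < D ∧ D ≤ Dmax) (hε : 0 < ε ∧ ε < D)
    (η : ℝ) (hη : 0 < η)
    (L : ℝ)
    (lam₀ : ℝ) (hlam₀ : 0 < lam₀ ∧ lam₀ ≤ L / ε + η * (Dmax - ε))
    -- the Gilbert–Elliott channel: two-state Markov chain
    (Z : ℕ → Ω → Bool) (hZmeas : ∀ t, Measurable (Z t))
    (a b : ℝ) (ha : 0 < a ∧ a < 1) (hb : 0 < b ∧ b < 1) (hab : a + b ≠ 1)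
    (trans : Bool → Bool → ℝ)
    (htransBG : trans true false = a) (htransBB : trans true true = 1 - a)
    (htransGB : trans false true = b) (htransGG : trans false false = 1 - b)
    (hMarkov : ∀ t, 1 ≤ t → ∀ path : ℕ → Bool, ∀ z : Bool,
      μ ({ω | Z (t + 1) ω = z}
          ∩ {ω | ∀ i ∈ Finset.Icc 1 t, Z i ω = path i})
        = ENNReal.ofReal (trans (path t) z)
            * μ {ω | ∀ i ∈ Finset.Icc 1 t, Z i ω = path i})
    (eB eG : ℝ) (heB : 0 ≤ eB ∧ eB ≤ 1) (heG : 0 ≤ eG ∧ eG ≤ 1)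
    (πB πG ebar γ : ℝ)
    (hπB : πB = b / (a + b)) (hπG : πG = a / (a + b))
    (hebar : ebar = πB * eB + πG * eG)
    (hγ : γ = 1 - |1 - a - b|)
    (hebarlt : ebar < (D - ε) / Dmax)
    -- erasure indicators, conditionally independent given the chain trajectory,
    -- with state-dependent erasure probabilities
    (E : ℕ → Ω → ℝ)
    (hEmeas : ∀ t, Measurable (E t))
    (hEval : ∀ t ω, E t ω = 0 ∨ E t ω = 1)
    (hcond : ∀ n, 1 ≤ n → ∀ path : ℕ → Bool,
      ∀ S : Finset ℕ, S ⊆ Finset.Icc 1 n → ∀ v : ℕ → Bool,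
      μ ({ω | ∀ t ∈ S, E t ω = (if v t then (1 : ℝ) else 0)}
          ∩ {ω | ∀ i ∈ Finset.Icc 1 n, Z i ω = path i})
        = ENNReal.ofReal (∏ t ∈ S,
            (if v t then (if path t then eB else eG)
              else 1 - (if path t then eB else eG)))
            * μ {ω | ∀ i ∈ Finset.Icc 1 n, Z i ω = path i})
    -- the CA-OCRDC algorithm, with all quantities random and the recursions
    -- holding pointwise
    (X Xtil Xhat : ℕ → Ω → 𝒳) (p : ℕ → Ω → 𝒳 → ℝ)
    (hp : ∀ t ω x, 0 < p t ω x ∧ p t ω x ≤ 1) (hp1 : ∀ t ω, ∑ x, p t ω x = 1)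
    (hL : ∀ t ω x, -Real.log (p t ω x) < L)
    (lam s δtgt Q : ℕ → Ω → ℝ)
    (hinit : ∀ ω, lam 1 ω = lam₀)
    (hs : ∀ t ω, s t ω = max 0 (lam t ω))
    (hmin : ∀ t, 1 ≤ t → ∀ ω x,
      -Real.log (p t ω (Xtil t ω)) + s t ω * d (X t ω) (Xtil t ω)
        ≤ -Real.log (p t ω x) + s t ω * d (X t ω) x)
    (hupd : ∀ t, 1 ≤ t → ∀ ω,
      lam (t + 1) ω = lam t ω + η * (d (X t ω) (Xtil t ω) - D + δtgt t ω))
    (hrec0 : ∀ t, 1 ≤ t → ∀ ω, E t ω = 0 → Xhat t ω = Xtil t ω)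
    (hrec1 : ∀ t, 1 ≤ t → ∀ ω, E t ω = 1 →
      d (X t ω) (Xtil t ω) ≤ d (X t ω) (Xhat t ω))
    (hQ0 : ∀ ω, Q 0 ω = 0)
    (hQ : ∀ t ω, Q t ω = ∑ i ∈ Finset.Icc 1 t,
      ((d (X i ω) (Xhat i ω) - d (X i ω) (Xtil i ω)) - δtgt i ω))
    (hδ1 : ∀ ω, δtgt 1 ω = 0)
    (hδ : ∀ t, 1 ≤ t → ∀ ω, δtgt (t + 1) ω = min (D - ε) (Q t ω))
    -- measurability of the relevant random quantities
    (hdmeashat : ∀ t, Measurable (fun ω => d (X t ω) (Xhat t ω)))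
    (hdmeastil : ∀ t, Measurable (fun ω => d (X t ω) (Xtil t ω))) :
    ∀ᵐ ω ∂μ, Filter.limsup
      (fun T : ℕ => (1 / (T : ℝ)) * ∑ t ∈ Finset.Icc 1 T, d (X t ω) (Xhat t ω))
      Filter.atTop ≤ D := by
  classical
  obtain ⟨hD0, hDle⟩ := hD
  obtain ⟨hε0, hεD⟩ := hε
  -- the centered processes
  set dE : ℕ → Ω → ℝ := fun t ω => E t ω - (if Z t ω then eB else eG) with hdEdef
  set ME : ℕ → Ω → ℝ := fun T ω => ∑ t ∈ Finset.Icc 1 T, dE t ω with hMEdef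
  set dZ : ℕ → Ω → ℝ := fun t ω =>
    (if Z t ω then (1:ℝ) else 0) - b - (1-a-b) * (if Z (t-1) ω then (1:ℝ) else 0) with hdZdef
  set MZ : ℕ → Ω → ℝ := fun T ω => ∑ t ∈ Finset.Icc 2 T, dZ t ω with hMZdef
  -- measurability
  have hokB : ∀ (t : ℕ) (c₁ c₂ : ℝ), Measurable (fun ω => if Z t ω then c₁ else c₂) := by
    intro t c₁ c₂
    exact Measurable.ite ((hZmeas t) (measurableSet_singleton true))
      measurable_const measurable_const
  have hdEmeas : ∀ t, Measurable (dE t) := fun t => (hEmeas t).sub (hokB t eB eG)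
  have hMEmeas : ∀ T, Measurable (ME T) :=
    fun T => Finset.measurable_sum _ (fun t _ => hdEmeas t)
  have hdZmeas : ∀ t, Measurable (dZ t) := by
    intro t
    exact (((hokB t 1 0).sub measurable_const).sub (measurable_const.mul (hokB (t-1) 1 0)))
  have hMZmeas : ∀ T, Measurable (MZ T) :=
    fun T => Finset.measurable_sum _ (fun t _ => hdZmeas t)
  -- pointwise bounds
  have hdEb : ∀ t ω, |dE t ω| ≤ 1 := by
    intro t ω
    rw [abs_le]
    rcases hEval t ω with h | h <;> cases hz : Z t ω <;>
      simp only [hdEdef, h, hz, if_true, if_false] <;> constructor <;>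
      simp <;> linarith [heB.1, heB.2, heG.1, heG.2]
  have hdZb : ∀ t ω, |dZ t ω| ≤ 9 := by
    intro t ω
    rw [abs_le]
    cases hz : Z t ω <;> cases hz' : Z (t-1) ω <;>
      simp only [hdZdef, hz, hz', if_true, if_false] <;> constructor <;>
      simp <;> nlinarith [ha.1, ha.2, hb.1, hb.2]
  -- integrability of products
  have hintE : ∀ s' t', Integrable (fun ω => dE s' ω * dE t' ω) μ := by
    intro s' t'
    refine Integrable.mono' (integrable_const 1)
      ((hdEmeas s').mul (hdEmeas t')).aestronglyMeasurable (ae_of_all _ fun ω => ?_)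
    rw [Real.norm_eq_abs, abs_mul]
    calc |dE s' ω| * |dE t' ω| ≤ 1 * 1 :=
          mul_le_mul (hdEb _ _) (hdEb _ _) (abs_nonneg _) zero_le_one
      _ = 1 := by ring
  have hintZ : ∀ s' t', Integrable (fun ω => dZ s' ω * dZ t' ω) μ := by
    intro s' t'
    refine Integrable.mono' (integrable_const 81)
      ((hdZmeas s').mul (hdZmeas t')).aestronglyMeasurable (ae_of_all _ fun ω => ?_)
    rw [Real.norm_eq_abs, abs_mul]
    calc |dZ s' ω| * |dZ t' ω| ≤ 9 * 9 :=
          mul_le_mul (hdZb _ _) (hdZb _ _) (abs_nonneg _) (by norm_num)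
      _ = 81 := by ring
  -- diagonal bounds
  have hdiagE : ∀ t', ∫ ω, dE t' ω * dE t' ω ∂μ ≤ 1 := by
    intro t'
    have h1 : ∫ ω, dE t' ω * dE t' ω ∂μ ≤ ∫ _ω, (1:ℝ) ∂μ := by
      refine integral_mono (hintE t' t') (integrable_const 1) (fun ω => ?_)
      have := hdEb t' ω
      nlinarith [abs_nonneg (dE t' ω), sq_abs (dE t' ω)]
    simpa using h1
  have hdiagZ : ∀ t', ∫ ω, dZ t' ω * dZ t' ω ∂μ ≤ 81 := by
    intro t'
    have h1 : ∫ ω, dZ t' ω * dZ t' ω ∂μ ≤ ∫ _ω, (81:ℝ) ∂μ := by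
      refine integral_mono (hintZ t' t') (integrable_const 81) (fun ω => ?_)
      have := hdZb t' ω
      nlinarith [abs_nonneg (dZ t' ω), sq_abs (dZ t' ω)]
    simpa using h1
  -- variance bounds
  have hvarE : ∀ T : ℕ, ∫ ω, (ME T ω)^2 ∂μ ≤ 1 * T := by
    intro T
    have hexp : ∀ ω, (ME T ω)^2
        = ∑ s' ∈ Finset.Icc 1 T, ∑ t' ∈ Finset.Icc 1 T, dE s' ω * dE t' ω := by
      intro ω
      simp only [hMEdef]
      rw [sq, Finset.sum_mul_sum]
    calc ∫ ω, (ME T ω)^2 ∂μ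
        = ∫ ω, ∑ s' ∈ Finset.Icc 1 T, ∑ t' ∈ Finset.Icc 1 T, dE s' ω * dE t' ω ∂μ :=
          integral_congr_ae (ae_of_all _ hexp)
      _ = ∑ s' ∈ Finset.Icc 1 T, ∫ ω, ∑ t' ∈ Finset.Icc 1 T, dE s' ω * dE t' ω ∂μ :=
          integral_finset_sum _ (fun i _ => integrable_finset_sum _ (fun j _ => hintE i j))
      _ = ∑ s' ∈ Finset.Icc 1 T, ∑ t' ∈ Finset.Icc 1 T, ∫ ω, dE s' ω * dE t' ω ∂μ :=
          Finset.sum_congr rfl (fun i _ => integral_finset_sum _ (fun j _ => hintE i j))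
      _ ≤ ∑ _s' ∈ Finset.Icc 1 T, (1:ℝ) := by
          refine Finset.sum_le_sum fun i hi => ?_
          have hi1 : 1 ≤ i := (Finset.mem_Icc.mp hi).1
          have hsingle : ∑ t' ∈ Finset.Icc 1 T, ∫ ω, dE i ω * dE t' ω ∂μ
              = ∫ ω, dE i ω * dE i ω ∂μ := by
            refine Finset.sum_eq_single_of_mem i hi (fun j hj hne => ?_)
            have hj1 : 1 ≤ j := (Finset.mem_Icc.mp hj).1
            exact orthE μ Z hZmeas E hEmeas hEval eB eG heB heG hcond i j hi1 hj1
              (Ne.symm hne)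
          rw [hsingle]
          exact hdiagE i
      _ = (Finset.Icc 1 T).card • (1:ℝ) := by rw [Finset.sum_const]
      _ ≤ 1 * T := by
          rw [Nat.card_Icc, nsmul_eq_mul]
          simp
  have hvarZ : ∀ T : ℕ, ∫ ω, (MZ T ω)^2 ∂μ ≤ 81 * T := by
    intro T
    have hexp : ∀ ω, (MZ T ω)^2
        = ∑ s' ∈ Finset.Icc 2 T, ∑ t' ∈ Finset.Icc 2 T, dZ s' ω * dZ t' ω := by
      intro ω
      simp only [hMZdef]
      rw [sq, Finset.sum_mul_sum]
    have horthZ : ∀ i j, 2 ≤ i → 2 ≤ j → i ≠ j → ∫ ω, dZ i ω * dZ j ω ∂μ = 0 := by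
      intro i j hi2 hj2 hne
      rcases lt_or_gt_of_ne hne with hlt | hgt
      · have hj1 : j - 1 + 1 = j := by omega
        have := orthZ μ Z hZmeas a b ha hb trans htransBG htransBB htransGB htransGG
          hMarkov i (j-1) hi2 (by omega)
        rw [hj1] at this
        exact this
      · have hi1 : i - 1 + 1 = i := by omega
        have h0 := orthZ μ Z hZmeas a b ha hb trans htransBG htransBB htransGB htransGG
          hMarkov j (i-1) hj2 (by omega)
        rw [hi1] at h0
        rw [← h0]
        refine integral_congr_ae (ae_of_all _ fun ω => ?_)
        simp only [hdZdef]
        ring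
    calc ∫ ω, (MZ T ω)^2 ∂μ
        = ∫ ω, ∑ s' ∈ Finset.Icc 2 T, ∑ t' ∈ Finset.Icc 2 T, dZ s' ω * dZ t' ω ∂μ :=
          integral_congr_ae (ae_of_all _ hexp)
      _ = ∑ s' ∈ Finset.Icc 2 T, ∫ ω, ∑ t' ∈ Finset.Icc 2 T, dZ s' ω * dZ t' ω ∂μ :=
          integral_finset_sum _ (fun i _ => integrable_finset_sum _ (fun j _ => hintZ i j))
      _ = ∑ s' ∈ Finset.Icc 2 T, ∑ t' ∈ Finset.Icc 2 T, ∫ ω, dZ s' ω * dZ t' ω ∂μ :=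
          Finset.sum_congr rfl (fun i _ => integral_finset_sum _ (fun j _ => hintZ i j))
      _ ≤ ∑ _s' ∈ Finset.Icc 2 T, (81:ℝ) := by
          refine Finset.sum_le_sum fun i hi => ?_
          have hi2 : 2 ≤ i := (Finset.mem_Icc.mp hi).1
          have hsingle : ∑ t' ∈ Finset.Icc 2 T, ∫ ω, dZ i ω * dZ t' ω ∂μ
              = ∫ ω, dZ i ω * dZ i ω ∂μ := by
            refine Finset.sum_eq_single_of_mem i hi (fun j hj hne => ?_)
            exact horthZ i j hi2 (Finset.mem_Icc.mp hj).1 (Ne.symm hne)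
          rw [hsingle]
          exact hdiagZ i
      _ = (Finset.Icc 2 T).card • (81:ℝ) := by rw [Finset.sum_const]
      _ ≤ 81 * T := by
          rw [Nat.card_Icc, nsmul_eq_mul]
          have : ((T + 1 - 2 : ℕ) : ℝ) ≤ (T:ℝ) := by
            have : T + 1 - 2 ≤ T := by omega
            exact_mod_cast this
          nlinarith
  -- step bounds and initial values
  have hME0 : ∀ ω, ME 0 ω = 0 := by intro ω; simp [hMEdef]
  have hMZ0 : ∀ ω, MZ 0 ω = 0 := by intro ω; simp [hMZdef]
  have hMEstep : ∀ T ω, |ME (T+1) ω - ME T ω| ≤ 1 := by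
    intro T ω
    have h1 : ME (T+1) ω - ME T ω = dE (T+1) ω := by
      simp only [hMEdef]
      rw [Finset.sum_Icc_succ_top (by omega : 1 ≤ T+1)]
      ring
    rw [h1]; exact hdEb _ _
  have hMZstep : ∀ T ω, |MZ (T+1) ω - MZ T ω| ≤ 9 := by
    intro T ω
    rcases Nat.lt_or_ge T 1 with hT | hT
    · interval_cases T
      simp only [hMZdef]
      norm_num
    · have h1 : MZ (T+1) ω - MZ T ω = dZ (T+1) ω := by
        simp only [hMZdef]
        rw [Finset.sum_Icc_succ_top (by omega : 2 ≤ T+1)]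
        ring
      rw [h1]; exact hdZb _ _
  -- almost-sure LLN for both processes
  have haeE := lln_aux' μ ME 1 le_rfl hMEmeas hME0 hMEstep hvarE
  have haeZ := lln_aux' μ MZ 81 (by norm_num) hMZmeas hMZ0
    (fun T ω' => le_trans (hMZstep T ω') (by norm_num)) hvarZ
  filter_upwards [haeE, haeZ] with ω hMEten hMZten
  ----------------------------------------------------------------
  -- from here on, everything is deterministic for this fixed ω
  ----------------------------------------------------------------
  have hab0 : (0:ℝ) < a + b := by linarith [ha.1, hb.1]
  set Yv : ℕ → ℝ := fun t => if Z t ω then (1:ℝ) else 0 with hYv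
  set SY : ℕ → ℝ := fun T => ∑ t ∈ Finset.Icc 1 T, Yv t with hSY
  set SE : ℕ → ℝ := fun T => ∑ t ∈ Finset.Icc 1 T, E t ω with hSE
  have hYv01 : ∀ t, 0 ≤ Yv t ∧ Yv t ≤ 1 := by
    intro t; cases hz : Z t ω <;> simp [hYv, hz]
  -- the chain identity
  have hchain : ∀ T : ℕ, 1 ≤ T →
      MZ T ω = SY T - Yv 1 - ((T:ℝ) - 1) * b - (1-a-b) * (SY T - Yv T) := by
    intro T hT
    induction T, hT using Nat.le_induction with
    | base =>
      have h1 : SY 1 = Yv 1 := by simp [hSY]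
      have h2 : MZ 1 ω = 0 := by simp [hMZdef]
      rw [h1, h2]
      push_cast
      ring
    | succ T hT ih =>
      have h1 : MZ (T+1) ω = MZ T ω + dZ (T+1) ω := by
        simp only [hMZdef]
        rw [Finset.sum_Icc_succ_top (by omega : 2 ≤ T+1)]
      have h2 : SY (T+1) = SY T + Yv (T+1) := by
        simp only [hSY]
        rw [Finset.sum_Icc_succ_top (by omega : 1 ≤ T+1)]
      have h3 : dZ (T+1) ω = Yv (T+1) - b - (1-a-b) * Yv T := by
        simp only [hdZdef, hYv, Nat.add_sub_cancel]
      rw [h1, h2, ih, h3]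
      push_cast
      ring
  -- limit of SY T / T
  have hYtend : Tendsto (fun T : ℕ => Yv T / T) atTop (𝓝 0) := by
    refine squeeze_zero_norm (fun T => ?_) tendsto_one_div_atTop_nhds_zero_nat
    rw [Real.norm_eq_abs, abs_div, Nat.abs_cast]
    rcases Nat.eq_zero_or_pos T with rfl | hT
    · simp
    · have h1 : (0:ℝ) < T := by exact_mod_cast hT
      rw [div_le_div_iff₀ h1 h1]
      have := (hYv01 T).1
      have := (hYv01 T).2
      rw [abs_of_nonneg (hYv01 T).1]
      nlinarith
  have honeT : Tendsto (fun T : ℕ => (1:ℝ) / T) atTop (𝓝 0) :=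
    tendsto_one_div_atTop_nhds_zero_nat
  have hSYtend : Tendsto (fun T : ℕ => SY T / T) atTop (𝓝 (b / (a+b))) := by
    have hg : Tendsto (fun T : ℕ =>
        (MZ T ω / T + Yv 1 * (1/T) + b * (1 - 1/T) - (1-a-b) * (Yv T / T)) / (a+b))
        atTop (𝓝 ((0 + Yv 1 * 0 + b * (1 - 0) - (1-a-b) * 0) / (a+b))) := by
      refine Tendsto.div ?_ tendsto_const_nhds (by positivity)
      refine Tendsto.sub ?_ (Tendsto.const_mul _ hYtend)
      refine Tendsto.add ?_ (Tendsto.const_mul _ (Tendsto.sub tendsto_const_nhds honeT))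
      exact Tendsto.add hMZten (Tendsto.const_mul _ honeT)
    have hval : (0 + Yv 1 * 0 + b * (1 - 0) - (1-a-b) * 0) / (a+b) = b / (a+b) := by ring
    rw [hval] at hg
    refine Tendsto.congr' ?_ hg
    filter_upwards [eventually_ge_atTop 1] with T hT
    have hTpos : (0:ℝ) < T := by exact_mod_cast hT
    have hid := hchain T hT
    field_simp
    nlinarith [hid]
  -- limit of SE T / T
  have hAtend : Tendsto (fun T : ℕ => SE T / T) atTop (𝓝 ebar) := by
    have hsum : ∀ T : ℕ, SE T = ME T ω + (eG * T + (eB - eG) * SY T) := by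
      intro T
      have h1 : ∀ t, E t ω = dE t ω + (eG + (eB - eG) * Yv t) := by
        intro t
        cases hz : Z t ω <;> simp [hdEdef, hYv, hz] <;> ring
      simp only [hSE, hMEdef]
      calc ∑ t ∈ Finset.Icc 1 T, E t ω
          = ∑ t ∈ Finset.Icc 1 T, (dE t ω + (eG + (eB - eG) * Yv t)) :=
            Finset.sum_congr rfl (fun t _ => h1 t)
        _ = (∑ t ∈ Finset.Icc 1 T, dE t ω)
              + ((Finset.Icc 1 T).card • eG + (eB - eG) * ∑ t ∈ Finset.Icc 1 T, Yv t) := by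
            rw [Finset.sum_add_distrib, Finset.sum_add_distrib, Finset.sum_const,
              Finset.mul_sum]
        _ = _ := by
            rw [Nat.card_Icc, nsmul_eq_mul, hSY]
            simp only [Nat.add_sub_cancel]
            ring
    have hg : Tendsto (fun T : ℕ => ME T ω / T + (eG + (eB - eG) * (SY T / T)))
        atTop (𝓝 (0 + (eG + (eB - eG) * (b/(a+b))))) := by
      exact Tendsto.add hMEten
        (Tendsto.add tendsto_const_nhds (Tendsto.const_mul _ hSYtend))
    have hval : 0 + (eG + (eB - eG) * (b/(a+b))) = ebar := by
      rw [hebar, hπB, hπG]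
      field_simp
      ring
    rw [hval] at hg
    refine Tendsto.congr' ?_ hg
    filter_upwards [eventually_ge_atTop 1] with T hT
    have hTpos : (0:ℝ) < T := by exact_mod_cast hT
    rw [hsum T]
    field_simp
    try ring
  ----------------------------------------------------------------
  -- deterministic algorithm analysis for this ω
  ----------------------------------------------------------------
  set u : ℕ → ℝ := fun t => d (X t ω) (Xhat t ω) - d (X t ω) (Xtil t ω) with hu
  have hub : ∀ t, 1 ≤ t → 0 ≤ u t ∧ u t ≤ Dmax * E t ω := by
    intro t ht
    rcases hEval t ω with h | h
    · have := hrec0 t ht ω h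
      constructor <;> simp [hu, this, h]
    · have h1 := hrec1 t ht ω h
      have h2 := (hd (X t ω) (Xhat t ω)).2
      have h3 := (hd (X t ω) (Xtil t ω)).1
      constructor
      · simp only [hu]; linarith
      · simp only [hu, h]; linarith
  have hQrec : ∀ t : ℕ, Q (t+1) ω = Q t ω + u (t+1) - δtgt (t+1) ω := by
    intro t
    rw [hQ (t+1) ω, hQ t ω, Finset.sum_Icc_succ_top (by omega : 1 ≤ t+1)]
    simp only [hu]
    ring
  have hQnn : ∀ t : ℕ, 0 ≤ Q t ω := by
    intro t
    induction t with
    | zero => rw [hQ0]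
    | succ k ih =>
      rcases Nat.eq_zero_or_pos k with rfl | hk
      · rw [hQrec 0, hQ0 ω, hδ1 ω]
        have := (hub 1 le_rfl).1
        linarith
      · rw [hQrec k, hδ k hk ω]
        have h1 := (hub (k+1) (by omega)).1
        have h2 : min (D - ε) (Q k ω) ≤ Q k ω := min_le_right _ _
        linarith
  have hδb : ∀ t, 1 ≤ t → 0 ≤ δtgt t ω ∧ δtgt t ω ≤ D - ε := by
    intro t ht
    match t, ht with
    | 1, _ => rw [hδ1 ω]; constructor <;> linarith
    | (k+2), _ =>
      rw [hδ (k+1) (by omega) ω]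
      exact ⟨le_min (by linarith) (hQnn (k+1)), min_le_left _ _⟩
  -- lambda is bounded
  have hL0 : 0 < L := by
    have h1 := hL 1 ω (X 1 ω)
    have h2 := (hp 1 ω (X 1 ω)).1
    have h3 := (hp 1 ω (X 1 ω)).2
    have h4 : Real.log (p 1 ω (X 1 ω)) ≤ 0 := Real.log_nonpos (le_of_lt h2) h3
    linarith
  set Lam : ℝ := L / ε + η * (Dmax - ε) with hLam
  have hdtil_small : ∀ t, 1 ≤ t → L / ε ≤ lam t ω → d (X t ω) (Xtil t ω) ≤ ε := by
    intro t ht hlam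
    have hsval : s t ω = lam t ω := by
      rw [hs t ω, max_eq_right]
      have : 0 < L / ε := by positivity
      linarith
    have h1 := hmin t ht ω (X t ω)
    rw [hdd (X t ω), hsval] at h1
    have h2 : Real.log (p t ω (Xtil t ω)) ≤ 0 :=
      Real.log_nonpos (le_of_lt (hp t ω (Xtil t ω)).1) (hp t ω (Xtil t ω)).2
    have h3 := hL t ω (X t ω)
    have h4 : lam t ω * d (X t ω) (Xtil t ω) < L := by linarith
    by_contra hcon
    push_neg at hcon
    have h5 : 0 < lam t ω := by
      have : 0 < L / ε := by positivity
      linarith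
    have h6 : lam t ω * ε ≥ L := by
      rw [ge_iff_le, ← div_le_iff₀ hε0] at *
      exact le_trans hlam (le_refl _)
    nlinarith
  have hlamb : ∀ t, 1 ≤ t → lam t ω ≤ Lam := by
    intro t ht
    induction t, ht using Nat.le_induction with
    | base => rw [hinit ω]; exact hlam₀.2
    | succ t ht ih =>
      have hup := hupd t ht ω
      have hδt := hδb t ht
      rcases le_or_gt (lam t ω) (L / ε) with hc | hc
      · have h1 := (hd (X t ω) (Xtil t ω)).2
        rw [hup, hLam]
        nlinarith
      · have h1 := hdtil_small t ht (le_of_lt hc)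
        have h2 := (hd (X t ω) (Xtil t ω)).1
        rw [hup]
        nlinarith
  -- telescoping
  have hlamsum : ∀ T : ℕ, lam (T+1) ω
      = lam₀ + η * ∑ t ∈ Finset.Icc 1 T, (d (X t ω) (Xtil t ω) - D + δtgt t ω) := by
    intro T
    induction T with
    | zero => simp [hinit ω]
    | succ T ih =>
      rw [hupd (T+1) (by omega) ω, ih, Finset.sum_Icc_succ_top (by omega : 1 ≤ T+1)]
      ring
  -- key per-time-horizon bound
  have hsumb : ∀ T : ℕ, 1 ≤ T →
      ∑ t ∈ Finset.Icc 1 T, d (X t ω) (Xhat t ω) ≤ (T:ℝ) * D + Q T ω + Lam / η := by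
    intro T hT
    have h1 : ∑ t ∈ Finset.Icc 1 T, (d (X t ω) (Xtil t ω) - D + δtgt t ω) ≤ Lam / η := by
      have h2 := hlamsum T
      have h3 := hlamb (T+1) (by omega)
      have h4 := hlam₀.1
      rw [le_div_iff₀ hη]
      nlinarith
    have h5 : ∑ t ∈ Finset.Icc 1 T, (d (X t ω) (Xtil t ω) - D + δtgt t ω)
        = (∑ t ∈ Finset.Icc 1 T, d (X t ω) (Xtil t ω)) - (T:ℝ) * D
          + ∑ t ∈ Finset.Icc 1 T, δtgt t ω := by
      rw [Finset.sum_add_distrib, Finset.sum_sub_distrib, Finset.sum_const,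
        Nat.card_Icc, nsmul_eq_mul]
      simp only [Nat.add_sub_cancel]
    have h6 : Q T ω
        = (∑ t ∈ Finset.Icc 1 T, d (X t ω) (Xhat t ω))
          - (∑ t ∈ Finset.Icc 1 T, d (X t ω) (Xtil t ω))
          - ∑ t ∈ Finset.Icc 1 T, δtgt t ω := by
      rw [hQ T ω, Finset.sum_sub_distrib, Finset.sum_sub_distrib]
    rw [h5] at h1
    linarith
  ----------------------------------------------------------------
  -- queue stability and conclusion
  ----------------------------------------------------------------
  have hebar0 : 0 ≤ ebar := by
    rw [hebar, hπB, hπG]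
    have h1 : 0 ≤ b / (a+b) := div_nonneg (le_of_lt hb.1) (le_of_lt hab0)
    have h2 : 0 ≤ a / (a+b) := div_nonneg (le_of_lt ha.1) (le_of_lt hab0)
    nlinarith [heB.1, heG.1]
  have hbeta : Dmax * ebar < D - ε := by
    have h1 := (lt_div_iff₀ hDmax).mp hebarlt
    nlinarith
  set f : ℕ → ℝ := fun T => (1/(T:ℝ)) * ∑ t ∈ Finset.Icc 1 T, d (X t ω) (Xhat t ω) with hf
  have hf0 : ∀ T, 0 ≤ f T := fun T =>
    mul_nonneg (by positivity) (Finset.sum_nonneg fun t _ => (hd _ _).1)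
  have hfinal : ∀ θ : ℝ, 0 < θ → ∀ᶠ T : ℕ in atTop, f T ≤ D + θ := by
    intro θ hθ
    set δ' : ℝ := θ / (4 * Dmax) with hδ'
    have hδ'0 : 0 < δ' := by positivity
    obtain ⟨N₀, hN₀⟩ := Metric.tendsto_atTop.mp hAtend δ' hδ'0
    set N := max N₀ 1 with hN
    have hN1 : 1 ≤ N := le_max_right _ _
    have hSEbound : ∀ m : ℕ, N ≤ m → |SE m - ebar * m| ≤ δ' * m := by
      intro m hm
      have h1 := hN₀ m (le_trans (le_max_left _ _) hm)
      rw [Real.dist_eq] at h1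
      have hm1 : (1:ℝ) ≤ m := by exact_mod_cast le_trans hN1 hm
      have hmpos : (0:ℝ) < m := by linarith
      have h2 : |SE m / m - ebar| * m ≤ δ' * m :=
        mul_le_mul_of_nonneg_right (le_of_lt h1) (le_of_lt hmpos)
      have h3 : SE m - ebar * m = (SE m / m - ebar) * m := by field_simp
      rw [h3, abs_mul, abs_of_pos hmpos]
      exact h2
    set W : ℕ → ℝ := fun m => Dmax * SE m - (D - ε) * m with hW
    have hWstep : ∀ m : ℕ, W (m+1) - W m = Dmax * E (m+1) ω - (D - ε) := by
      intro m
      simp only [hW, hSE]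
      rw [Finset.sum_Icc_succ_top (by omega : 1 ≤ m+1)]
      push_cast
      ring
    have hWdiff : ∀ k T : ℕ, N ≤ k → k ≤ T → W T - W k ≤ 2 * Dmax * δ' * T := by
      intro k T hk hkT
      have h1 := hSEbound k hk
      have h2 := hSEbound T (le_trans hk hkT)
      have hkT' : (k:ℝ) ≤ T := by exact_mod_cast hkT
      have hk0 : (0:ℝ) ≤ k := Nat.cast_nonneg k
      rw [abs_le] at h1 h2
      have e1 : Dmax * SE T ≤ Dmax * (ebar*T + δ'*T) :=
        mul_le_mul_of_nonneg_left (by linarith [h2.2]) hDmax.le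
      have e2 : Dmax * (ebar*k - δ'*k) ≤ Dmax * SE k :=
        mul_le_mul_of_nonneg_left (by linarith [h1.1]) hDmax.le
      have e3 : (Dmax*ebar - (D-ε)) * ((T:ℝ) - k) ≤ 0 :=
        mul_nonpos_of_nonpos_of_nonneg (by linarith) (by linarith)
      have e4 : Dmax * δ' * k ≤ Dmax * δ' * T :=
        mul_le_mul_of_nonneg_left hkT' (by positivity)
      simp only [hW]
      nlinarith [e1, e2, e3, e4]
    have hQclaim : ∀ T : ℕ, N ≤ T → ∃ k, N ≤ k ∧ k ≤ T ∧
        Q T ω ≤ (if k = N then Q N ω else Dmax) + (W T - W k) := by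
      intro T hT
      induction T, hT using Nat.le_induction with
      | base => exact ⟨N, le_rfl, le_rfl, by simp⟩
      | succ T hT ih =>
        obtain ⟨k, hk1, hk2, hk3⟩ := ih
        have hT1 : 1 ≤ T := le_trans hN1 hT
        have hrec := hQrec T
        rw [hδ T hT1 ω] at hrec
        have hub' := hub (T+1) (by omega)
        have hE01 : E (T+1) ω ≤ 1 := by
          rcases hEval (T+1) ω with h|h <;> rw [h] <;> norm_num
        rcases le_or_gt (Q T ω) (D - ε) with hcase | hcase
        · refine ⟨T+1, by omega, le_rfl, ?_⟩
          rw [if_neg (by omega : ¬ T+1 = N)]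
          rw [min_eq_right hcase] at hrec
          have hq1 : Q (T+1) ω = u (T+1) := by linarith
          have hq2 : Dmax * E (T+1) ω ≤ Dmax := by
            have := mul_le_mul_of_nonneg_left hE01 hDmax.le
            linarith
          rw [hq1, sub_self, add_zero]
          linarith [hub'.2]
        · refine ⟨k, hk1, by omega, ?_⟩
          rw [min_eq_left (le_of_lt hcase)] at hrec
          have hstep := hWstep T
          have hq3 : Q (T+1) ω ≤ Q T ω + (W (T+1) - W T) := by
            rw [hstep]; linarith [hub'.2]
          linarith
    set K : ℝ := max (Q N ω) Dmax + Lam / η with hK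
    obtain ⟨N₂, hN₂⟩ := exists_nat_gt (K / (θ/2))
    filter_upwards [eventually_ge_atTop N, eventually_ge_atTop N₂,
      eventually_ge_atTop 1] with T hTN hTN₂ hT1
    obtain ⟨k, hk1, hk2, hk3⟩ := hQclaim T hTN
    have hQb : Q T ω ≤ max (Q N ω) Dmax + 2 * Dmax * δ' * T := by
      have h1 := hWdiff k T hk1 hk2
      have h2 : (if k = N then Q N ω else Dmax) ≤ max (Q N ω) Dmax := by
        split
        · exact le_max_left _ _
        · exact le_max_right _ _
      linarith
    have hTpos : (0:ℝ) < T := by exact_mod_cast hT1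
    have hKb : K ≤ (θ/2) * T := by
      have h1 : K / (θ/2) < (N₂:ℝ) := hN₂
      have h2 : (N₂:ℝ) ≤ T := by exact_mod_cast hTN₂
      have h3 : (0:ℝ) < θ/2 := by linarith
      rw [div_lt_iff₀ h3] at h1
      have h4 : (N₂:ℝ) * (θ/2) ≤ (T:ℝ) * (θ/2) := mul_le_mul_of_nonneg_right h2 h3.le
      linarith
    have h2δ : 2 * Dmax * δ' = θ/2 := by
      rw [hδ']
      field_simp
      ring
    have hsum' := hsumb T hT1
    have htotal : ∑ t ∈ Finset.Icc 1 T, d (X t ω) (Xhat t ω) ≤ ((D:ℝ) + θ) * T := by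
      have h5 : 2 * Dmax * δ' * (T:ℝ) = (θ/2) * T := by rw [h2δ]
      have h6 : K = max (Q N ω) Dmax + Lam / η := hK
      linarith [hsum', hQb, hKb, h5]
    simp only [hf]
    rw [one_div]
    calc (T:ℝ)⁻¹ * ∑ t ∈ Finset.Icc 1 T, d (X t ω) (Xhat t ω)
        ≤ (T:ℝ)⁻¹ * (((D:ℝ) + θ) * T) :=
          mul_le_mul_of_nonneg_left htotal (by positivity)
      _ = D + θ := by field_simp
  have hcob : IsCoboundedUnder (· ≤ ·) atTop f :=
    isCoboundedUnder_le_of_le atTop hf0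
  refine le_of_forall_pos_le_add fun θ hθ => ?_
  exact limsup_le_of_le hcob (hfinal θ hθ)
end
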